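/- arXiv:2103.04907 — 7 statements merged into one kernel-verified Lean document; each statement's English description precedes it below -/
import Mathlib

section
/- Under randomization and ignorable trial participation, the population average treatment effect is identified by inverse probability of sampling weighting: E[S X Y / (w(Z) e)] - E[S (1-X) Y / (w(Z) (1-e))] = E[Y^1 - Y^0], where w(Z) = P(S=1|Z) and e = P(X=1|S=1). -/
open MeasureTheory Filter Topology

noncomputable def trunc (n : ℕ) (x : ℝ) : ℝ := max (-(n : ℝ)) (min (n : ℝ) x)

lemma trunc_abs_le (n : ℕ) (x : ℝ) : |trunc n x| ≤ |x| := by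
  rw [abs_le]
  constructor
  · exact le_max_of_le_right
      (le_min ((neg_nonpos.mpr (abs_nonneg x)).trans (Nat.cast_nonneg n)) (neg_abs_le x))
  · exact max_le ((neg_nonpos.mpr (Nat.cast_nonneg n)).trans (abs_nonneg x))
      ((min_le_right _ _).trans (le_abs_self x))

lemma trunc_abs_le_n (n : ℕ) (x : ℝ) : |trunc n x| ≤ (n : ℝ) := by
  rw [abs_le]
  refine ⟨le_max_left _ _, max_le ?_ (min_le_left _ _)⟩
  exact (neg_nonpos.mpr (Nat.cast_nonneg n)).trans (Nat.cast_nonneg n)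

lemma trunc_continuous (n : ℕ) : Continuous (trunc n) :=
  continuous_const.max (continuous_const.min continuous_id)

lemma trunc_tendsto (x : ℝ) : Tendsto (fun n : ℕ => trunc n x) atTop (𝓝 x) := by
  refine Tendsto.congr' ?_ tendsto_const_nhds
  filter_upwards [eventually_ge_atTop ⌈|x|⌉₊] with n hn
  have hx : |x| ≤ (n : ℝ) := le_trans (Nat.le_ceil _) (Nat.cast_le.mpr hn)
  have h1 : min (n : ℝ) x = x := min_eq_right ((le_abs_self x).trans hx)
  have h2 : -(n : ℝ) ≤ x := by
    have := neg_abs_le x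
    linarith
  simp [trunc, h1, max_eq_right h2]

lemma ipsw_lim {Ω : Type*} [MeasurableSpace Ω] (μ : Measure Ω) [IsProbabilityMeasure μ]
    (S A V wZ : Ω → ℝ) (c : ℝ)
    (hS : Measurable S) (hA : Measurable A) (hV : Measurable V) (hwZ : Measurable wZ)
    (hSA : ∀ ω, S ω * A ω = 0 ∨ S ω * A ω = 1)
    (hwpos : ∀ᵐ ω ∂μ, 0 < wZ ω)
    (hdom : Integrable (fun ω => S ω * A ω * V ω / wZ ω) μ)
    (hVint : Integrable V μ)
    (hEq : ∀ n : ℕ, (∫ ω, S ω * A ω * trunc n (V ω / wZ ω) ∂μ)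
        = c * ∫ ω, wZ ω * trunc n (V ω / wZ ω) ∂μ) :
    (∫ ω, S ω * A ω * V ω / wZ ω ∂μ) = c * ∫ ω, V ω ∂μ := by
  have hmt : ∀ n : ℕ, Measurable fun ω => trunc n (V ω / wZ ω) :=
    fun n => (trunc_continuous n).measurable.comp (hV.div hwZ)
  have L1 : Tendsto (fun n : ℕ => ∫ ω, S ω * A ω * trunc n (V ω / wZ ω) ∂μ) atTop
      (𝓝 (∫ ω, S ω * A ω * V ω / wZ ω ∂μ)) := by
    refine tendsto_integral_of_dominated_convergence
      (fun ω => |S ω * A ω * V ω / wZ ω|)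
      (fun n => ((hS.mul hA).mul (hmt n)).aestronglyMeasurable)
      hdom.abs ?_ ?_
    · intro n
      refine Filter.Eventually.of_forall fun ω => ?_
      rcases hSA ω with h | h
      · rw [h]; simp
      · simp only [h, one_mul]
        simpa [Real.norm_eq_abs] using trunc_abs_le n (V ω / wZ ω)
    · refine Filter.Eventually.of_forall fun ω => ?_
      have := (trunc_tendsto (V ω / wZ ω)).const_mul (S ω * A ω)
      rw [mul_div_assoc]
      exact this
  have L2 : Tendsto (fun n : ℕ => ∫ ω, wZ ω * trunc n (V ω / wZ ω) ∂μ) atTop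
      (𝓝 (∫ ω, V ω ∂μ)) := by
    refine tendsto_integral_of_dominated_convergence
      (fun ω => |V ω|)
      (fun n => (hwZ.mul (hmt n)).aestronglyMeasurable)
      hVint.abs ?_ ?_
    · intro n
      filter_upwards [hwpos] with ω hw
      calc ‖wZ ω * trunc n (V ω / wZ ω)‖
          = |wZ ω| * |trunc n (V ω / wZ ω)| := by rw [Real.norm_eq_abs, abs_mul]
        _ ≤ |wZ ω| * |V ω / wZ ω| :=
            mul_le_mul_of_nonneg_left (trunc_abs_le n _) (abs_nonneg _)
        _ = |V ω| := by rw [abs_div, mul_div_cancel₀ _ (abs_ne_zero.mpr hw.ne')]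
    · filter_upwards [hwpos] with ω hw
      have h := (trunc_tendsto (V ω / wZ ω)).const_mul (wZ ω)
      have : wZ ω * (V ω / wZ ω) = V ω := by field_simp
      rwa [this] at h
  have L2' := (L2.const_mul c).congr (fun n => (hEq n).symm)
  exact tendsto_nhds_unique L1 L2'


/-- **IPSW identification of the PATE.** Under randomization in the trial
(`hrand`: `X ⫫ (Z, Y⁰, Y¹) | S = 1` with `P(X=1|S=1) = e`) and ignorable trial
participation (`hign`: `P(S=1 | Z, Y⁰, Y¹) = w(Z)`), the inverse probability of
sampling weighting functional identifies `E[Y¹ - Y⁰]`. -/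
theorem ipsw_identification
    {Ω : Type*} [MeasurableSpace Ω] (μ : Measure Ω) [IsProbabilityMeasure μ]
    {α : Type*} [MeasurableSpace α]
    (Z : Ω → α) (S X Y0 Y1 Y : Ω → ℝ) (w : α → ℝ) (e : ℝ)
    (hZ : Measurable Z) (hS : Measurable S) (hX : Measurable X)
    (hY0 : Measurable Y0) (hY1 : Measurable Y1) (hw : Measurable w)
    (hSbin : ∀ ω, S ω = 0 ∨ S ω = 1)
    (hXbin : ∀ ω, X ω = 0 ∨ X ω = 1)
    (he0 : 0 < e) (he1 : e < 1)
    (hwpos : ∀ᵐ ω ∂μ, 0 < w (Z ω))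
    -- randomization: X ⫫ (Z, Y⁰, Y¹) | S = 1 with P(X=1|S=1) = e
    (hrand : ∀ f : α × ℝ × ℝ → ℝ, Measurable f →
      Integrable (fun ω => S ω * f (Z ω, Y0 ω, Y1 ω)) μ →
      ∫ ω, S ω * X ω * f (Z ω, Y0 ω, Y1 ω) ∂μ
        = e * ∫ ω, S ω * f (Z ω, Y0 ω, Y1 ω) ∂μ)
    -- ignorable trial participation: P(S=1 | Z, Y⁰, Y¹) = w(Z)
    (hign : ∀ f : α × ℝ × ℝ → ℝ, Measurable f →
      Integrable (fun ω => f (Z ω, Y0 ω, Y1 ω)) μ →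
      ∫ ω, S ω * f (Z ω, Y0 ω, Y1 ω) ∂μ
        = ∫ ω, w (Z ω) * f (Z ω, Y0 ω, Y1 ω) ∂μ)
    (hY : ∀ ω, Y ω = X ω * Y1 ω + (1 - X ω) * Y0 ω)
    (hint1 : Integrable (fun ω => S ω * X ω * Y ω / (w (Z ω) * e)) μ)
    (hint0 : Integrable (fun ω => S ω * (1 - X ω) * Y ω / (w (Z ω) * (1 - e))) μ)
    (hintY1 : Integrable Y1 μ) (hintY0 : Integrable Y0 μ) :
    (∫ ω, S ω * X ω * Y ω / (w (Z ω) * e) ∂μ)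
      - ∫ ω, S ω * (1 - X ω) * Y ω / (w (Z ω) * (1 - e)) ∂μ
      = ∫ ω, (Y1 ω - Y0 ω) ∂μ := by
  have he1' : (0:ℝ) < 1 - e := by linarith
  have hSabs : ∀ ω, |S ω| ≤ 1 := by
    intro ω; rcases hSbin ω with h | h <;> simp [h]
  have hmeasZYY : Measurable fun ω => (Z ω, Y0 ω, Y1 ω) :=
    hZ.prodMk (hY0.prodMk hY1)
  -- truncated test functions
  set f1 : ℕ → α × ℝ × ℝ → ℝ := fun n p => trunc n (p.2.2 / w p.1) with hf1
  set f0 : ℕ → α × ℝ × ℝ → ℝ := fun n p => trunc n (p.2.1 / w p.1) with hf0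
  have hf1m : ∀ n, Measurable (f1 n) := fun n =>
    (trunc_continuous n).measurable.comp
      ((measurable_snd.snd).div (hw.comp measurable_fst))
  have hf0m : ∀ n, Measurable (f0 n) := fun n =>
    (trunc_continuous n).measurable.comp
      ((measurable_snd.fst).div (hw.comp measurable_fst))
  -- integrability of bounded functions
  have hbnd : ∀ (g : Ω → ℝ), Measurable g → (∀ ω, |g ω| ≤ 1) →
      ∀ (n : ℕ) (F : α × ℝ × ℝ → ℝ), Measurable F → (∀ p, |F p| ≤ (n:ℝ)) →
      Integrable (fun ω => g ω * F (Z ω, Y0 ω, Y1 ω)) μ := by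
    intro g hg hg1 n F hF hFn
    refine Integrable.mono' (integrable_const (n:ℝ))
      ((hg.mul (hF.comp hmeasZYY)).aestronglyMeasurable)
      (Filter.Eventually.of_forall fun ω => ?_)
    rw [Real.norm_eq_abs, abs_mul]
    calc |g ω| * |F (Z ω, Y0 ω, Y1 ω)| ≤ 1 * (n:ℝ) :=
          mul_le_mul (hg1 ω) (hFn _) (abs_nonneg _) zero_le_one
      _ = (n:ℝ) := one_mul _
  have hf1bound : ∀ (n : ℕ) (p : α × ℝ × ℝ), |f1 n p| ≤ (n:ℝ) := fun n p => trunc_abs_le_n n _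
  have hf0bound : ∀ (n : ℕ) (p : α × ℝ × ℝ), |f0 n p| ≤ (n:ℝ) := fun n p => trunc_abs_le_n n _
  have hSf1 : ∀ n, Integrable (fun ω => S ω * f1 n (Z ω, Y0 ω, Y1 ω)) μ :=
    fun n => hbnd S hS hSabs n (f1 n) (hf1m n) (hf1bound n)
  have hSf0 : ∀ n, Integrable (fun ω => S ω * f0 n (Z ω, Y0 ω, Y1 ω)) μ :=
    fun n => hbnd S hS hSabs n (f0 n) (hf0m n) (hf0bound n)
  have hf1int : ∀ n, Integrable (fun ω => f1 n (Z ω, Y0 ω, Y1 ω)) μ := by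
    intro n
    simpa using hbnd (fun _ => 1) measurable_const (by intro ω; simp) n (f1 n) (hf1m n) (hf1bound n)
  have hf0int : ∀ n, Integrable (fun ω => f0 n (Z ω, Y0 ω, Y1 ω)) μ := by
    intro n
    simpa using hbnd (fun _ => 1) measurable_const (by intro ω; simp) n (f0 n) (hf0m n) (hf0bound n)
  have hSXf0 : ∀ n, Integrable (fun ω => S ω * X ω * f0 n (Z ω, Y0 ω, Y1 ω)) μ := by
    intro n
    have hSX1 : ∀ ω, |S ω * X ω| ≤ 1 := by
      intro ω; rcases hSbin ω with h | h <;> rcases hXbin ω with h' | h' <;> simp [h, h']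
    exact hbnd (fun ω => S ω * X ω) (hS.mul hX) hSX1 n (f0 n) (hf0m n) (hf0bound n)
  -- per-n identities
  have hEq1 : ∀ n : ℕ, (∫ ω, S ω * X ω * trunc n (Y1 ω / w (Z ω)) ∂μ)
      = e * ∫ ω, w (Z ω) * trunc n (Y1 ω / w (Z ω)) ∂μ := by
    intro n
    have hA := hrand (f1 n) (hf1m n) (hSf1 n)
    have hB := hign (f1 n) (hf1m n) (hf1int n)
    rw [hB] at hA
    exact hA
  have hEq0 : ∀ n : ℕ, (∫ ω, S ω * (1 - X ω) * trunc n (Y0 ω / w (Z ω)) ∂μ)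
      = (1 - e) * ∫ ω, w (Z ω) * trunc n (Y0 ω / w (Z ω)) ∂μ := by
    intro n
    have hA := hrand (f0 n) (hf0m n) (hSf0 n)
    have hB := hign (f0 n) (hf0m n) (hf0int n)
    have hsplit : (∫ ω, S ω * (1 - X ω) * f0 n (Z ω, Y0 ω, Y1 ω) ∂μ)
        = (∫ ω, S ω * f0 n (Z ω, Y0 ω, Y1 ω) ∂μ)
          - ∫ ω, S ω * X ω * f0 n (Z ω, Y0 ω, Y1 ω) ∂μ := by
      rw [← integral_sub (hSf0 n) (hSXf0 n)]
      exact integral_congr_ae (Filter.Eventually.of_forall fun ω => by ring)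
    calc (∫ ω, S ω * (1 - X ω) * trunc n (Y0 ω / w (Z ω)) ∂μ)
        = (∫ ω, S ω * f0 n (Z ω, Y0 ω, Y1 ω) ∂μ)
          - ∫ ω, S ω * X ω * f0 n (Z ω, Y0 ω, Y1 ω) ∂μ := hsplit
      _ = (∫ ω, S ω * f0 n (Z ω, Y0 ω, Y1 ω) ∂μ)
          - e * ∫ ω, S ω * f0 n (Z ω, Y0 ω, Y1 ω) ∂μ := by rw [hA]
      _ = (1 - e) * ∫ ω, S ω * f0 n (Z ω, Y0 ω, Y1 ω) ∂μ := by ring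
      _ = (1 - e) * ∫ ω, w (Z ω) * trunc n (Y0 ω / w (Z ω)) ∂μ := by rw [hB]
  -- pointwise rewrites of the IPSW integrands
  have hpt1 : ∀ ω, S ω * X ω * Y ω / (w (Z ω) * e)
      = S ω * X ω * Y1 ω / w (Z ω) * e⁻¹ := by
    intro ω
    have hnum : S ω * X ω * Y ω = S ω * X ω * Y1 ω := by
      rcases hXbin ω with h | h <;> rw [hY ω, h] <;> ring
    rw [hnum, ← div_div, div_eq_mul_inv]
  have hpt0 : ∀ ω, S ω * (1 - X ω) * Y ω / (w (Z ω) * (1 - e))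
      = S ω * (1 - X ω) * Y0 ω / w (Z ω) * (1 - e)⁻¹ := by
    intro ω
    have hnum : S ω * (1 - X ω) * Y ω = S ω * (1 - X ω) * Y0 ω := by
      rcases hXbin ω with h | h <;> rw [hY ω, h] <;> ring
    rw [hnum, ← div_div, div_eq_mul_inv]
  -- dominating integrability
  have hdom1 : Integrable (fun ω => S ω * X ω * Y1 ω / w (Z ω)) μ := by
    have h1 : Integrable (fun ω => S ω * X ω * Y1 ω / w (Z ω) * e⁻¹) μ :=
      hint1.congr (Filter.Eventually.of_forall hpt1)
    have h2 := h1.mul_const e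
    refine h2.congr (Filter.Eventually.of_forall fun ω => ?_)
    show S ω * X ω * Y1 ω / w (Z ω) * e⁻¹ * e = S ω * X ω * Y1 ω / w (Z ω)
    rw [mul_assoc, inv_mul_cancel₀ he0.ne', mul_one]
  have hdom0 : Integrable (fun ω => S ω * (1 - X ω) * Y0 ω / w (Z ω)) μ := by
    have h1 : Integrable (fun ω => S ω * (1 - X ω) * Y0 ω / w (Z ω) * (1 - e)⁻¹) μ :=
      hint0.congr (Filter.Eventually.of_forall hpt0)
    have h2 := h1.mul_const (1 - e)
    refine h2.congr (Filter.Eventually.of_forall fun ω => ?_)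
    show S ω * (1 - X ω) * Y0 ω / w (Z ω) * (1 - e)⁻¹ * (1 - e) = S ω * (1 - X ω) * Y0 ω / w (Z ω)
    rw [mul_assoc, inv_mul_cancel₀ he1'.ne', mul_one]
  -- main identifications via dominated convergence
  have R1 : (∫ ω, S ω * X ω * Y1 ω / w (Z ω) ∂μ) = e * ∫ ω, Y1 ω ∂μ := by
    refine ipsw_lim μ S X Y1 (fun ω => w (Z ω)) e hS hX hY1 (hw.comp hZ) ?_ hwpos hdom1 hintY1 hEq1
    intro ω
    rcases hSbin ω with h | h <;> rcases hXbin ω with h' | h' <;> simp [h, h']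
  have R0 : (∫ ω, S ω * (1 - X ω) * Y0 ω / w (Z ω) ∂μ) = (1 - e) * ∫ ω, Y0 ω ∂μ := by
    refine ipsw_lim μ S (fun ω => 1 - X ω) Y0 (fun ω => w (Z ω)) (1 - e) hS
      (measurable_const.sub hX) hY0 (hw.comp hZ) ?_ hwpos hdom0 hintY0 hEq0
    intro ω
    rcases hSbin ω with h | h <;> rcases hXbin ω with h' | h' <;> simp [h, h']
  have T1 : (∫ ω, S ω * X ω * Y ω / (w (Z ω) * e) ∂μ) = ∫ ω, Y1 ω ∂μ := by
    rw [integral_congr_ae (Filter.Eventually.of_forall hpt1), integral_mul_const, R1]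
    field_simp
  have T0 : (∫ ω, S ω * (1 - X ω) * Y ω / (w (Z ω) * (1 - e)) ∂μ) = ∫ ω, Y0 ω ∂μ := by
    rw [integral_congr_ae (Filter.Eventually.of_forall hpt0), integral_mul_const, R0]
    field_simp
  rw [T1, T0, ← integral_sub hintY1 hintY0]
end

section
/- Under the identification assumptions, the expectation of the augmented (doubly robust) estimating function equals the population average treatment effect when the sampling score model is correct, regardless of whether the outcome models m_1, m_0 are correct: E[ S X (Y - m_1(Z)) / (w(Z) e) - S (1-X)(Y - m_0(Z)) / (w(Z)(1-e)) + (m_1(Z) - m_0(Z)) ] = E[Y^1 - Y^0] for any measurable bounded functions m_1, m_0. -/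
open MeasureTheory Filter

lemma trunc_tendsto_s1 (a : ℝ) :
    Tendsto (fun n : ℕ => max (min a n) (-(n:ℝ))) atTop (nhds a) := by
  refine tendsto_const_nhds.congr' ?_
  filter_upwards [eventually_ge_atTop ⌈|a|⌉₊] with n hn
  have h : |a| ≤ (n:ℝ) := le_trans (Nat.le_ceil _) (by exact_mod_cast Nat.cast_le.2 hn)
  rw [min_eq_left (le_trans (le_abs_self a) h),
    max_eq_left (by linarith [neg_abs_le a])]

lemma trunc_abs_le_s1 (a : ℝ) (n : ℕ) : |max (min a n) (-(n:ℝ))| ≤ |a| := by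
  rw [abs_le]
  constructor
  · exact le_trans (le_min (neg_abs_le a) (le_trans (neg_nonpos_of_nonneg (abs_nonneg a)) (Nat.cast_nonneg n))) (le_max_left _ _)
  · exact max_le (le_trans (min_le_left _ _) (le_abs_self a))
      (le_trans (neg_nonpos_of_nonneg (Nat.cast_nonneg n)) (abs_nonneg a))

lemma dr_key
    {Ω : Type*} [MeasurableSpace Ω] (μ : Measure Ω) [IsProbabilityMeasure μ]
    {α : Type*} [MeasurableSpace α]
    (Z : Ω → α) (S v Y0 Y1 : Ω → ℝ) (w : α → ℝ) (c : ℝ)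
    (hZ : Measurable Z) (hS : Measurable S) (hv : Measurable v)
    (hY0 : Measurable Y0) (hY1 : Measurable Y1) (hw : Measurable w)
    (hSbin : ∀ ω, S ω = 0 ∨ S ω = 1)
    (hv0 : ∀ ω, 0 ≤ v ω) (hv1 : ∀ ω, v ω ≤ 1)
    (hwpos : ∀ᵐ ω ∂μ, 0 < w (Z ω))
    (hrel : ∀ f : α × ℝ × ℝ → ℝ, Measurable f →
      Integrable (fun ω => S ω * f (Z ω, Y0 ω, Y1 ω)) μ →
      ∫ ω, S ω * v ω * f (Z ω, Y0 ω, Y1 ω) ∂μ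
        = c * ∫ ω, S ω * f (Z ω, Y0 ω, Y1 ω) ∂μ)
    (hign : ∀ f : α × ℝ × ℝ → ℝ, Measurable f →
      Integrable (fun ω => f (Z ω, Y0 ω, Y1 ω)) μ →
      ∫ ω, S ω * f (Z ω, Y0 ω, Y1 ω) ∂μ
        = ∫ ω, w (Z ω) * f (Z ω, Y0 ω, Y1 ω) ∂μ)
    (h : α × ℝ × ℝ → ℝ) (hmh : Measurable h)
    (hinth : Integrable (fun ω => h (Z ω, Y0 ω, Y1 ω)) μ)
    (hintS : Integrable (fun ω => S ω * v ω * h (Z ω, Y0 ω, Y1 ω) / w (Z ω)) μ) :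
    ∫ ω, S ω * v ω * h (Z ω, Y0 ω, Y1 ω) / w (Z ω) ∂μ
      = c * ∫ ω, h (Z ω, Y0 ω, Y1 ω) ∂μ := by
  have hS0 : ∀ ω, 0 ≤ S ω := fun ω => by rcases hSbin ω with h'|h' <;> simp [h']
  have hS1 : ∀ ω, S ω ≤ 1 := fun ω => by rcases hSbin ω with h'|h' <;> simp [h']
  set f : α × ℝ × ℝ → ℝ := fun p => h p / w p.1 with hf_def
  have hmf : Measurable f := hmh.div (hw.comp measurable_fst)
  set F : ℕ → α × ℝ × ℝ → ℝ := fun n p => max (min (f p) n) (-(n:ℝ)) with hF_def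
  have hmF : ∀ n, Measurable (F n) := fun n => (hmf.min measurable_const).max measurable_const
  have hFle : ∀ n p, |F n p| ≤ (n:ℝ) := by
    intro n p
    rw [abs_le]
    exact ⟨le_max_right _ _, max_le (min_le_right _ _) (le_trans (neg_nonpos_of_nonneg (Nat.cast_nonneg n)) (Nat.cast_nonneg n))⟩
  -- integrability of the truncated functions
  have hintF : ∀ n, Integrable (fun ω => F n (Z ω, Y0 ω, Y1 ω)) μ := by
    intro n
    refine Integrable.mono' (integrable_const (n:ℝ))
      ((hmF n).comp (hZ.prodMk (hY0.prodMk hY1))).aestronglyMeasurable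
      (Filter.Eventually.of_forall fun ω => ?_)
    simpa using hFle n _
  have hintSF : ∀ n, Integrable (fun ω => S ω * F n (Z ω, Y0 ω, Y1 ω)) μ := by
    intro n
    refine Integrable.mono' (integrable_const (n:ℝ))
      (hS.mul ((hmF n).comp (hZ.prodMk (hY0.prodMk hY1)))).aestronglyMeasurable
      (Filter.Eventually.of_forall fun ω => ?_)
    have := hFle n (Z ω, Y0 ω, Y1 ω)
    have h1 := hS0 ω; have h2 := hS1 ω
    rw [Real.norm_eq_abs, abs_mul, abs_of_nonneg h1]
    nlinarith [abs_nonneg (F n (Z ω, Y0 ω, Y1 ω))]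
  -- the chain of equalities for each n
  have hchain : ∀ n, ∫ ω, S ω * v ω * F n (Z ω, Y0 ω, Y1 ω) ∂μ
      = c * ∫ ω, w (Z ω) * F n (Z ω, Y0 ω, Y1 ω) ∂μ := by
    intro n
    rw [hrel (F n) (hmF n) (hintSF n), hign (F n) (hmF n) (hintF n)]
  -- limit of RHS : → c * ∫ h
  have hlim1 : Tendsto (fun n => ∫ ω, w (Z ω) * F n (Z ω, Y0 ω, Y1 ω) ∂μ) atTop
      (nhds (∫ ω, h (Z ω, Y0 ω, Y1 ω) ∂μ)) := by
    refine tendsto_integral_of_dominated_convergence (fun ω => |h (Z ω, Y0 ω, Y1 ω)|)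
      (fun n => ((hw.comp hZ).mul ((hmF n).comp (hZ.prodMk (hY0.prodMk hY1)))).aestronglyMeasurable)
      hinth.norm ?_ ?_
    · intro n
      filter_upwards [hwpos] with ω hwω
      rw [Real.norm_eq_abs, abs_mul, abs_of_pos hwω]
      calc w (Z ω) * |F n (Z ω, Y0 ω, Y1 ω)| ≤ w (Z ω) * |f (Z ω, Y0 ω, Y1 ω)| := by
            exact mul_le_mul_of_nonneg_left (trunc_abs_le_s1 _ _) hwω.le
        _ = |h (Z ω, Y0 ω, Y1 ω)| := by
            simp only [hf_def, abs_div, abs_of_pos hwω]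
            field_simp
    · filter_upwards [hwpos] with ω hwω
      have : Tendsto (fun n : ℕ => F n (Z ω, Y0 ω, Y1 ω)) atTop (nhds (f (Z ω, Y0 ω, Y1 ω))) :=
        trunc_tendsto_s1 _
      have := this.const_mul (w (Z ω))
      convert this using 2
      simp only [hf_def]
      field_simp
  -- limit of LHS : → ∫ S v h / w
  have hlim2 : Tendsto (fun n => ∫ ω, S ω * v ω * F n (Z ω, Y0 ω, Y1 ω) ∂μ) atTop
      (nhds (∫ ω, S ω * v ω * h (Z ω, Y0 ω, Y1 ω) / w (Z ω) ∂μ)) := by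
    refine tendsto_integral_of_dominated_convergence
      (fun ω => |S ω * v ω * h (Z ω, Y0 ω, Y1 ω) / w (Z ω)|)
      (fun n => ((hS.mul hv).mul ((hmF n).comp (hZ.prodMk (hY0.prodMk hY1)))).aestronglyMeasurable)
      hintS.norm ?_ ?_
    · intro n
      filter_upwards [hwpos] with ω hwω
      rw [Real.norm_eq_abs, abs_mul, abs_mul]
      rw [abs_div, abs_mul, abs_mul, abs_of_pos hwω]
      have h1 := hS0 ω; have h2 := hv0 ω
      rw [abs_of_nonneg h1, abs_of_nonneg h2]
      have hb : |F n (Z ω, Y0 ω, Y1 ω)| ≤ |h (Z ω, Y0 ω, Y1 ω)| / w (Z ω) := by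
        have := trunc_abs_le_s1 (f (Z ω, Y0 ω, Y1 ω)) n
        simpa [hf_def, abs_div, abs_of_pos hwω] using this
      calc S ω * v ω * |F n (Z ω, Y0 ω, Y1 ω)|
          ≤ S ω * v ω * (|h (Z ω, Y0 ω, Y1 ω)| / w (Z ω)) :=
            mul_le_mul_of_nonneg_left hb (mul_nonneg h1 h2)
        _ = S ω * v ω * |h (Z ω, Y0 ω, Y1 ω)| / w (Z ω) := by ring
    · filter_upwards [hwpos] with ω hwω
      have : Tendsto (fun n : ℕ => F n (Z ω, Y0 ω, Y1 ω)) atTop (nhds (f (Z ω, Y0 ω, Y1 ω))) :=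
        trunc_tendsto_s1 _
      have := this.const_mul (S ω * v ω)
      convert this using 2
      simp only [hf_def]
      ring
  have := tendsto_nhds_unique hlim2 ((hlim1.const_mul c).congr (fun n => (hchain n).symm))
  exact this

/-- **Double robustness, correct sampling score.** Under the identification
assumptions, the expectation of the augmented (doubly robust) estimating
function equals the PATE when the sampling score `w` is the true one,
for arbitrary bounded measurable working outcome models `m₁, m₀`. -/
theorem dr_correct_sampling_score
    {Ω : Type*} [MeasurableSpace Ω] (μ : Measure Ω) [IsProbabilityMeasure μ]
    {α : Type*} [MeasurableSpace α]
    (Z : Ω → α) (S X Y0 Y1 Y : Ω → ℝ) (w : α → ℝ) (e : ℝ)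
    (hZ : Measurable Z) (hS : Measurable S) (hX : Measurable X)
    (hY0 : Measurable Y0) (hY1 : Measurable Y1) (hw : Measurable w)
    (hSbin : ∀ ω, S ω = 0 ∨ S ω = 1)
    (hXbin : ∀ ω, X ω = 0 ∨ X ω = 1)
    (he0 : 0 < e) (he1 : e < 1)
    (hwpos : ∀ᵐ ω ∂μ, 0 < w (Z ω))
    -- randomization: X ⫫ (Z, Y⁰, Y¹) | S = 1 with P(X=1|S=1) = e
    (hrand : ∀ f : α × ℝ × ℝ → ℝ, Measurable f →
      Integrable (fun ω => S ω * f (Z ω, Y0 ω, Y1 ω)) μ →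
      ∫ ω, S ω * X ω * f (Z ω, Y0 ω, Y1 ω) ∂μ
        = e * ∫ ω, S ω * f (Z ω, Y0 ω, Y1 ω) ∂μ)
    -- ignorable trial participation with true sampling score w:
    (hign : ∀ f : α × ℝ × ℝ → ℝ, Measurable f →
      Integrable (fun ω => f (Z ω, Y0 ω, Y1 ω)) μ →
      ∫ ω, S ω * f (Z ω, Y0 ω, Y1 ω) ∂μ
        = ∫ ω, w (Z ω) * f (Z ω, Y0 ω, Y1 ω) ∂μ)
    (hY : ∀ ω, Y ω = X ω * Y1 ω + (1 - X ω) * Y0 ω)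
    (hintY1 : Integrable Y1 μ) (hintY0 : Integrable Y0 μ)
    (hint1 : Integrable (fun ω => S ω * X ω * Y ω / (w (Z ω) * e)) μ)
    (hint0 : Integrable (fun ω => S ω * (1 - X ω) * Y ω / (w (Z ω) * (1 - e))) μ)
    (hintw : Integrable (fun ω => S ω / w (Z ω)) μ) :
    ∀ m1 m0 : α → ℝ, Measurable m1 → Measurable m0 →
      (∃ C1, ∀ z, |m1 z| ≤ C1) → (∃ C0, ∀ z, |m0 z| ≤ C0) →
      ∫ ω, (S ω * X ω * (Y ω - m1 (Z ω)) / (w (Z ω) * e)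
            - S ω * (1 - X ω) * (Y ω - m0 (Z ω)) / (w (Z ω) * (1 - e))
            + (m1 (Z ω) - m0 (Z ω))) ∂μ
        = ∫ ω, (Y1 ω - Y0 ω) ∂μ := by
  rintro m1 m0 hm1 hm0 ⟨C1, hC1⟩ ⟨C0, hC0⟩
  have he : e ≠ 0 := he0.ne'
  have he1' : (1 : ℝ) - e ≠ 0 := by linarith
  have hX0 : ∀ ω, 0 ≤ X ω := fun ω => by rcases hXbin ω with h|h <;> simp [h]
  have hX1 : ∀ ω, X ω ≤ 1 := fun ω => by rcases hXbin ω with h|h <;> simp [h]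
  have hS0 : ∀ ω, 0 ≤ S ω := fun ω => by rcases hSbin ω with h|h <;> simp [h]
  -- relation for v = 1 - X
  have hrel1X : ∀ f : α × ℝ × ℝ → ℝ, Measurable f →
      Integrable (fun ω => S ω * f (Z ω, Y0 ω, Y1 ω)) μ →
      ∫ ω, S ω * (1 - X ω) * f (Z ω, Y0 ω, Y1 ω) ∂μ
        = (1 - e) * ∫ ω, S ω * f (Z ω, Y0 ω, Y1 ω) ∂μ := by
    intro f hf hintSf
    have hintSXf : Integrable (fun ω => S ω * X ω * f (Z ω, Y0 ω, Y1 ω)) μ := by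
      refine hintSf.mono ((hS.mul hX).mul
        (hf.comp (hZ.prodMk (hY0.prodMk hY1)))).aestronglyMeasurable
        (Filter.Eventually.of_forall fun ω => ?_)
      have hXa : |X ω| ≤ 1 := abs_le.2 ⟨by linarith [hX0 ω], hX1 ω⟩
      simp only [Real.norm_eq_abs]
      calc |S ω * X ω * f (Z ω, Y0 ω, Y1 ω)|
          = |X ω| * |S ω * f (Z ω, Y0 ω, Y1 ω)| := by
            rw [abs_mul, abs_mul, abs_mul]; ring
        _ ≤ 1 * |S ω * f (Z ω, Y0 ω, Y1 ω)| :=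
            mul_le_mul_of_nonneg_right hXa (abs_nonneg _)
        _ = |S ω * f (Z ω, Y0 ω, Y1 ω)| := one_mul _
    calc ∫ ω, S ω * (1 - X ω) * f (Z ω, Y0 ω, Y1 ω) ∂μ
        = ∫ ω, (S ω * f (Z ω, Y0 ω, Y1 ω) - S ω * X ω * f (Z ω, Y0 ω, Y1 ω)) ∂μ :=
          integral_congr_ae (Filter.Eventually.of_forall fun ω => by ring)
      _ = (∫ ω, S ω * f (Z ω, Y0 ω, Y1 ω) ∂μ) - ∫ ω, S ω * X ω * f (Z ω, Y0 ω, Y1 ω) ∂μ :=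
          integral_sub hintSf hintSXf
      _ = (1 - e) * ∫ ω, S ω * f (Z ω, Y0 ω, Y1 ω) ∂μ := by
          rw [hrand f hf hintSf]; ring
  -- pointwise identities
  have hpt1 : ∀ ω, S ω * X ω * Y1 ω / w (Z ω) = e * (S ω * X ω * Y ω / (w (Z ω) * e)) := by
    intro ω
    rcases hXbin ω with hx|hx
    · simp [hx]
    · by_cases hw0 : w (Z ω) = 0
      · simp [hw0]
      · simp only [hY ω, hx]; field_simp; ring
  have hpt0 : ∀ ω, S ω * (1 - X ω) * Y0 ω / w (Z ω)
      = (1 - e) * (S ω * (1 - X ω) * Y ω / (w (Z ω) * (1 - e))) := by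
    intro ω
    rcases hXbin ω with hx|hx
    · by_cases hw0 : w (Z ω) = 0
      · simp [hw0]
      · simp only [hY ω, hx]; field_simp; ring
    · simp [hx]
  -- treated outcome term
  have hA1 : ∫ ω, S ω * X ω * Y ω / (w (Z ω) * e) ∂μ = ∫ ω, Y1 ω ∂μ := by
    have hintS : Integrable (fun ω => S ω * X ω * Y1 ω / w (Z ω)) μ :=
      (hint1.const_mul e).congr (Filter.Eventually.of_forall fun ω => (hpt1 ω).symm)
    have hk := dr_key μ Z S X Y0 Y1 w e hZ hS hX hY0 hY1 hw hSbin hX0 hX1 hwpos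
      hrand hign (fun p => p.2.2) (measurable_snd.comp measurable_snd)
      (by simpa using hintY1) hintS
    have h2 : ∫ ω, S ω * X ω * Y1 ω / w (Z ω) ∂μ
        = e * ∫ ω, S ω * X ω * Y ω / (w (Z ω) * e) ∂μ := by
      rw [← integral_const_mul]
      exact integral_congr_ae (Filter.Eventually.of_forall hpt1)
    have := h2.symm.trans hk
    exact mul_left_cancel₀ he this
  -- control outcome term
  have hA0 : ∫ ω, S ω * (1 - X ω) * Y ω / (w (Z ω) * (1 - e)) ∂μ = ∫ ω, Y0 ω ∂μ := by
    have hintS : Integrable (fun ω => S ω * (1 - X ω) * Y0 ω / w (Z ω)) μ :=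
      (hint0.const_mul (1 - e)).congr (Filter.Eventually.of_forall fun ω => (hpt0 ω).symm)
    have hk := dr_key μ Z S (fun ω => 1 - X ω) Y0 Y1 w (1 - e) hZ hS
      (measurable_const.sub hX) hY0 hY1 hw hSbin
      (fun ω => by show (0:ℝ) ≤ 1 - X ω; linarith [hX1 ω]) (fun ω => by show (1:ℝ) - X ω ≤ 1; linarith [hX0 ω]) hwpos
      hrel1X hign (fun p => p.2.1) (measurable_fst.comp measurable_snd)
      (by simpa using hintY0) hintS
    have h2 : ∫ ω, S ω * (1 - X ω) * Y0 ω / w (Z ω) ∂μ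
        = (1 - e) * ∫ ω, S ω * (1 - X ω) * Y ω / (w (Z ω) * (1 - e)) ∂μ := by
      rw [← integral_const_mul]
      exact integral_congr_ae (Filter.Eventually.of_forall hpt0)
    have := h2.symm.trans hk
    exact mul_left_cancel₀ he1' this
  -- integrability of the working-model terms
  have hK1 : Integrable (fun ω => m1 (Z ω)) μ :=
    Integrable.mono' (integrable_const C1) (hm1.comp hZ).aestronglyMeasurable
      (Filter.Eventually.of_forall fun ω => by simpa using hC1 (Z ω))
  have hK0 : Integrable (fun ω => m0 (Z ω)) μ :=
    Integrable.mono' (integrable_const C0) (hm0.comp hZ).aestronglyMeasurable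
      (Filter.Eventually.of_forall fun ω => by simpa using hC0 (Z ω))
  have hL1 : Integrable (fun ω => S ω * X ω * m1 (Z ω) / w (Z ω)) μ := by
    refine Integrable.mono' (hintw.norm.const_mul |C1|)
      (((hS.mul hX).mul (hm1.comp hZ)).div (hw.comp hZ)).aestronglyMeasurable ?_
    filter_upwards [hwpos] with ω hwω
    rcases hSbin ω with hs|hs
    · simp [hs]
    · rcases hXbin ω with hx|hx
      · simp [hs, hx]; positivity
      · simp only [hs, hx, one_mul, mul_one, Real.norm_eq_abs, abs_div,
          abs_of_pos hwω]
        rw [abs_one, mul_one_div]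
        exact div_le_div₀ (abs_nonneg C1) (le_trans (hC1 _) (le_abs_self _)) hwω le_rfl
  have hL0 : Integrable (fun ω => S ω * (1 - X ω) * m0 (Z ω) / w (Z ω)) μ := by
    refine Integrable.mono' (hintw.norm.const_mul |C0|)
      (((hS.mul (measurable_const.sub hX)).mul (hm0.comp hZ)).div (hw.comp hZ)).aestronglyMeasurable ?_
    filter_upwards [hwpos] with ω hwω
    rcases hSbin ω with hs|hs
    · simp [hs]
    · rcases hXbin ω with hx|hx
      · simp only [hs, hx, one_mul, sub_zero, mul_one, Real.norm_eq_abs, abs_div,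
          abs_of_pos hwω]
        rw [abs_one, mul_one_div]
        exact div_le_div₀ (abs_nonneg C0) (le_trans (hC0 _) (le_abs_self _)) hwω le_rfl
      · simp [hs, hx]; positivity
  -- working-model augmentation terms
  have hB1 : ∫ ω, S ω * X ω * m1 (Z ω) / (w (Z ω) * e) ∂μ = ∫ ω, m1 (Z ω) ∂μ := by
    have hk := dr_key μ Z S X Y0 Y1 w e hZ hS hX hY0 hY1 hw hSbin hX0 hX1 hwpos
      hrand hign (fun p => m1 p.1) (hm1.comp measurable_fst) hK1 hL1
    calc ∫ ω, S ω * X ω * m1 (Z ω) / (w (Z ω) * e) ∂μ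
        = (∫ ω, S ω * X ω * m1 (Z ω) / w (Z ω) ∂μ) / e := by
          rw [← integral_div]
          exact integral_congr_ae (Filter.Eventually.of_forall fun ω => (div_div _ _ _).symm)
      _ = ∫ ω, m1 (Z ω) ∂μ := by rw [hk]; field_simp
  have hB0 : ∫ ω, S ω * (1 - X ω) * m0 (Z ω) / (w (Z ω) * (1 - e)) ∂μ = ∫ ω, m0 (Z ω) ∂μ := by
    have hk := dr_key μ Z S (fun ω => 1 - X ω) Y0 Y1 w (1 - e) hZ hS
      (measurable_const.sub hX) hY0 hY1 hw hSbin
      (fun ω => by show (0:ℝ) ≤ 1 - X ω; linarith [hX1 ω]) (fun ω => by show (1:ℝ) - X ω ≤ 1; linarith [hX0 ω]) hwpos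
      hrel1X hign (fun p => m0 p.1) (hm0.comp measurable_fst) hK0 hL0
    calc ∫ ω, S ω * (1 - X ω) * m0 (Z ω) / (w (Z ω) * (1 - e)) ∂μ
        = (∫ ω, S ω * (1 - X ω) * m0 (Z ω) / w (Z ω) ∂μ) / (1 - e) := by
          rw [← integral_div]
          exact integral_congr_ae (Filter.Eventually.of_forall fun ω => (div_div _ _ _).symm)
      _ = ∫ ω, m0 (Z ω) ∂μ := by rw [hk]; field_simp
  -- remaining integrability
  have hJ1 : Integrable (fun ω => S ω * X ω * m1 (Z ω) / (w (Z ω) * e)) μ :=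
    (hL1.div_const e).congr (Filter.Eventually.of_forall fun ω => div_div _ _ _)
  have hJ0 : Integrable (fun ω => S ω * (1 - X ω) * m0 (Z ω) / (w (Z ω) * (1 - e))) μ :=
    (hL0.div_const (1 - e)).congr (Filter.Eventually.of_forall fun ω => div_div _ _ _)
  -- assemble
  calc ∫ ω, (S ω * X ω * (Y ω - m1 (Z ω)) / (w (Z ω) * e)
            - S ω * (1 - X ω) * (Y ω - m0 (Z ω)) / (w (Z ω) * (1 - e))
            + (m1 (Z ω) - m0 (Z ω))) ∂μ
      = ∫ ω, ((S ω * X ω * Y ω / (w (Z ω) * e) - S ω * X ω * m1 (Z ω) / (w (Z ω) * e))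
            - (S ω * (1 - X ω) * Y ω / (w (Z ω) * (1 - e))
                - S ω * (1 - X ω) * m0 (Z ω) / (w (Z ω) * (1 - e)))
            + (m1 (Z ω) - m0 (Z ω))) ∂μ :=
        integral_congr_ae (Filter.Eventually.of_forall fun ω => by ring)
    _ = ∫ ω, (Y1 ω - Y0 ω) ∂μ := by
        have hI1 : Integrable (fun ω => S ω * X ω * Y ω / (w (Z ω) * e)
            - S ω * X ω * m1 (Z ω) / (w (Z ω) * e)) μ := hint1.sub hJ1
        have hI2 : Integrable (fun ω => S ω * (1 - X ω) * Y ω / (w (Z ω) * (1 - e))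
            - S ω * (1 - X ω) * m0 (Z ω) / (w (Z ω) * (1 - e))) μ := hint0.sub hJ0
        have hI3 : Integrable (fun ω => (S ω * X ω * Y ω / (w (Z ω) * e)
            - S ω * X ω * m1 (Z ω) / (w (Z ω) * e))
            - (S ω * (1 - X ω) * Y ω / (w (Z ω) * (1 - e))
            - S ω * (1 - X ω) * m0 (Z ω) / (w (Z ω) * (1 - e)))) μ := hI1.sub hI2
        have hI4 : Integrable (fun ω => m1 (Z ω) - m0 (Z ω)) μ := hK1.sub hK0
        rw [integral_add hI3 hI4, integral_sub hI1 hI2, integral_sub hint1 hJ1,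
          integral_sub hint0 hJ0, integral_sub hK1 hK0, integral_sub hintY1 hintY0,
          hA1, hA0, hB1, hB0]
        ring
end

section
/- Under the identification assumptions, the expectation of the augmented estimating function equals the population average treatment effect when the outcome models are correct, regardless of whether the sampling score model is correct: if m_x(Z) = E[Y^x | Z, S=1] for x = 0,1, then E[ S X (Y - m_1(Z)) / (v(Z) e) - S (1-X)(Y - m_0(Z)) / (v(Z)(1-e)) + (m_1(Z) - m_0(Z)) ] = E[Y^1 - Y^0] for any measurable function v with v(Z) > 0 almost surely. -/
open MeasureTheory Filter Topology

lemma aux_zero {Ω : Type*} [MeasurableSpace Ω] (μ : Measure Ω) [IsProbabilityMeasure μ]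
    {α : Type*} [MeasurableSpace α]
    (Z : Ω → α) (S T : Ω → ℝ) (m u w : α → ℝ)
    (hZ : Measurable Z) (hS : Measurable S) (hT : Measurable T)
    (hm : Measurable m) (hu : Measurable u) (hw : Measurable w)
    (hSbin : ∀ ω, S ω = 0 ∨ S ω = 1)
    (hwpos : ∀ᵐ ω ∂μ, 0 < w (Z ω))
    (K : ℝ) (hu0 : ∀ z, 0 ≤ u z) (huK : ∀ z, u z ≤ K)
    (hintT : Integrable T μ) (hintm : Integrable (fun ω => m (Z ω)) μ)
    (hign' : ∀ f : α × ℝ → ℝ, Measurable f → Integrable (fun ω => f (Z ω, T ω)) μ →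
        ∫ ω, S ω * f (Z ω, T ω) ∂μ = ∫ ω, w (Z ω) * f (Z ω, T ω) ∂μ)
    (hmc : ∀ g : α → ℝ, Measurable g → (∃ C, ∀ z, |g z| ≤ C) →
        ∫ ω, g (Z ω) * T ω ∂μ = ∫ ω, g (Z ω) * m (Z ω) ∂μ) :
    ∫ ω, S ω * ((T ω - m (Z ω)) * u (Z ω)) ∂μ = 0 := by
  have hTm : Integrable (fun ω => T ω - m (Z ω)) μ := hintT.sub hintm
  have hTmm : Measurable (fun ω => T ω - m (Z ω)) := hT.sub (hm.comp hZ)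
  have habs : Integrable (fun ω => |T ω - m (Z ω)|) μ := hTm.abs
  -- step 1 : replace S by w(Z)
  have hf1m : Measurable (fun p : α × ℝ => (p.2 - m p.1) * u p.1) :=
    (measurable_snd.sub (hm.comp measurable_fst)).mul (hu.comp measurable_fst)
  have hf1int : Integrable (fun ω => (T ω - m (Z ω)) * u (Z ω)) μ := by
    have := hTm.bdd_mul ((hu.comp hZ)).aestronglyMeasurable
      (Eventually.of_forall fun ω => by
        rw [Real.norm_eq_abs, abs_of_nonneg (hu0 _)]; exact huK _ :
        ∀ᵐ ω ∂μ, ‖u (Z ω)‖ ≤ K)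
    simpa [mul_comm] using this
  have step1 : ∫ ω, S ω * ((T ω - m (Z ω)) * u (Z ω)) ∂μ
      = ∫ ω, w (Z ω) * ((T ω - m (Z ω)) * u (Z ω)) ∂μ :=
    hign' (fun p => (p.2 - m p.1) * u p.1) hf1m hf1int
  -- truncations
  set gn : ℕ → α → ℝ := fun n z => max 0 (min (w z * u z) n) with hgn_def
  have hgnm : ∀ n, Measurable (gn n) := fun n =>
    measurable_const.max ((hw.mul hu).min measurable_const)
  have hgn0 : ∀ n z, 0 ≤ gn n z := fun n z => le_max_left _ _
  have hgnle : ∀ n z, gn n z ≤ max 0 (w z * u z) :=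
    fun n z => max_le_max le_rfl (min_le_left _ _)
  have hgnK : ∀ n z, |gn n z| ≤ (n : ℝ) := by
    intro n z
    rw [abs_of_nonneg (hgn0 n z)]
    exact max_le (Nat.cast_nonneg n) (min_le_right _ _)
  have hgn_tendsto : ∀ z, Tendsto (fun n : ℕ => gn n z) atTop (𝓝 (max 0 (w z * u z))) := by
    intro z
    refine tendsto_atTop_of_eventually_const (i₀ := ⌈w z * u z⌉₊) ?_
    intro n hn
    have : w z * u z ≤ (n : ℝ) := (Nat.le_ceil _).trans (Nat.cast_le.2 hn)
    simp [hgn_def, min_eq_left this]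
  -- integrability of truncated products
  have hgn_int : ∀ n, Integrable (fun ω => gn n (Z ω) * (T ω - m (Z ω))) μ := fun n =>
    hTm.bdd_mul ((hgnm n).comp hZ).aestronglyMeasurable
      (Eventually.of_forall fun ω => by rw [Real.norm_eq_abs]; exact hgnK n _)
  have hgn_abs_int : ∀ n, Integrable (fun ω => gn n (Z ω) * |T ω - m (Z ω)|) μ := fun n =>
    habs.bdd_mul ((hgnm n).comp hZ).aestronglyMeasurable
      (Eventually.of_forall fun ω => by rw [Real.norm_eq_abs]; exact hgnK n _)
  -- each truncated integral of the centered variable vanishes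
  have hzero : ∀ n, ∫ ω, gn n (Z ω) * (T ω - m (Z ω)) ∂μ = 0 := by
    intro n
    have h1 : Integrable (fun ω => gn n (Z ω) * T ω) μ :=
      hintT.bdd_mul ((hgnm n).comp hZ).aestronglyMeasurable
        (Eventually.of_forall fun ω => by rw [Real.norm_eq_abs]; exact hgnK n _)
    have h2 : Integrable (fun ω => gn n (Z ω) * m (Z ω)) μ :=
      hintm.bdd_mul ((hgnm n).comp hZ).aestronglyMeasurable
        (Eventually.of_forall fun ω => by rw [Real.norm_eq_abs]; exact hgnK n _)
    have hh := hmc (gn n) (hgnm n) ⟨n, fun z => hgnK n z⟩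
    calc ∫ ω, gn n (Z ω) * (T ω - m (Z ω)) ∂μ
        = ∫ ω, (gn n (Z ω) * T ω - gn n (Z ω) * m (Z ω)) ∂μ := by
          congr 1; funext ω; ring
      _ = (∫ ω, gn n (Z ω) * T ω ∂μ) - ∫ ω, gn n (Z ω) * m (Z ω) ∂μ := integral_sub h1 h2
      _ = 0 := by rw [hh, sub_self]
  -- coefficient for transferring back to S
  set cn : ℕ → α → ℝ := fun n z => if w z = 0 then 0 else gn n z / w z with hcn_def
  have hcnm : ∀ n, Measurable (cn n) := fun n =>
    Measurable.ite (hw (measurableSet_singleton 0)) measurable_const ((hgnm n).div hw)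
  have hcn_bdd : ∀ n z, 0 ≤ cn n z ∧ cn n z ≤ K := by
    intro n z
    by_cases h0 : w z = 0
    · simp only [hcn_def, if_pos h0]
      exact ⟨le_rfl, (hu0 z).trans (huK z)⟩
    · simp only [hcn_def, if_neg h0]
      rcases lt_or_gt_of_ne h0 with hneg | hpos
      · have hwu : w z * u z ≤ 0 := mul_nonpos_of_nonpos_of_nonneg hneg.le (hu0 z)
        have hg0 : gn n z = 0 := by
          have : min (w z * u z) (n : ℝ) ≤ 0 := le_trans (min_le_left _ _) hwu
          simp [hgn_def, max_eq_left this]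
        rw [hg0, zero_div]
        exact ⟨le_rfl, (hu0 z).trans (huK z)⟩
      · refine ⟨div_nonneg (hgn0 n z) hpos.le, ?_⟩
        rw [div_le_iff₀ hpos]
        calc gn n z ≤ max 0 (w z * u z) := hgnle n z
          _ = w z * u z := max_eq_right (mul_nonneg hpos.le (hu0 z))
          _ = u z * w z := mul_comm _ _
          _ ≤ K * w z := mul_le_mul_of_nonneg_right (huK z) hpos.le
  have hwcn : ∀ n z, w z * cn n z = gn n z := by
    intro n z
    by_cases h0 : w z = 0
    · have : min ((0:ℝ) * u z) (n:ℝ) = 0 := by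
        rw [zero_mul]; exact min_eq_left (Nat.cast_nonneg n)
      simp [hcn_def, if_pos h0, hgn_def, h0, this]
    · simp only [hcn_def, if_neg h0]
      field_simp
  -- uniform bound on ∫ gn (Z) * |T - m(Z)|
  set C : ℝ := K * ∫ ω, |T ω - m (Z ω)| ∂μ with hC_def
  have hbound : ∀ n, ∫ ω, gn n (Z ω) * |T ω - m (Z ω)| ∂μ ≤ C := by
    intro n
    have hfm : Measurable (fun p : α × ℝ => cn n p.1 * |p.2 - m p.1|) :=
      ((hcnm n).comp measurable_fst).mul (measurable_snd.sub (hm.comp measurable_fst)).abs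
    have hfint : Integrable (fun ω => cn n (Z ω) * |T ω - m (Z ω)|) μ :=
      habs.bdd_mul ((hcnm n).comp hZ).aestronglyMeasurable
        (Eventually.of_forall fun ω => by
          rw [Real.norm_eq_abs, abs_of_nonneg (hcn_bdd n _).1]; exact (hcn_bdd n _).2)
    have hSfint : Integrable (fun ω => S ω * (cn n (Z ω) * |T ω - m (Z ω)|)) μ :=
      hfint.bdd_mul (c := 1) hS.aestronglyMeasurable
        (Eventually.of_forall fun ω => by rcases hSbin ω with h | h <;> simp [h])
    have heq := hign' (fun p => cn n p.1 * |p.2 - m p.1|) hfm hfint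
    have hKabs : Integrable (fun ω => K * |T ω - m (Z ω)|) μ := habs.const_mul K
    calc ∫ ω, gn n (Z ω) * |T ω - m (Z ω)| ∂μ
        = ∫ ω, w (Z ω) * (cn n (Z ω) * |T ω - m (Z ω)|) ∂μ := by
          congr 1; funext ω; rw [← mul_assoc, hwcn n (Z ω)]
      _ = ∫ ω, S ω * (cn n (Z ω) * |T ω - m (Z ω)|) ∂μ := heq.symm
      _ ≤ ∫ ω, K * |T ω - m (Z ω)| ∂μ := by
          refine integral_mono hSfint hKabs ?_
          intro ω
          dsimp only
          have h2 : cn n (Z ω) * |T ω - m (Z ω)| ≤ K * |T ω - m (Z ω)| :=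
            mul_le_mul_of_nonneg_right (hcn_bdd n _).2 (abs_nonneg _)
          rcases hSbin ω with h | h
          · rw [h, zero_mul]
            exact mul_nonneg ((hu0 (Z ω)).trans (huK _)) (abs_nonneg _)
          · rw [h, one_mul]; exact h2
      _ = C := by rw [hC_def, integral_const_mul]
  -- the dominating function is integrable by monotone convergence
  set D : Ω → ℝ := fun ω => max 0 (w (Z ω) * u (Z ω)) * |T ω - m (Z ω)| with hD_def
  have hDmeas : Measurable D :=
    (measurable_const.max ((hw.comp hZ).mul (hu.comp hZ))).mul hTmm.abs
  have hD0 : ∀ ω, 0 ≤ D ω := fun ω => mul_nonneg (le_max_left _ _) (abs_nonneg _)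
  have hDn_le : ∀ n ω, gn n (Z ω) * |T ω - m (Z ω)| ≤ D ω := fun n ω =>
    mul_le_mul_of_nonneg_right (hgnle n _) (abs_nonneg _)
  have hDint : Integrable D μ := by
    refine ⟨hDmeas.aestronglyMeasurable, ?_⟩
    rw [hasFiniteIntegral_iff_ofReal (Eventually.of_forall hD0)]
    have hkey : (fun ω => ENNReal.ofReal (D ω))
        = fun ω => ⨆ n : ℕ, ENNReal.ofReal (gn n (Z ω) * |T ω - m (Z ω)|) := by
      funext ω
      refine le_antisymm ?_ (iSup_le fun n => ENNReal.ofReal_le_ofReal (hDn_le n ω))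
      refine le_iSup_of_le ⌈w (Z ω) * u (Z ω)⌉₊ (ENNReal.ofReal_le_ofReal ?_)
      have hle : w (Z ω) * u (Z ω) ≤ ((⌈w (Z ω) * u (Z ω)⌉₊ : ℕ) : ℝ) := Nat.le_ceil _
      simp [hD_def, hgn_def, min_eq_left hle]
    calc ∫⁻ ω, ENNReal.ofReal (D ω) ∂μ
        = ∫⁻ ω, ⨆ n : ℕ, ENNReal.ofReal (gn n (Z ω) * |T ω - m (Z ω)|) ∂μ := by rw [hkey]
      _ = ⨆ n : ℕ, ∫⁻ ω, ENNReal.ofReal (gn n (Z ω) * |T ω - m (Z ω)|) ∂μ := by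
          refine lintegral_iSup (fun n => ?_) (fun i j hij ω => ENNReal.ofReal_le_ofReal ?_)
          · exact (((hgnm n).comp hZ).mul hTmm.abs).ennreal_ofReal
          · exact mul_le_mul_of_nonneg_right
              (max_le_max le_rfl (min_le_min le_rfl (Nat.cast_le.2 hij))) (abs_nonneg _)
      _ ≤ ENNReal.ofReal C := by
          refine iSup_le fun n => ?_
          rw [← ofReal_integral_eq_lintegral_ofReal (hgn_abs_int n)
            (Eventually.of_forall fun ω => mul_nonneg (hgn0 n _) (abs_nonneg _))]
          exact ENNReal.ofReal_le_ofReal (hbound n)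
      _ < ⊤ := ENNReal.ofReal_lt_top
  -- dominated convergence
  have hDCT : Tendsto (fun n : ℕ => ∫ ω, gn n (Z ω) * (T ω - m (Z ω)) ∂μ) atTop
      (𝓝 (∫ ω, max 0 (w (Z ω) * u (Z ω)) * (T ω - m (Z ω)) ∂μ)) := by
    refine tendsto_integral_of_dominated_convergence D
      (fun n => (((hgnm n).comp hZ).mul hTmm).aestronglyMeasurable) hDint
      (fun n => Eventually.of_forall fun ω => ?_)
      (Eventually.of_forall fun ω => ?_)
    · rw [Real.norm_eq_abs, abs_mul, abs_of_nonneg (hgn0 n _)]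
      exact hDn_le n ω
    · exact (hgn_tendsto (Z ω)).mul_const _
  have hlim : ∫ ω, max 0 (w (Z ω) * u (Z ω)) * (T ω - m (Z ω)) ∂μ = 0 := by
    have h0 : Tendsto (fun n : ℕ => ∫ ω, gn n (Z ω) * (T ω - m (Z ω)) ∂μ) atTop (𝓝 (0:ℝ)) := by
      simp only [hzero]; exact tendsto_const_nhds
    exact tendsto_nhds_unique hDCT h0
  rw [step1, ← hlim]
  refine integral_congr_ae ?_
  filter_upwards [hwpos] with ω hω
  rw [max_eq_right (mul_nonneg hω.le (hu0 _))]
  ring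


/-- **Double robustness, correct outcome models.** Under the identification
assumptions, the expectation of the augmented estimating function equals the
PATE when the outcome models are the true conditional means
`m_x(Z) = E[Yˣ | Z, S=1] = E[Yˣ | Z]`, for any measurable working sampling
score `v` bounded away from zero. -/
theorem dr_correct_outcome_models
    {Ω : Type*} [MeasurableSpace Ω] (μ : Measure Ω) [IsProbabilityMeasure μ]
    {α : Type*} [MeasurableSpace α]
    (Z : Ω → α) (S X Y0 Y1 Y : Ω → ℝ) (e : ℝ)
    (hZ : Measurable Z) (hS : Measurable S) (hX : Measurable X)
    (hY0 : Measurable Y0) (hY1 : Measurable Y1)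
    (hSbin : ∀ ω, S ω = 0 ∨ S ω = 1)
    (hXbin : ∀ ω, X ω = 0 ∨ X ω = 1)
    (he0 : 0 < e) (he1 : e < 1)
    -- randomization: X ⫫ (Z, Y⁰, Y¹) | S = 1 with P(X=1|S=1) = e
    (hrand : ∀ f : α × ℝ × ℝ → ℝ, Measurable f →
      Integrable (fun ω => S ω * f (Z ω, Y0 ω, Y1 ω)) μ →
      ∫ ω, S ω * X ω * f (Z ω, Y0 ω, Y1 ω) ∂μ
        = e * ∫ ω, S ω * f (Z ω, Y0 ω, Y1 ω) ∂μ)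
    -- ignorable trial participation with strictly positive true sampling score w:
    (w : α → ℝ) (hw : Measurable w) (hwpos : ∀ᵐ ω ∂μ, 0 < w (Z ω))
    (hign : ∀ f : α × ℝ × ℝ → ℝ, Measurable f →
      Integrable (fun ω => f (Z ω, Y0 ω, Y1 ω)) μ →
      ∫ ω, S ω * f (Z ω, Y0 ω, Y1 ω) ∂μ
        = ∫ ω, w (Z ω) * f (Z ω, Y0 ω, Y1 ω) ∂μ)
    (hY : ∀ ω, Y ω = X ω * Y1 ω + (1 - X ω) * Y0 ω)
    (hintY1 : Integrable Y1 μ) (hintY0 : Integrable Y0 μ)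
    -- correctly specified outcome models: m_x(Z) = E[Yˣ | Z] (= E[Yˣ | Z, S=1])
    (m1 m0 : α → ℝ) (hm1 : Measurable m1) (hm0 : Measurable m0)
    (hm1correct : ∀ g : α → ℝ, Measurable g → (∃ C, ∀ z, |g z| ≤ C) →
      ∫ ω, g (Z ω) * Y1 ω ∂μ = ∫ ω, g (Z ω) * m1 (Z ω) ∂μ)
    (hm0correct : ∀ g : α → ℝ, Measurable g → (∃ C, ∀ z, |g z| ≤ C) →
      ∫ ω, g (Z ω) * Y0 ω ∂μ = ∫ ω, g (Z ω) * m0 (Z ω) ∂μ)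
    (hintm1 : Integrable (fun ω => m1 (Z ω)) μ)
    (hintm0 : Integrable (fun ω => m0 (Z ω)) μ) :
    ∀ v : α → ℝ, Measurable v → (∃ δ > (0:ℝ), ∀ z, δ ≤ v z) →
      Integrable (fun ω => S ω * X ω * (Y ω - m1 (Z ω)) / (v (Z ω) * e)) μ →
      Integrable (fun ω => S ω * (1 - X ω) * (Y ω - m0 (Z ω)) / (v (Z ω) * (1 - e))) μ →
      ∫ ω, (S ω * X ω * (Y ω - m1 (Z ω)) / (v (Z ω) * e)
            - S ω * (1 - X ω) * (Y ω - m0 (Z ω)) / (v (Z ω) * (1 - e))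
            + (m1 (Z ω) - m0 (Z ω))) ∂μ
        = ∫ ω, (Y1 ω - Y0 ω) ∂μ := by
  intro v hv hδex hA hB
  obtain ⟨δ, hδ0, hδv⟩ := hδex
  set u : α → ℝ := fun z => (v z)⁻¹ with hu_def
  have hum : Measurable u := hv.inv
  have hvpos : ∀ z, 0 < v z := fun z => hδ0.trans_le (hδv z)
  have hu0 : ∀ z, 0 ≤ u z := fun z => inv_nonneg.2 (hvpos z).le
  have huK : ∀ z, u z ≤ δ⁻¹ := fun z => inv_anti₀ hδ0 (hδv z)
  have hSb1 : (∃ C, ∀ ω, ‖S ω‖ ≤ C) :=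
    ⟨1, fun ω => by rcases hSbin ω with h | h <;> simp [h]⟩
  have hXb1 : (∃ C, ∀ ω, ‖X ω‖ ≤ C) :=
    ⟨1, fun ω => by rcases hXbin ω with h | h <;> simp [h]⟩
  -- specialize ignorability to (Z, Y1) and (Z, Y0)
  have hign1 : ∀ f : α × ℝ → ℝ, Measurable f → Integrable (fun ω => f (Z ω, Y1 ω)) μ →
      ∫ ω, S ω * f (Z ω, Y1 ω) ∂μ = ∫ ω, w (Z ω) * f (Z ω, Y1 ω) ∂μ := fun f hf hfi =>
    hign (fun p => f (p.1, p.2.2))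
      (hf.comp (measurable_fst.prodMk (measurable_snd.comp measurable_snd))) hfi
  have hign0 : ∀ f : α × ℝ → ℝ, Measurable f → Integrable (fun ω => f (Z ω, Y0 ω)) μ →
      ∫ ω, S ω * f (Z ω, Y0 ω) ∂μ = ∫ ω, w (Z ω) * f (Z ω, Y0 ω) ∂μ := fun f hf hfi =>
    hign (fun p => f (p.1, p.2.1))
      (hf.comp (measurable_fst.prodMk (measurable_fst.comp measurable_snd))) hfi
  -- the two key vanishing integrals
  have hz1 : ∫ ω, S ω * ((Y1 ω - m1 (Z ω)) * u (Z ω)) ∂μ = 0 :=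
    aux_zero μ Z S Y1 m1 u w hZ hS hY1 hm1 hum hw hSbin hwpos δ⁻¹ hu0 huK
      hintY1 hintm1 hign1 hm1correct
  have hz0 : ∫ ω, S ω * ((Y0 ω - m0 (Z ω)) * u (Z ω)) ∂μ = 0 :=
    aux_zero μ Z S Y0 m0 u w hZ hS hY0 hm0 hum hw hSbin hwpos δ⁻¹ hu0 huK
      hintY0 hintm0 hign0 hm0correct
  -- integrability of building blocks
  have huZbd : (∃ C, ∀ ω, ‖u (Z ω)‖ ≤ C) :=
    ⟨δ⁻¹, fun ω => by rw [Real.norm_eq_abs, abs_of_nonneg (hu0 _)]; exact huK _⟩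
  have hint1 : Integrable (fun ω => (Y1 ω - m1 (Z ω)) * u (Z ω)) μ := by
    have := (hintY1.sub hintm1).bdd_mul (hum.comp hZ).aestronglyMeasurable (Eventually.of_forall huZbd.choose_spec)
    simpa [mul_comm] using this
  have hint0 : Integrable (fun ω => (Y0 ω - m0 (Z ω)) * u (Z ω)) μ := by
    have := (hintY0.sub hintm0).bdd_mul (hum.comp hZ).aestronglyMeasurable (Eventually.of_forall huZbd.choose_spec)
    simpa [mul_comm] using this
  have hintS1 : Integrable (fun ω => S ω * ((Y1 ω - m1 (Z ω)) * u (Z ω) / e)) μ :=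
    (hint1.div_const e).bdd_mul hS.aestronglyMeasurable (Eventually.of_forall hSb1.choose_spec)
  have hintS0 : Integrable (fun ω => S ω * ((Y0 ω - m0 (Z ω)) * u (Z ω) / (1 - e))) μ :=
    (hint0.div_const (1 - e)).bdd_mul hS.aestronglyMeasurable (Eventually.of_forall hSb1.choose_spec)
  -- randomization identities
  have hrand1 : ∫ ω, S ω * X ω * ((Y1 ω - m1 (Z ω)) * u (Z ω) / e) ∂μ
      = e * ∫ ω, S ω * ((Y1 ω - m1 (Z ω)) * u (Z ω) / e) ∂μ :=
    hrand (fun p => (p.2.2 - m1 p.1) * u p.1 / e)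
      (((measurable_snd.comp measurable_snd |>.sub (hm1.comp measurable_fst)).mul
        (hum.comp measurable_fst)).div_const e) hintS1
  have hrand0 : ∫ ω, S ω * X ω * ((Y0 ω - m0 (Z ω)) * u (Z ω) / (1 - e)) ∂μ
      = e * ∫ ω, S ω * ((Y0 ω - m0 (Z ω)) * u (Z ω) / (1 - e)) ∂μ :=
    hrand (fun p => (p.2.1 - m0 p.1) * u p.1 / (1 - e))
      (((measurable_fst.comp measurable_snd |>.sub (hm0.comp measurable_fst)).mul
        (hum.comp measurable_fst)).div_const (1 - e)) hintS0
  -- the S-integrals vanish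
  have hS1zero : ∫ ω, S ω * ((Y1 ω - m1 (Z ω)) * u (Z ω) / e) ∂μ = 0 := by
    have : (fun ω => S ω * ((Y1 ω - m1 (Z ω)) * u (Z ω) / e))
        = fun ω => (S ω * ((Y1 ω - m1 (Z ω)) * u (Z ω))) / e := by
      funext ω; ring
    rw [this, integral_div, hz1, zero_div]
  have hS0zero : ∫ ω, S ω * ((Y0 ω - m0 (Z ω)) * u (Z ω) / (1 - e)) ∂μ = 0 := by
    have : (fun ω => S ω * ((Y0 ω - m0 (Z ω)) * u (Z ω) / (1 - e)))
        = fun ω => (S ω * ((Y0 ω - m0 (Z ω)) * u (Z ω))) / (1 - e) := by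
      funext ω; ring
    rw [this, integral_div, hz0, zero_div]
  -- pointwise identities for the two estimating-function pieces
  have hAeq : ∀ ω, S ω * X ω * (Y ω - m1 (Z ω)) / (v (Z ω) * e)
      = S ω * X ω * ((Y1 ω - m1 (Z ω)) * u (Z ω) / e) := by
    intro ω
    have hne : v (Z ω) ≠ 0 := (hvpos _).ne'
    rcases hXbin ω with h | h
    · simp [h]
    · rw [hY ω, h, hu_def]
      field_simp
      try ring
  have hBeq : ∀ ω, S ω * (1 - X ω) * (Y ω - m0 (Z ω)) / (v (Z ω) * (1 - e))
      = S ω * ((Y0 ω - m0 (Z ω)) * u (Z ω) / (1 - e))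
        - S ω * X ω * ((Y0 ω - m0 (Z ω)) * u (Z ω) / (1 - e)) := by
    intro ω
    have hne : v (Z ω) ≠ 0 := (hvpos _).ne'
    have hne' : (1 : ℝ) - e ≠ 0 := sub_ne_zero.2 (ne_of_gt he1)
    rcases hXbin ω with h | h
    · rw [hY ω, h, hu_def]
      field_simp
      try ring
    · rw [hY ω, h, hu_def]
      field_simp
      try ring
  -- compute the three integrals
  have hintA : ∫ ω, S ω * X ω * (Y ω - m1 (Z ω)) / (v (Z ω) * e) ∂μ = 0 := by
    rw [integral_congr_ae (Eventually.of_forall hAeq), hrand1, hS1zero, mul_zero]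
  have hintSX0 : Integrable (fun ω => S ω * X ω * ((Y0 ω - m0 (Z ω)) * u (Z ω) / (1 - e))) μ := by
    have := hintS0.bdd_mul hX.aestronglyMeasurable (Eventually.of_forall hXb1.choose_spec)
    refine this.congr (Eventually.of_forall fun ω => ?_)
    ring
  have hintB : ∫ ω, S ω * (1 - X ω) * (Y ω - m0 (Z ω)) / (v (Z ω) * (1 - e)) ∂μ = 0 := by
    rw [integral_congr_ae (Eventually.of_forall hBeq), integral_sub hintS0 hintSX0,
      hrand0, hS0zero, mul_zero, sub_zero]
  have hintC : ∫ ω, (m1 (Z ω) - m0 (Z ω)) ∂μ = ∫ ω, (Y1 ω - Y0 ω) ∂μ := by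
    have h1 := hm1correct (fun _ => 1) measurable_const ⟨1, fun z => by simp⟩
    have h0 := hm0correct (fun _ => 1) measurable_const ⟨1, fun z => by simp⟩
    simp only [one_mul] at h1 h0
    rw [integral_sub hintm1 hintm0, integral_sub hintY1 hintY0, h1, h0]
  have hABC : Integrable (fun ω => S ω * X ω * (Y ω - m1 (Z ω)) / (v (Z ω) * e)
      - S ω * (1 - X ω) * (Y ω - m0 (Z ω)) / (v (Z ω) * (1 - e))) μ := hA.sub hB
  have hC : Integrable (fun ω => m1 (Z ω) - m0 (Z ω)) μ := hintm1.sub hintm0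
  rw [integral_add hABC hC, integral_sub hA hB, hintA, hintB, sub_zero, zero_add, hintC]
end

section
/- Double robustness of the population-level DR functional: define ψ(v, m_1, m_0) = E[ S X (Y - m_1(Z))/(v(Z) e) - S (1-X)(Y - m_0(Z))/(v(Z)(1-e)) + m_1(Z) - m_0(Z) ]. If either v(Z) = P(S=1|Z) almost surely (with arbitrary bounded m_1, m_0), or m_x(Z) = E[Y^x|Z] almost surely for x = 0,1 (with arbitrary measurable v bounded away from 0), then ψ(v, m_1, m_0) = E[Y^1 - Y^0]. -/
open MeasureTheory

/-- **Double robustness of the population-level DR functional.** With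
`ψ(v, m₁, m₀) = E[SX(Y-m₁(Z))/(v(Z)e) - S(1-X)(Y-m₀(Z))/(v(Z)(1-e)) + m₁(Z)-m₀(Z)]`,
if either `v(Z) = P(S=1|Z)` a.s. (arbitrary bounded `m₁, m₀`), or
`m_x(Z) = E[Yˣ|Z]` a.s. (arbitrary `v` bounded away from zero), then
`ψ(v, m₁, m₀) = E[Y¹ - Y⁰]`. -/
theorem dr_functional_double_robustness
    {Ω : Type*} [MeasurableSpace Ω] (μ : Measure Ω) [IsProbabilityMeasure μ]
    {α : Type*} [MeasurableSpace α]
    (Z : Ω → α) (S X Y0 Y1 Y : Ω → ℝ) (e : ℝ)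
    (hZ : Measurable Z) (hS : Measurable S) (hX : Measurable X)
    (hY0 : Measurable Y0) (hY1 : Measurable Y1)
    (hSbin : ∀ ω, S ω = 0 ∨ S ω = 1) (hXbin : ∀ ω, X ω = 0 ∨ X ω = 1)
    (he0 : 0 < e) (he1 : e < 1)
    -- randomization: X ⫫ (Z, Y⁰, Y¹) | S = 1 with P(X=1|S=1) = e
    (hrand : ∀ f : α × ℝ × ℝ → ℝ, Measurable f →
      Integrable (fun ω => S ω * f (Z ω, Y0 ω, Y1 ω)) μ →
      ∫ ω, S ω * X ω * f (Z ω, Y0 ω, Y1 ω) ∂μ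
        = e * ∫ ω, S ω * f (Z ω, Y0 ω, Y1 ω) ∂μ)
    -- ignorable participation with true sampling score w, positive a.s.
    (w : α → ℝ) (hwmeas : Measurable w) (hwpos : ∀ᵐ ω ∂μ, 0 < w (Z ω))
    (hign : ∀ f : α × ℝ × ℝ → ℝ, Measurable f →
      Integrable (fun ω => f (Z ω, Y0 ω, Y1 ω)) μ →
      ∫ ω, S ω * f (Z ω, Y0 ω, Y1 ω) ∂μ
        = ∫ ω, w (Z ω) * f (Z ω, Y0 ω, Y1 ω) ∂μ)
    (hY : ∀ ω, Y ω = X ω * Y1 ω + (1 - X ω) * Y0 ω)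
    (hintY1 : Integrable Y1 μ) (hintY0 : Integrable Y0 μ)
    -- working models: v measurable, bounded away from 0; m₁, m₀ bounded measurable
    (v : α → ℝ) (hv : Measurable v) (hvbdd : ∃ δ > (0:ℝ), ∀ z, δ ≤ v z)
    (m1 m0 : α → ℝ) (hm1 : Measurable m1) (hm0 : Measurable m0)
    (hm1bdd : ∃ C, ∀ z, |m1 z| ≤ C) (hm0bdd : ∃ C, ∀ z, |m0 z| ≤ C)
    (hint1 : Integrable (fun ω => S ω * X ω * (Y ω - m1 (Z ω)) / (v (Z ω) * e)) μ)
    (hint0 : Integrable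
      (fun ω => S ω * (1 - X ω) * (Y ω - m0 (Z ω)) / (v (Z ω) * (1 - e))) μ)
    -- either the sampling score model is correct ...
    (hdr : (∀ᵐ ω ∂μ, v (Z ω) = w (Z ω))
      -- ... or the outcome models are correct: m_x(Z) = E[Yˣ | Z] a.s.
      ∨ ((∀ g : α → ℝ, Measurable g → (∃ C, ∀ z, |g z| ≤ C) →
            ∫ ω, g (Z ω) * Y1 ω ∂μ = ∫ ω, g (Z ω) * m1 (Z ω) ∂μ)
        ∧ (∀ g : α → ℝ, Measurable g → (∃ C, ∀ z, |g z| ≤ C) →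
            ∫ ω, g (Z ω) * Y0 ω ∂μ = ∫ ω, g (Z ω) * m0 (Z ω) ∂μ))) :
    ∫ ω, (S ω * X ω * (Y ω - m1 (Z ω)) / (v (Z ω) * e)
          - S ω * (1 - X ω) * (Y ω - m0 (Z ω)) / (v (Z ω) * (1 - e))
          + (m1 (Z ω) - m0 (Z ω))) ∂μ
      = ∫ ω, (Y1 ω - Y0 ω) ∂μ := by
  obtain ⟨δ, hδ, hvδ⟩ := hvbdd
  obtain ⟨C1, hC1⟩ := hm1bdd
  obtain ⟨C0, hC0⟩ := hm0bdd
  have hvpos : ∀ z, 0 < v z := fun z => lt_of_lt_of_le hδ (hvδ z)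
  have hvne : ∀ z, v z ≠ 0 := fun z => (hvpos z).ne'
  have he0' : e ≠ 0 := he0.ne'
  have he1pos : (0:ℝ) < 1 - e := by linarith
  have he1' : (1:ℝ) - e ≠ 0 := he1pos.ne'
  have hSabs : ∀ ω, |S ω| ≤ 1 := fun ω => by rcases hSbin ω with h | h <;> simp [h]
  have hXabs : ∀ ω, |X ω| ≤ 1 := fun ω => by rcases hXbin ω with h | h <;> simp [h]
  -- bounded measurable functions of Z are integrable
  have hbint : ∀ (m : α → ℝ), Measurable m → ∀ C : ℝ, (∀ z, |m z| ≤ C) →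
      Integrable (fun ω => m (Z ω)) μ := fun m hm C hC =>
    (integrable_const C).mono' ((hm.comp hZ).aestronglyMeasurable)
      (Filter.Eventually.of_forall fun ω => by simpa using hC (Z ω))
  have hintm1 : Integrable (fun ω => m1 (Z ω)) μ := hbint m1 hm1 C1 hC1
  have hintm0 : Integrable (fun ω => m0 (Z ω)) μ := hbint m0 hm0 C0 hC0
  have hintD1 : Integrable (fun ω => Y1 ω - m1 (Z ω)) μ := hintY1.sub hintm1
  have hintD0 : Integrable (fun ω => Y0 ω - m0 (Z ω)) μ := hintY0.sub hintm0
  -- uniform bound for T/(v·c)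
  have hbnd : ∀ (T : Ω → ℝ) (c : ℝ), 0 < c → (∀ ω, |T ω| ≤ 1) →
      ∀ ω, ‖T ω / (v (Z ω) * c)‖ ≤ (δ * c)⁻¹ := by
    intro T c hc hT ω
    rw [Real.norm_eq_abs, abs_div, abs_of_pos (mul_pos (hvpos _) hc), inv_eq_one_div]
    exact div_le_div₀ zero_le_one (hT ω) (mul_pos hδ hc)
      (mul_le_mul_of_nonneg_right (hvδ _) hc.le)
  have hint_gen : ∀ (T : Ω → ℝ), Measurable T → (∀ ω, |T ω| ≤ 1) →
      ∀ (c : ℝ), 0 < c → ∀ (D : Ω → ℝ), Integrable D μ →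
      Integrable (fun ω => T ω / (v (Z ω) * c) * D ω) μ := by
    intro T hT hTb c hc D hD
    exact hD.bdd_mul ((hT.div ((hv.comp hZ).mul measurable_const)).aestronglyMeasurable)
      (Filter.Eventually.of_forall (hbnd T c hc hTb))
  have hSXabs : ∀ ω, |S ω * X ω| ≤ 1 := fun ω => by
    rw [abs_mul]
    exact mul_le_one₀ (hSabs ω) (abs_nonneg _) (hXabs ω)
  -- the integrability facts we need
  have hintSf1 : Integrable (fun ω => S ω * ((Y1 ω - m1 (Z ω)) / (v (Z ω) * e))) μ :=
    (hint_gen S hS hSabs e he0 _ hintD1).congr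
      (Filter.Eventually.of_forall fun ω => by ring)
  have hintSf0 : Integrable
      (fun ω => S ω * ((Y0 ω - m0 (Z ω)) / (v (Z ω) * (1 - e)))) μ :=
    (hint_gen S hS hSabs (1 - e) he1pos _ hintD0).congr
      (Filter.Eventually.of_forall fun ω => by ring)
  have hintSXf0 : Integrable
      (fun ω => S ω * X ω * ((Y0 ω - m0 (Z ω)) / (v (Z ω) * (1 - e)))) μ :=
    (hint_gen (fun ω => S ω * X ω) (hS.mul hX) hSXabs (1 - e) he1pos _ hintD0).congr
      (Filter.Eventually.of_forall fun ω => by ring)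
  have hone : ∀ ω : Ω, |(1:ℝ)| ≤ 1 := fun _ => by norm_num
  have hintf1' : Integrable (fun ω => (Y1 ω - m1 (Z ω)) / v (Z ω)) μ :=
    (hint_gen (fun _ => 1) measurable_const hone 1 one_pos _ hintD1).congr
      (Filter.Eventually.of_forall fun ω => by ring)
  have hintf0' : Integrable (fun ω => (Y0 ω - m0 (Z ω)) / v (Z ω)) μ :=
    (hint_gen (fun _ => 1) measurable_const hone 1 one_pos _ hintD0).congr
      (Filter.Eventually.of_forall fun ω => by ring)
  -- measurability of the auxiliary functions on α × ℝ × ℝ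
  have hf1 : Measurable fun p : α × ℝ × ℝ => (p.2.2 - m1 p.1) / (v p.1 * e) :=
    (measurable_snd.snd.sub (hm1.comp measurable_fst)).div
      ((hv.comp measurable_fst).mul measurable_const)
  have hf0 : Measurable fun p : α × ℝ × ℝ => (p.2.1 - m0 p.1) / (v p.1 * (1 - e)) :=
    (measurable_snd.fst.sub (hm0.comp measurable_fst)).div
      ((hv.comp measurable_fst).mul measurable_const)
  have hf1' : Measurable fun p : α × ℝ × ℝ => (p.2.2 - m1 p.1) / v p.1 :=
    (measurable_snd.snd.sub (hm1.comp measurable_fst)).div (hv.comp measurable_fst)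
  have hf0' : Measurable fun p : α × ℝ × ℝ => (p.2.1 - m0 p.1) / v p.1 :=
    (measurable_snd.fst.sub (hm0.comp measurable_fst)).div (hv.comp measurable_fst)
  -- the treated arm
  have hAeq : ∫ ω, S ω * X ω * (Y ω - m1 (Z ω)) / (v (Z ω) * e) ∂μ
      = ∫ ω, w (Z ω) * ((Y1 ω - m1 (Z ω)) / v (Z ω)) ∂μ := by
    have e1 : ∫ ω, S ω * X ω * (Y ω - m1 (Z ω)) / (v (Z ω) * e) ∂μ
        = ∫ ω, S ω * X ω * ((Y1 ω - m1 (Z ω)) / (v (Z ω) * e)) ∂μ := by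
      refine integral_congr_ae (Filter.Eventually.of_forall fun ω => ?_)
      rcases hXbin ω with h | h
      · simp [h]
      · simp only [hY, h]; ring
    have e2 : ∫ ω, S ω * X ω * ((Y1 ω - m1 (Z ω)) / (v (Z ω) * e)) ∂μ
        = e * ∫ ω, S ω * ((Y1 ω - m1 (Z ω)) / (v (Z ω) * e)) ∂μ :=
      hrand (fun p => (p.2.2 - m1 p.1) / (v p.1 * e)) hf1 hintSf1
    have e3 : (fun ω => S ω * ((Y1 ω - m1 (Z ω)) / (v (Z ω) * e)))
        = fun ω => e⁻¹ * (S ω * ((Y1 ω - m1 (Z ω)) / v (Z ω))) := by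
      funext ω
      field_simp
    have e4 : ∫ ω, S ω * ((Y1 ω - m1 (Z ω)) / v (Z ω)) ∂μ
        = ∫ ω, w (Z ω) * ((Y1 ω - m1 (Z ω)) / v (Z ω)) ∂μ :=
      hign (fun p => (p.2.2 - m1 p.1) / v p.1) hf1' hintf1'
    rw [e1, e2, e3, integral_const_mul, ← mul_assoc, mul_inv_cancel₀ he0', one_mul, e4]
  -- the control arm
  have hBeq : ∫ ω, S ω * (1 - X ω) * (Y ω - m0 (Z ω)) / (v (Z ω) * (1 - e)) ∂μ
      = ∫ ω, w (Z ω) * ((Y0 ω - m0 (Z ω)) / v (Z ω)) ∂μ := by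
    have e1 : ∫ ω, S ω * (1 - X ω) * (Y ω - m0 (Z ω)) / (v (Z ω) * (1 - e)) ∂μ
        = ∫ ω, (S ω * ((Y0 ω - m0 (Z ω)) / (v (Z ω) * (1 - e)))
            - S ω * X ω * ((Y0 ω - m0 (Z ω)) / (v (Z ω) * (1 - e)))) ∂μ := by
      refine integral_congr_ae (Filter.Eventually.of_forall fun ω => ?_)
      rcases hXbin ω with h | h
      · simp only [hY, h]; ring
      · simp only [h]; ring
    have e2 : ∫ ω, S ω * X ω * ((Y0 ω - m0 (Z ω)) / (v (Z ω) * (1 - e))) ∂μ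
        = e * ∫ ω, S ω * ((Y0 ω - m0 (Z ω)) / (v (Z ω) * (1 - e))) ∂μ :=
      hrand (fun p => (p.2.1 - m0 p.1) / (v p.1 * (1 - e))) hf0 hintSf0
    have e3 : (fun ω => S ω * ((Y0 ω - m0 (Z ω)) / (v (Z ω) * (1 - e))))
        = fun ω => (1 - e)⁻¹ * (S ω * ((Y0 ω - m0 (Z ω)) / v (Z ω))) := by
      funext ω
      field_simp
    have e4 : ∫ ω, S ω * ((Y0 ω - m0 (Z ω)) / v (Z ω)) ∂μ
        = ∫ ω, w (Z ω) * ((Y0 ω - m0 (Z ω)) / v (Z ω)) ∂μ :=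
      hign (fun p => (p.2.1 - m0 p.1) / v p.1) hf0' hintf0'
    rw [e1, integral_sub hintSf0 hintSXf0, e2, e3, integral_const_mul, e4]
    set I := ∫ ω, w (Z ω) * ((Y0 ω - m0 (Z ω)) / v (Z ω)) ∂μ
    have : (1 - e)⁻¹ * I - e * ((1 - e)⁻¹ * I) = ((1 - e) * (1 - e)⁻¹) * I := by ring
    rw [this, mul_inv_cancel₀ he1', one_mul]
  -- split the left-hand side
  have hsplit := integral_add (μ := μ) (hint1.sub hint0) (hintm1.sub hintm0)
  simp only [Pi.sub_apply] at hsplit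
  rw [hsplit]
  rw [integral_sub hint1 hint0, integral_sub hintm1 hintm0,
    integral_sub hintY1 hintY0, hAeq, hBeq]
  rcases hdr with hvw | ⟨h1, h0⟩
  · -- sampling-score model correct
    have k1 : ∫ ω, w (Z ω) * ((Y1 ω - m1 (Z ω)) / v (Z ω)) ∂μ
        = ∫ ω, (Y1 ω - m1 (Z ω)) ∂μ := by
      refine integral_congr_ae ?_
      filter_upwards [hvw] with ω h
      rw [← h, mul_comm, div_mul_cancel₀ _ (hvne (Z ω))]
    have k0 : ∫ ω, w (Z ω) * ((Y0 ω - m0 (Z ω)) / v (Z ω)) ∂μ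
        = ∫ ω, (Y0 ω - m0 (Z ω)) ∂μ := by
      refine integral_congr_ae ?_
      filter_upwards [hvw] with ω h
      rw [← h, mul_comm, div_mul_cancel₀ _ (hvne (Z ω))]
    rw [k1, k0, integral_sub hintY1 hintm1, integral_sub hintY0 hintm0]
    ring
  · -- outcome models correct: first show w(Z) ≤ 1 a.e.
    have hw1 : ∀ᵐ ω ∂μ, w (Z ω) ≤ 1 := by
      have key : ∀ n : ℕ, ∀ᵐ ω ∂μ, ¬(1 < w (Z ω) ∧ w (Z ω) ≤ (n : ℝ) + 1) := by
        intro n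
        set A : Set α := {z | 1 < w z ∧ w z ≤ (n : ℝ) + 1} with hAdef
        have hAm : MeasurableSet A :=
          (measurableSet_lt measurable_const hwmeas).inter
            (measurableSet_le hwmeas measurable_const)
        set uz : α → ℝ := A.indicator fun _ => (1:ℝ) with huz
        have humz : Measurable uz := measurable_const.indicator hAm
        have hub : ∀ z, |uz z| ≤ 1 := by
          intro z
          by_cases h : z ∈ A <;>
            simp [huz, Set.indicator_of_mem, Set.indicator_of_notMem, h]
        have huint : Integrable (fun ω => uz (Z ω)) μ := hbint uz humz 1 hub
        have hwuint : Integrable (fun ω => w (Z ω) * uz (Z ω)) μ := by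
          refine hbint (fun z => w z * uz z) (hwmeas.mul humz) ((n : ℝ) + 1) ?_
          intro z
          show |w z * uz z| ≤ (n : ℝ) + 1
          by_cases h : z ∈ A
          · have h' : 1 < w z ∧ w z ≤ (n : ℝ) + 1 := h
            rw [huz, Set.indicator_of_mem h, mul_one, abs_of_pos (lt_trans one_pos h'.1)]
            exact h'.2
          · rw [huz, Set.indicator_of_notMem h, mul_zero, abs_zero]
            positivity
        have hSuint : Integrable (fun ω => S ω * uz (Z ω)) μ :=
          huint.bdd_mul hS.aestronglyMeasurable
            (Filter.Eventually.of_forall fun ω => by rw [Real.norm_eq_abs]; exact hSabs ω)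
        have heq : ∫ ω, S ω * uz (Z ω) ∂μ = ∫ ω, w (Z ω) * uz (Z ω) ∂μ :=
          hign (fun p => uz p.1) (humz.comp measurable_fst) huint
        have hle : ∫ ω, S ω * uz (Z ω) ∂μ ≤ ∫ ω, uz (Z ω) ∂μ := by
          refine integral_mono hSuint huint fun ω => ?_
          have h0 : 0 ≤ uz (Z ω) := by
            by_cases h : Z ω ∈ A <;>
              simp [huz, Set.indicator_of_mem, Set.indicator_of_notMem, h]
          rcases hSbin ω with h | h <;> simp [h, h0]
        have hnn : 0 ≤ᵐ[μ] fun ω => w (Z ω) * uz (Z ω) - uz (Z ω) := by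
          refine Filter.Eventually.of_forall fun ω => ?_
          by_cases h : Z ω ∈ A
          · have h1 := h.1
            simp only [huz, Set.indicator_of_mem h, mul_one, Pi.zero_apply]
            linarith
          · simp [huz, Set.indicator_of_notMem h]
        have hzero : ∀ᵐ ω ∂μ, w (Z ω) * uz (Z ω) - uz (Z ω) = 0 := by
          have hint' : Integrable (fun ω => w (Z ω) * uz (Z ω) - uz (Z ω)) μ :=
            hwuint.sub huint
          have hI0 : ∫ ω, (w (Z ω) * uz (Z ω) - uz (Z ω)) ∂μ = 0 := by
            refine le_antisymm ?_ (integral_nonneg_of_ae hnn)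
            rw [integral_sub hwuint huint, ← heq]
            linarith
          exact (integral_eq_zero_iff_of_nonneg_ae hnn hint').mp hI0
        filter_upwards [hzero] with ω h
        intro hcon
        have hmem : Z ω ∈ A := hcon
        rw [huz, Set.indicator_of_mem hmem, mul_one] at h
        have := hcon.1
        linarith [sub_eq_zero.mp h]
      have hall : ∀ᵐ ω ∂μ, ∀ n : ℕ, ¬(1 < w (Z ω) ∧ w (Z ω) ≤ (n : ℝ) + 1) :=
        ae_all_iff.mpr key
      filter_upwards [hall] with ω h
      by_contra hgt
      push_neg at hgt
      obtain ⟨n, hn⟩ := exists_nat_ge (w (Z ω))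
      exact h n ⟨hgt, hn.trans (by linarith)⟩
    -- the truncated sampling score over v
    set g : α → ℝ := fun z => max 0 (min (w z) 1) / v z with hgdef
    have hgmeas : Measurable g :=
      (measurable_const.max (hwmeas.min measurable_const)).div hv
    have hgb : ∀ z, |g z| ≤ δ⁻¹ := by
      intro z
      show |max 0 (min (w z) 1) / v z| ≤ δ⁻¹
      rw [abs_div, abs_of_nonneg (le_max_left 0 _), abs_of_pos (hvpos z), inv_eq_one_div]
      exact div_le_div₀ zero_le_one (max_le zero_le_one (min_le_right _ _)) hδ (hvδ z)
    have hgw : ∀ᵐ ω ∂μ, g (Z ω) = w (Z ω) / v (Z ω) := by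
      filter_upwards [hwpos, hw1] with ω hp hl
      show max 0 (min (w (Z ω)) 1) / v (Z ω) = w (Z ω) / v (Z ω)
      rw [min_eq_left hl, max_eq_right hp.le]
    have hgnorm : ∀ ω, ‖g (Z ω)‖ ≤ δ⁻¹ := fun ω => by
      rw [Real.norm_eq_abs]; exact hgb (Z ω)
    have key1 : ∫ ω, w (Z ω) * ((Y1 ω - m1 (Z ω)) / v (Z ω)) ∂μ = 0 := by
      have e1 : ∫ ω, w (Z ω) * ((Y1 ω - m1 (Z ω)) / v (Z ω)) ∂μ
          = ∫ ω, (g (Z ω) * Y1 ω - g (Z ω) * m1 (Z ω)) ∂μ := by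
        refine integral_congr_ae ?_
        filter_upwards [hgw] with ω h
        rw [h]
        field_simp
      have hgY1 : Integrable (fun ω => g (Z ω) * Y1 ω) μ :=
        hintY1.bdd_mul ((hgmeas.comp hZ).aestronglyMeasurable) (Filter.Eventually.of_forall hgnorm)
      have hgm1 : Integrable (fun ω => g (Z ω) * m1 (Z ω)) μ := by
        refine hbint (fun z => g z * m1 z) (hgmeas.mul hm1) (δ⁻¹ * C1) fun z => ?_
        rw [abs_mul]
        exact mul_le_mul (hgb z) (hC1 z) (abs_nonneg _) (by positivity)
      rw [e1, integral_sub hgY1 hgm1, h1 g hgmeas ⟨δ⁻¹, hgb⟩, sub_self]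
    have key0 : ∫ ω, w (Z ω) * ((Y0 ω - m0 (Z ω)) / v (Z ω)) ∂μ = 0 := by
      have e1 : ∫ ω, w (Z ω) * ((Y0 ω - m0 (Z ω)) / v (Z ω)) ∂μ
          = ∫ ω, (g (Z ω) * Y0 ω - g (Z ω) * m0 (Z ω)) ∂μ := by
        refine integral_congr_ae ?_
        filter_upwards [hgw] with ω h
        rw [h]
        field_simp
      have hgY0 : Integrable (fun ω => g (Z ω) * Y0 ω) μ :=
        hintY0.bdd_mul ((hgmeas.comp hZ).aestronglyMeasurable) (Filter.Eventually.of_forall hgnorm)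
      have hgm0 : Integrable (fun ω => g (Z ω) * m0 (Z ω)) μ := by
        refine hbint (fun z => g z * m0 z) (hgmeas.mul hm0) (δ⁻¹ * C0) fun z => ?_
        rw [abs_mul]
        exact mul_le_mul (hgb z) (hC0 z) (abs_nonneg _) (by positivity)
      rw [e1, integral_sub hgY0 hgm0, h0 g hgmeas ⟨δ⁻¹, hgb⟩, sub_self]
    have hy1 : ∫ ω, Y1 ω ∂μ = ∫ ω, m1 (Z ω) ∂μ := by
      have := h1 (fun _ => 1) measurable_const ⟨1, fun z => by norm_num⟩
      simpa using this
    have hy0 : ∫ ω, Y0 ω ∂μ = ∫ ω, m0 (Z ω) ∂μ := by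
      have := h0 (fun _ => 1) measurable_const ⟨1, fun z => by norm_num⟩
      simpa using this
    rw [key1, key0, hy1, hy0]
    ring
end

section
/- When both the sampling score and outcome models are correct, the variance of the DR influence function is no greater than that of the IPSW influence function: with φ_IPSW = SXY/(w(Z)e) - S(1-X)Y/(w(Z)(1-e)) - Δ and φ_DR = SX(Y-m_1(Z))/(w(Z)e) - S(1-X)(Y-m_0(Z))/(w(Z)(1-e)) + m_1(Z) - m_0(Z) - Δ, where m_x(Z) = E[Y^x|Z] and w(Z) = P(S=1|Z), one has Var(φ_DR) ≤ Var(φ_IPSW). -/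
open MeasureTheory ProbabilityTheory

open Filter

lemma aux_bdd_integrable {Ω : Type*} [MeasurableSpace Ω] (μ : Measure Ω) [IsProbabilityMeasure μ]
    (g : Ω → ℝ) (hg : Measurable g) (hb : ∃ C, ∀ ω, |g ω| ≤ C) : Integrable g μ := by
  obtain ⟨C, hC⟩ := hb
  exact Integrable.mono' (integrable_const C) hg.aestronglyMeasurable
    (ae_of_all _ fun ω => by simpa [Real.norm_eq_abs] using hC ω)

lemma aux_integrable_of_min {Ω : Type*} [MeasurableSpace Ω] (μ : Measure Ω) [IsProbabilityMeasure μ]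
    (h : Ω → ℝ) (hm : Measurable h) (h0 : ∀ ω, 0 ≤ h ω) (C : ℝ)
    (hb : ∀ n : ℕ, ∫ ω, min (h ω) n ∂μ ≤ C) : Integrable h μ := by
  have hmin_meas : ∀ n : ℕ, Measurable fun ω => min (h ω) (n : ℝ) :=
    fun n => hm.min measurable_const
  have hmin_nonneg : ∀ (n : ℕ) ω, 0 ≤ min (h ω) (n : ℝ) :=
    fun n ω => le_min (h0 ω) n.cast_nonneg
  have hmin_int : ∀ n : ℕ, Integrable (fun ω => min (h ω) (n : ℝ)) μ := by
    intro n
    refine aux_bdd_integrable μ _ (hmin_meas n) ⟨n, fun ω => ?_⟩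
    rw [abs_of_nonneg (hmin_nonneg n ω)]
    exact min_le_right _ _
  have hpt : ∀ ω, ENNReal.ofReal (h ω) = ⨆ n : ℕ, ENNReal.ofReal (min (h ω) (n : ℝ)) := by
    intro ω
    apply le_antisymm
    · obtain ⟨n, hn⟩ := exists_nat_ge (h ω)
      refine le_iSup_of_le n ?_
      rw [min_eq_left hn]
    · exact iSup_le fun n => ENNReal.ofReal_le_ofReal (min_le_left _ _)
  have key : ∫⁻ ω, ENNReal.ofReal (h ω) ∂μ
      = ⨆ n : ℕ, ∫⁻ ω, ENNReal.ofReal (min (h ω) (n : ℝ)) ∂μ := by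
    calc ∫⁻ ω, ENNReal.ofReal (h ω) ∂μ
        = ∫⁻ ω, ⨆ n : ℕ, ENNReal.ofReal (min (h ω) (n : ℝ)) ∂μ := by
          congr 1; funext ω; exact hpt ω
      _ = ⨆ n : ℕ, ∫⁻ ω, ENNReal.ofReal (min (h ω) (n : ℝ)) ∂μ := by
          refine lintegral_iSup (fun n => ENNReal.measurable_ofReal.comp (hmin_meas n)) ?_
          intro i j hij ω
          exact ENNReal.ofReal_le_ofReal (min_le_min le_rfl (Nat.cast_le.2 hij))
  have hfin : ∫⁻ ω, ENNReal.ofReal (h ω) ∂μ ≤ ENNReal.ofReal C := by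
    rw [key]
    refine iSup_le fun n => ?_
    rw [← ofReal_integral_eq_lintegral_ofReal (hmin_int n) (ae_of_all _ (hmin_nonneg n))]
    exact ENNReal.ofReal_le_ofReal (hb n)
  refine ⟨hm.aestronglyMeasurable, ?_⟩
  rw [hasFiniteIntegral_iff_ofReal (ae_of_all _ h0)]
  exact lt_of_le_of_lt hfin ENNReal.ofReal_lt_top

lemma aux_clamp_abs_le (x n : ℝ) (hn : 0 ≤ n) : |max (min x n) (-n)| ≤ |x| := by
  rw [abs_le]
  constructor
  · refine le_trans ?_ (le_max_left _ _)
    exact le_min (neg_abs_le x) (le_trans (by simpa using abs_nonneg x) hn)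
  · refine max_le (le_trans (min_le_left _ _) (le_abs_self x)) (le_trans ?_ (abs_nonneg x))
    simpa using hn

lemma aux_clamp_eq (x n : ℝ) (h : |x| ≤ n) : max (min x n) (-n) = x := by
  rw [min_eq_left (le_trans (le_abs_self x) h), max_eq_left (le_trans (neg_le_neg h) (neg_abs_le x))]

set_option maxHeartbeats 2000000 in
/-- **The DR influence function has no larger variance than the IPSW influence
function** when both the sampling score and the outcome models are correct. -/
theorem dr_influence_function_smaller_variance
    {Ω : Type*} [MeasurableSpace Ω] (μ : Measure Ω) [IsProbabilityMeasure μ]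
    {α : Type*} [MeasurableSpace α]
    (Z : Ω → α) (S X Y0 Y1 Y : Ω → ℝ) (w : α → ℝ) (e δ : ℝ)
    (hZ : Measurable Z) (hS : Measurable S) (hX : Measurable X)
    (hY0 : Measurable Y0) (hY1 : Measurable Y1) (hwmeas : Measurable w)
    (hSbin : ∀ ω, S ω = 0 ∨ S ω = 1) (hXbin : ∀ ω, X ω = 0 ∨ X ω = 1)
    (he0 : 0 < e) (he1 : e < 1) (hδ : 0 < δ)
    (hwrange : ∀ z, δ < w z ∧ w z < 1)
    -- randomization: X ⫫ (Z, Y⁰, Y¹) | S = 1 with P(X=1|S=1) = e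
    (hrand : ∀ f : α × ℝ × ℝ → ℝ, Measurable f →
      Integrable (fun ω => S ω * f (Z ω, Y0 ω, Y1 ω)) μ →
      ∫ ω, S ω * X ω * f (Z ω, Y0 ω, Y1 ω) ∂μ
        = e * ∫ ω, S ω * f (Z ω, Y0 ω, Y1 ω) ∂μ)
    -- ignorable participation with true sampling score w(Z) = P(S=1|Z)
    (hign : ∀ f : α × ℝ × ℝ → ℝ, Measurable f →
      Integrable (fun ω => f (Z ω, Y0 ω, Y1 ω)) μ →
      ∫ ω, S ω * f (Z ω, Y0 ω, Y1 ω) ∂μ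
        = ∫ ω, w (Z ω) * f (Z ω, Y0 ω, Y1 ω) ∂μ)
    (hY : ∀ ω, Y ω = X ω * Y1 ω + (1 - X ω) * Y0 ω)
    -- correctly specified outcome models m_x(Z) = E[Yˣ | Z]
    (m1 m0 : α → ℝ) (hm1 : Measurable m1) (hm0 : Measurable m0)
    (hm1correct : ∀ g : α → ℝ, Measurable g → (∃ C, ∀ z, |g z| ≤ C) →
      ∫ ω, g (Z ω) * Y1 ω ∂μ = ∫ ω, g (Z ω) * m1 (Z ω) ∂μ)
    (hm0correct : ∀ g : α → ℝ, Measurable g → (∃ C, ∀ z, |g z| ≤ C) →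
      ∫ ω, g (Z ω) * Y0 ω ∂μ = ∫ ω, g (Z ω) * m0 (Z ω) ∂μ)
    (Δ : ℝ) (hΔ : Δ = ∫ ω, (Y1 ω - Y0 ω) ∂μ)
    -- finite second moments of the two influence functions
    (hL2ipsw : MemLp (fun ω => S ω * X ω * Y ω / (w (Z ω) * e)
        - S ω * (1 - X ω) * Y ω / (w (Z ω) * (1 - e)) - Δ) 2 μ)
    (hL2dr : MemLp (fun ω => S ω * X ω * (Y ω - m1 (Z ω)) / (w (Z ω) * e)
        - S ω * (1 - X ω) * (Y ω - m0 (Z ω)) / (w (Z ω) * (1 - e))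
        + (m1 (Z ω) - m0 (Z ω)) - Δ) 2 μ) :
    variance (fun ω => S ω * X ω * (Y ω - m1 (Z ω)) / (w (Z ω) * e)
        - S ω * (1 - X ω) * (Y ω - m0 (Z ω)) / (w (Z ω) * (1 - e))
        + (m1 (Z ω) - m0 (Z ω)) - Δ) μ
      ≤ variance (fun ω => S ω * X ω * Y ω / (w (Z ω) * e)
        - S ω * (1 - X ω) * Y ω / (w (Z ω) * (1 - e)) - Δ) μ := by
  -- basic facts
  have hwpos : ∀ z, 0 < w z := fun z => hδ.trans (hwrange z).1
  have hwne : ∀ z, w z ≠ 0 := fun z => (hwpos z).ne'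
  have hene : e ≠ 0 := he0.ne'
  have h1ene : (1 : ℝ) - e ≠ 0 := by linarith
  have hS0 : ∀ ω, 0 ≤ S ω := fun ω => by rcases hSbin ω with h | h <;> simp [h]
  have hS1 : ∀ ω, S ω ≤ 1 := fun ω => by rcases hSbin ω with h | h <;> simp [h]
  have hX0 : ∀ ω, 0 ≤ X ω := fun ω => by rcases hXbin ω with h | h <;> simp [h]
  have hX1 : ∀ ω, X ω ≤ 1 := fun ω => by rcases hXbin ω with h | h <;> simp [h]
  set Φ : Ω → α × ℝ × ℝ := fun ω => (Z ω, Y0 ω, Y1 ω) with hΦdef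
  have hΦ : Measurable Φ := hZ.prodMk (hY0.prodMk hY1)
  -- transfer lemmas
  have hminpt : ∀ (g : Ω → ℝ) (f : α × ℝ × ℝ → ℝ) (n : ℕ), (∀ ω, g ω = 0 ∨ g ω = 1) →
      ∀ ω, min (g ω * f (Φ ω)) (n : ℝ) = g ω * min (f (Φ ω)) (n : ℝ) := by
    intro g f n hg ω
    rcases hg ω with h | h
    · rw [h, zero_mul, zero_mul]
      exact min_eq_left (by positivity)
    · rw [h, one_mul, one_mul]
  have trans1 : ∀ f : α × ℝ × ℝ → ℝ, Measurable f → (∀ p, 0 ≤ f p) →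
      Integrable (fun ω => S ω * X ω * f (Φ ω)) μ →
      Integrable (fun ω => S ω * f (Φ ω)) μ := by
    intro f hf hf0 hint
    refine aux_integrable_of_min μ _ (hS.mul (hf.comp hΦ))
      (fun ω => mul_nonneg (hS0 ω) (hf0 _)) ((1/e) * ∫ ω, S ω * X ω * f (Φ ω) ∂μ) ?_
    intro n
    have hfn : Measurable fun p : α × ℝ × ℝ => min (f p) (n : ℝ) := hf.min measurable_const
    have h1 : Integrable (fun ω => S ω * min (f (Φ ω)) (n : ℝ)) μ := by
      refine aux_bdd_integrable μ _ (hS.mul (hfn.comp hΦ)) ⟨n, fun ω => ?_⟩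
      rw [abs_mul, abs_of_nonneg (hS0 ω), abs_of_nonneg (le_min (hf0 _) n.cast_nonneg)]
      exact le_trans (mul_le_of_le_one_left (le_min (hf0 _) n.cast_nonneg) (hS1 ω))
        (min_le_right _ _)
    have h3 : Integrable (fun ω => S ω * X ω * min (f (Φ ω)) (n : ℝ)) μ := by
      refine aux_bdd_integrable μ _ ((hS.mul hX).mul (hfn.comp hΦ)) ⟨n, fun ω => ?_⟩
      rw [abs_mul, abs_of_nonneg (le_min (hf0 _) n.cast_nonneg)]
      refine le_trans (mul_le_of_le_one_left (le_min (hf0 _) n.cast_nonneg) ?_) (min_le_right _ _)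
      rw [abs_mul, abs_of_nonneg (hS0 ω), abs_of_nonneg (hX0 ω)]
      exact mul_le_one₀ (hS1 ω) (hX0 ω) (hX1 ω)
    have h2 := hrand _ hfn h1
    have hle : ∫ ω, S ω * X ω * min (f (Φ ω)) (n : ℝ) ∂μ ≤ ∫ ω, S ω * X ω * f (Φ ω) ∂μ := by
      refine integral_mono h3 hint fun ω => ?_
      exact mul_le_mul_of_nonneg_left (min_le_left _ _) (mul_nonneg (hS0 ω) (hX0 ω))
    calc ∫ ω, min (S ω * f (Φ ω)) (n : ℝ) ∂μ
        = ∫ ω, S ω * min (f (Φ ω)) (n : ℝ) ∂μ :=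
          integral_congr_ae (ae_of_all _ (hminpt S f n hSbin))
      _ = (1/e) * ∫ ω, S ω * X ω * min (f (Φ ω)) (n : ℝ) ∂μ := by
          rw [h2]; field_simp; rfl
      _ ≤ (1/e) * ∫ ω, S ω * X ω * f (Φ ω) ∂μ := by
          exact mul_le_mul_of_nonneg_left hle (by positivity)
  have trans1' : ∀ f : α × ℝ × ℝ → ℝ, Measurable f → (∀ p, 0 ≤ f p) →
      Integrable (fun ω => S ω * (1 - X ω) * f (Φ ω)) μ →
      Integrable (fun ω => S ω * f (Φ ω)) μ := by
    intro f hf hf0 hint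
    refine aux_integrable_of_min μ _ (hS.mul (hf.comp hΦ))
      (fun ω => mul_nonneg (hS0 ω) (hf0 _))
      ((1/(1-e)) * ∫ ω, S ω * (1 - X ω) * f (Φ ω) ∂μ) ?_
    intro n
    have hfn : Measurable fun p : α × ℝ × ℝ => min (f p) (n : ℝ) := hf.min measurable_const
    have h1 : Integrable (fun ω => S ω * min (f (Φ ω)) (n : ℝ)) μ := by
      refine aux_bdd_integrable μ _ (hS.mul (hfn.comp hΦ)) ⟨n, fun ω => ?_⟩
      rw [abs_mul, abs_of_nonneg (hS0 ω), abs_of_nonneg (le_min (hf0 _) n.cast_nonneg)]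
      exact le_trans (mul_le_of_le_one_left (le_min (hf0 _) n.cast_nonneg) (hS1 ω))
        (min_le_right _ _)
    have h3 : Integrable (fun ω => S ω * X ω * min (f (Φ ω)) (n : ℝ)) μ := by
      refine Integrable.mono' h1 ((hS.mul hX).mul (hfn.comp hΦ)).aestronglyMeasurable
        (ae_of_all _ fun ω => ?_)
      rw [Real.norm_eq_abs, abs_mul, abs_mul, abs_of_nonneg (hS0 ω), abs_of_nonneg (hX0 ω),
        abs_of_nonneg (le_min (hf0 _) n.cast_nonneg), mul_assoc]
      have hmn : 0 ≤ min (f (Φ ω)) (n : ℝ) := le_min (hf0 _) n.cast_nonneg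
      exact mul_le_mul_of_nonneg_left (mul_le_of_le_one_left hmn (hX1 ω)) (hS0 ω)
    have h2 := hrand _ hfn h1
    have hsub : ∫ ω, S ω * (1 - X ω) * min (f (Φ ω)) (n : ℝ) ∂μ
        = ∫ ω, S ω * min (f (Φ ω)) (n : ℝ) ∂μ - ∫ ω, S ω * X ω * min (f (Φ ω)) (n : ℝ) ∂μ := by
      rw [← integral_sub h1 h3]
      refine integral_congr_ae (ae_of_all _ fun ω => ?_)
      ring
    have h3' : Integrable (fun ω => S ω * (1 - X ω) * min (f (Φ ω)) (n : ℝ)) μ := by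
      refine Integrable.congr (h1.sub h3) (ae_of_all _ fun ω => ?_)
      simp only [Pi.sub_apply]
      ring
    have hle : ∫ ω, S ω * (1 - X ω) * min (f (Φ ω)) (n : ℝ) ∂μ
        ≤ ∫ ω, S ω * (1 - X ω) * f (Φ ω) ∂μ := by
      refine integral_mono h3' hint fun ω => ?_
      refine mul_le_mul_of_nonneg_left (min_le_left _ _) ?_
      have := hX1 ω
      exact mul_nonneg (hS0 ω) (by linarith)
    have heq : ∫ ω, min (S ω * f (Φ ω)) (n : ℝ) ∂μ
        = ∫ ω, S ω * min (f (Φ ω)) (n : ℝ) ∂μ :=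
      integral_congr_ae (ae_of_all _ (hminpt S f n hSbin))
    rw [heq]
    rw [h2] at hsub
    have h1e : (0:ℝ) < 1 - e := by linarith
    rw [div_mul_eq_mul_div, le_div_iff₀ h1e]
    linarith [hle, hsub]
  have trans2 : ∀ f : α × ℝ × ℝ → ℝ, Measurable f → (∀ p, 0 ≤ f p) →
      Integrable (fun ω => S ω * f (Φ ω)) μ →
      Integrable (fun ω => f (Φ ω)) μ := by
    intro f hf hf0 hint
    refine aux_integrable_of_min μ _ (hf.comp hΦ) (fun ω => hf0 _)
      ((1/δ) * ∫ ω, S ω * f (Φ ω) ∂μ) ?_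
    intro n
    have hfn : Measurable fun p : α × ℝ × ℝ => min (f p) (n : ℝ) := hf.min measurable_const
    have hminnn : ∀ ω, 0 ≤ min (f (Φ ω)) (n:ℝ) := fun ω => le_min (hf0 _) n.cast_nonneg
    have h0 : Integrable (fun ω => min (f (Φ ω)) (n : ℝ)) μ := by
      refine aux_bdd_integrable μ _ (hfn.comp hΦ) ⟨n, fun ω => ?_⟩
      rw [abs_of_nonneg (hminnn ω)]; exact min_le_right _ _
    have h1 : Integrable (fun ω => S ω * min (f (Φ ω)) (n : ℝ)) μ := by
      refine Integrable.mono' h0 (hS.mul (hfn.comp hΦ)).aestronglyMeasurable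
        (ae_of_all _ fun ω => ?_)
      rw [Real.norm_eq_abs, abs_mul, abs_of_nonneg (hS0 ω), abs_of_nonneg (hminnn ω)]
      exact mul_le_of_le_one_left (hminnn ω) (hS1 ω)
    have hw1 : Integrable (fun ω => w (Z ω) * min (f (Φ ω)) (n : ℝ)) μ := by
      refine Integrable.mono' h0 ((hwmeas.comp hZ).mul (hfn.comp hΦ)).aestronglyMeasurable
        (ae_of_all _ fun ω => ?_)
      rw [Real.norm_eq_abs, abs_mul, abs_of_nonneg (hwpos _).le, abs_of_nonneg (hminnn ω)]
      exact mul_le_of_le_one_left (hminnn ω) (hwrange _).2.le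
    have h2 := hign _ hfn h0
    have hδle : δ * ∫ ω, min (f (Φ ω)) (n : ℝ) ∂μ
        ≤ ∫ ω, w (Z ω) * min (f (Φ ω)) (n : ℝ) ∂μ := by
      rw [← smul_eq_mul, ← integral_smul]
      refine integral_mono (h0.smul δ) hw1 fun ω => ?_
      simp only [Pi.smul_apply, smul_eq_mul]
      exact mul_le_mul_of_nonneg_right (hwrange _).1.le (hminnn ω)
    have hle : ∫ ω, S ω * min (f (Φ ω)) (n : ℝ) ∂μ ≤ ∫ ω, S ω * f (Φ ω) ∂μ := by
      refine integral_mono h1 hint fun ω => ?_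
      exact mul_le_mul_of_nonneg_left (min_le_left _ _) (hS0 ω)
    rw [div_mul_eq_mul_div, le_div_iff₀ hδ]
    rw [h2] at hle
    linarith [hδle, hle]
  -- main integral identities
  have key : ∀ f : α × ℝ × ℝ → ℝ, Measurable f → Integrable (fun ω => f (Φ ω)) μ →
      (∫ ω, S ω * X ω * f (Φ ω) ∂μ = e * ∫ ω, w (Z ω) * f (Φ ω) ∂μ)
      ∧ (∫ ω, S ω * (1 - X ω) * f (Φ ω) ∂μ = (1 - e) * ∫ ω, w (Z ω) * f (Φ ω) ∂μ)
      ∧ (∫ ω, (1 - S ω) * f (Φ ω) ∂μ = ∫ ω, (1 - w (Z ω)) * f (Φ ω) ∂μ) := by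
    intro f hf hintf
    have hSf : Integrable (fun ω => S ω * f (Φ ω)) μ := by
      refine Integrable.mono' hintf.abs (hS.mul (hf.comp hΦ)).aestronglyMeasurable
        (ae_of_all _ fun ω => ?_)
      rw [Real.norm_eq_abs, abs_mul, abs_of_nonneg (hS0 ω)]
      exact mul_le_of_le_one_left (abs_nonneg _) (hS1 ω)
    have hSXf : Integrable (fun ω => S ω * X ω * f (Φ ω)) μ := by
      refine Integrable.mono' hintf.abs ((hS.mul hX).mul (hf.comp hΦ)).aestronglyMeasurable
        (ae_of_all _ fun ω => ?_)
      rw [Real.norm_eq_abs, abs_mul, abs_mul, abs_of_nonneg (hS0 ω), abs_of_nonneg (hX0 ω)]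
      exact mul_le_of_le_one_left (abs_nonneg _) (mul_le_one₀ (hS1 ω) (hX0 ω) (hX1 ω))
    have hwf : Integrable (fun ω => w (Z ω) * f (Φ ω)) μ := by
      refine Integrable.mono' hintf.abs ((hwmeas.comp hZ).mul (hf.comp hΦ)).aestronglyMeasurable
        (ae_of_all _ fun ω => ?_)
      rw [Real.norm_eq_abs, abs_mul, abs_of_nonneg (hwpos _).le]
      exact mul_le_of_le_one_left (abs_nonneg _) (hwrange _).2.le
    have h2 := hrand f hf hSf
    have h3 := hign f hf hintf
    refine ⟨by rw [h2, h3], ?_, ?_⟩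
    · have hsub : ∫ ω, S ω * (1 - X ω) * f (Φ ω) ∂μ
          = ∫ ω, S ω * f (Φ ω) ∂μ - ∫ ω, S ω * X ω * f (Φ ω) ∂μ := by
        rw [← integral_sub hSf hSXf]
        exact integral_congr_ae (ae_of_all _ fun ω => by ring)
      rw [hsub, h2, h3]; ring
    · have hsub : ∫ ω, (1 - S ω) * f (Φ ω) ∂μ
          = ∫ ω, f (Φ ω) ∂μ - ∫ ω, S ω * f (Φ ω) ∂μ := by
        rw [← integral_sub hintf hSf]
        exact integral_congr_ae (ae_of_all _ fun ω => by ring)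
      have hsub2 : ∫ ω, (1 - w (Z ω)) * f (Φ ω) ∂μ
          = ∫ ω, f (Φ ω) ∂μ - ∫ ω, w (Z ω) * f (Φ ω) ∂μ := by
        rw [← integral_sub hintf hwf]
        exact integral_congr_ae (ae_of_all _ fun ω => by ring)
      rw [hsub, hsub2, h3]
  -- L² facts
  have hSXY1 : MemLp (fun ω => S ω * X ω * Y1 ω) 2 μ := by
    refine MemLp.of_le_mul (c := 1) (hL2ipsw.add (memLp_const Δ))
      ((hS.mul hX).mul hY1).aestronglyMeasurable (ae_of_all _ fun ω => ?_)
    simp only [Pi.add_apply]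
    rw [Real.norm_eq_abs, Real.norm_eq_abs, one_mul]
    have hwe : 0 < w (Z ω) * e := mul_pos (hwpos _) he0
    have hwe1 : w (Z ω) * e ≤ 1 :=
      mul_le_one₀ (hwrange _).2.le he0.le he1.le
    rcases hSbin ω with hs | hs
    · rw [hs]; simpa using abs_nonneg _
    rcases hXbin ω with hx | hx
    · rw [hx]; simpa using abs_nonneg _
    · have hYY : Y ω = Y1 ω := by rw [hY ω, hx]; ring
      rw [hs, hx, hYY]
      have e2 : (1:ℝ) * 1 * Y1 ω / (w (Z ω) * e) - 1 * (1 - 1) * Y1 ω / (w (Z ω) * (1 - e))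
          - Δ + Δ = Y1 ω / (w (Z ω) * e) := by ring
      rw [e2, one_mul, one_mul, abs_div, abs_of_pos hwe, le_div_iff₀ hwe]
      exact mul_le_of_le_one_right (abs_nonneg _) hwe1
  have hintSXY1sq : Integrable (fun ω => S ω * X ω * Y1 ω ^ 2) μ := by
    refine Integrable.congr hSXY1.integrable_sq (ae_of_all _ fun ω => ?_)
    show (S ω * X ω * Y1 ω) ^ 2 = S ω * X ω * Y1 ω ^ 2
    rcases hSbin ω with hs | hs <;> rcases hXbin ω with hx | hx <;> rw [hs, hx] <;> ring
  have hY1sqint : Integrable (fun ω => Y1 ω ^ 2) μ := by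
    have hfmeas : Measurable fun p : α × ℝ × ℝ => p.2.2 ^ 2 :=
      (measurable_snd.comp measurable_snd).pow_const 2
    have h1 : Integrable (fun ω => S ω * X ω * (fun p : α × ℝ × ℝ => p.2.2 ^ 2) (Φ ω)) μ :=
      hintSXY1sq
    exact trans2 _ hfmeas (fun p => sq_nonneg _) (trans1 _ hfmeas (fun p => sq_nonneg _) h1)
  have hY1L2 : MemLp Y1 2 μ :=
    (memLp_two_iff_integrable_sq hY1.aestronglyMeasurable).2 hY1sqint
  have hSXY0 : MemLp (fun ω => S ω * (1 - X ω) * Y0 ω) 2 μ := by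
    refine MemLp.of_le_mul (c := 1) (hL2ipsw.add (memLp_const Δ))
      ((hS.mul (measurable_const.sub hX)).mul hY0).aestronglyMeasurable (ae_of_all _ fun ω => ?_)
    simp only [Pi.add_apply]
    rw [Real.norm_eq_abs, Real.norm_eq_abs, one_mul]
    have hwe : 0 < w (Z ω) * (1 - e) := mul_pos (hwpos _) (by linarith)
    have hwe1 : w (Z ω) * (1 - e) ≤ 1 :=
      mul_le_one₀ (hwrange _).2.le (by linarith) (by linarith)
    rcases hSbin ω with hs | hs
    · rw [hs]; simpa using abs_nonneg _
    rcases hXbin ω with hx | hx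
    · have hYY : Y ω = Y0 ω := by rw [hY ω, hx]; ring
      rw [hs, hx, hYY]
      have e2 : (1:ℝ) * 0 * Y0 ω / (w (Z ω) * e) - 1 * (1 - 0) * Y0 ω / (w (Z ω) * (1 - e))
          - Δ + Δ = -(Y0 ω / (w (Z ω) * (1 - e))) := by ring
      rw [e2, abs_neg, abs_div, abs_of_pos hwe, le_div_iff₀ hwe,
        show (1:ℝ) * (1 - 0) * Y0 ω = Y0 ω from by ring]
      exact mul_le_of_le_one_right (abs_nonneg _) hwe1
    · rw [hx]; simpa using abs_nonneg _
  have hintSXY0sq : Integrable (fun ω => S ω * (1 - X ω) * Y0 ω ^ 2) μ := by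
    refine Integrable.congr hSXY0.integrable_sq (ae_of_all _ fun ω => ?_)
    show (S ω * (1 - X ω) * Y0 ω) ^ 2 = S ω * (1 - X ω) * Y0 ω ^ 2
    rcases hSbin ω with hs | hs <;> rcases hXbin ω with hx | hx <;> rw [hs, hx] <;> ring
  have hY0sqint : Integrable (fun ω => Y0 ω ^ 2) μ := by
    have hfmeas : Measurable fun p : α × ℝ × ℝ => p.2.1 ^ 2 :=
      (measurable_fst.comp measurable_snd).pow_const 2
    have h1 : Integrable (fun ω => S ω * (1 - X ω) * (fun p : α × ℝ × ℝ => p.2.1 ^ 2) (Φ ω)) μ :=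
      hintSXY0sq
    exact trans2 _ hfmeas (fun p => sq_nonneg _) (trans1' _ hfmeas (fun p => sq_nonneg _) h1)
  have hY0L2 : MemLp Y0 2 μ :=
    (memLp_two_iff_integrable_sq hY0.aestronglyMeasurable).2 hY0sqint
  have hY1int : Integrable Y1 μ := hY1L2.integrable one_le_two
  have hY0int : Integrable Y0 μ := hY0L2.integrable one_le_two
  have hm1L2 : MemLp (fun ω => m1 (Z ω)) 2 μ := by
    refine (memLp_two_iff_integrable_sq (hm1.comp hZ).aestronglyMeasurable).2 ?_
    refine aux_integrable_of_min μ _ ((hm1.comp hZ).pow_const 2)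
      (fun ω => sq_nonneg _) (∫ ω, Y1 ω ^ 2 ∂μ) ?_
    intro n
    set g : α → ℝ := fun z => if m1 z = 0 then 0 else min (m1 z ^ 2) (n : ℝ) / m1 z with hgdef
    have hgmeas : Measurable g :=
      Measurable.ite (hm1 (measurableSet_singleton 0)) measurable_const
        (((hm1.pow_const 2).min measurable_const).div hm1)
    have hg2 : ∀ z, g z ^ 2 ≤ min (m1 z ^ 2) (n : ℝ) := by
      intro z
      simp only [hgdef]
      by_cases hz : m1 z = 0
      · rw [if_pos hz]
        simpa using le_min (sq_nonneg _) (n.cast_nonneg : (0:ℝ) ≤ (n:ℝ))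
      · rw [if_neg hz]
        have h1 : 0 ≤ min (m1 z ^ 2) (n:ℝ) := le_min (sq_nonneg _) n.cast_nonneg
        have h2 : min (m1 z ^ 2) (n:ℝ) ≤ m1 z ^ 2 := min_le_left _ _
        have h3 : 0 < m1 z ^ 2 := by positivity
        rw [div_pow, div_le_iff₀ h3]
        nlinarith [mul_le_mul_of_nonneg_left h2 h1]
    have hgbd : ∀ z, |g z| ≤ Real.sqrt n := by
      intro z
      rw [← Real.sqrt_sq_eq_abs]
      exact Real.sqrt_le_sqrt ((hg2 z).trans (min_le_right _ _))
    have heq := hm1correct g hgmeas ⟨Real.sqrt n, hgbd⟩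
    have hpt1 : ∀ ω, g (Z ω) * m1 (Z ω) = min (m1 (Z ω) ^ 2) (n:ℝ) := by
      intro ω
      simp only [hgdef]
      by_cases hz : m1 (Z ω) = 0
      · rw [if_pos hz, zero_mul, hz]
        rw [show ((0:ℝ) ^ 2) = 0 from by norm_num,
          min_eq_left (n.cast_nonneg : (0:ℝ) ≤ (n:ℝ))]
      · rw [if_neg hz, div_mul_cancel₀ _ hz]
    have int_min : Integrable (fun ω => min (m1 (Z ω) ^ 2) (n:ℝ)) μ := by
      refine aux_bdd_integrable μ _ (((hm1.comp hZ).pow_const 2).min measurable_const)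
        ⟨n, fun ω => ?_⟩
      rw [abs_of_nonneg (le_min (sq_nonneg _) n.cast_nonneg)]
      exact min_le_right _ _
    have int_gY1 : Integrable (fun ω => g (Z ω) * Y1 ω) μ := by
      refine Integrable.bdd_mul hY1int (hgmeas.comp hZ).aestronglyMeasurable
        (c := Real.sqrt n) (ae_of_all _ fun ω => ?_)
      simpa [Real.norm_eq_abs] using hgbd (Z ω)
    have hpt2 : ∀ ω, g (Z ω) * Y1 ω ≤ (min (m1 (Z ω) ^ 2) (n:ℝ) + Y1 ω ^ 2) / 2 := by
      intro ω
      nlinarith [sq_nonneg (g (Z ω) - Y1 ω), hg2 (Z ω)]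
    have hle : ∫ ω, min (m1 (Z ω) ^ 2) (n:ℝ) ∂μ
        ≤ (∫ ω, min (m1 (Z ω) ^ 2) (n:ℝ) ∂μ + ∫ ω, Y1 ω ^ 2 ∂μ) / 2 := by
      calc ∫ ω, min (m1 (Z ω) ^ 2) (n:ℝ) ∂μ
          = ∫ ω, g (Z ω) * m1 (Z ω) ∂μ :=
            (integral_congr_ae (ae_of_all _ hpt1)).symm
        _ = ∫ ω, g (Z ω) * Y1 ω ∂μ := heq.symm
        _ ≤ ∫ ω, (min (m1 (Z ω) ^ 2) (n:ℝ) + Y1 ω ^ 2) / 2 ∂μ :=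
            integral_mono int_gY1 ((int_min.add hY1sqint).div_const 2) hpt2
        _ = (∫ ω, min (m1 (Z ω) ^ 2) (n:ℝ) ∂μ + ∫ ω, Y1 ω ^ 2 ∂μ) / 2 := by
            rw [integral_div, integral_add int_min hY1sqint]
    show ∫ ω, min (m1 (Z ω) ^ 2) (n:ℝ) ∂μ ≤ ∫ ω, Y1 ω ^ 2 ∂μ
    linarith [hle]
  have hm0L2 : MemLp (fun ω => m0 (Z ω)) 2 μ := by
    refine (memLp_two_iff_integrable_sq (hm0.comp hZ).aestronglyMeasurable).2 ?_
    refine aux_integrable_of_min μ _ ((hm0.comp hZ).pow_const 2)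
      (fun ω => sq_nonneg _) (∫ ω, Y0 ω ^ 2 ∂μ) ?_
    intro n
    set g : α → ℝ := fun z => if m0 z = 0 then 0 else min (m0 z ^ 2) (n : ℝ) / m0 z with hgdef
    have hgmeas : Measurable g :=
      Measurable.ite (hm0 (measurableSet_singleton 0)) measurable_const
        (((hm0.pow_const 2).min measurable_const).div hm0)
    have hg2 : ∀ z, g z ^ 2 ≤ min (m0 z ^ 2) (n : ℝ) := by
      intro z
      simp only [hgdef]
      by_cases hz : m0 z = 0
      · rw [if_pos hz]
        simpa using le_min (sq_nonneg _) (n.cast_nonneg : (0:ℝ) ≤ (n:ℝ))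
      · rw [if_neg hz]
        have h1 : 0 ≤ min (m0 z ^ 2) (n:ℝ) := le_min (sq_nonneg _) n.cast_nonneg
        have h2 : min (m0 z ^ 2) (n:ℝ) ≤ m0 z ^ 2 := min_le_left _ _
        have h3 : 0 < m0 z ^ 2 := by positivity
        rw [div_pow, div_le_iff₀ h3]
        nlinarith [mul_le_mul_of_nonneg_left h2 h1]
    have hgbd : ∀ z, |g z| ≤ Real.sqrt n := by
      intro z
      rw [← Real.sqrt_sq_eq_abs]
      exact Real.sqrt_le_sqrt ((hg2 z).trans (min_le_right _ _))
    have heq := hm0correct g hgmeas ⟨Real.sqrt n, hgbd⟩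
    have hpt1 : ∀ ω, g (Z ω) * m0 (Z ω) = min (m0 (Z ω) ^ 2) (n:ℝ) := by
      intro ω
      simp only [hgdef]
      by_cases hz : m0 (Z ω) = 0
      · rw [if_pos hz, zero_mul, hz]
        rw [show ((0:ℝ) ^ 2) = 0 from by norm_num,
          min_eq_left (n.cast_nonneg : (0:ℝ) ≤ (n:ℝ))]
      · rw [if_neg hz, div_mul_cancel₀ _ hz]
    have int_min : Integrable (fun ω => min (m0 (Z ω) ^ 2) (n:ℝ)) μ := by
      refine aux_bdd_integrable μ _ (((hm0.comp hZ).pow_const 2).min measurable_const)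
        ⟨n, fun ω => ?_⟩
      rw [abs_of_nonneg (le_min (sq_nonneg _) n.cast_nonneg)]
      exact min_le_right _ _
    have int_gY0 : Integrable (fun ω => g (Z ω) * Y0 ω) μ := by
      refine Integrable.bdd_mul hY0int (hgmeas.comp hZ).aestronglyMeasurable
        (c := Real.sqrt n) (ae_of_all _ fun ω => ?_)
      simpa [Real.norm_eq_abs] using hgbd (Z ω)
    have hpt2 : ∀ ω, g (Z ω) * Y0 ω ≤ (min (m0 (Z ω) ^ 2) (n:ℝ) + Y0 ω ^ 2) / 2 := by
      intro ω
      nlinarith [sq_nonneg (g (Z ω) - Y0 ω), hg2 (Z ω)]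
    have hle : ∫ ω, min (m0 (Z ω) ^ 2) (n:ℝ) ∂μ
        ≤ (∫ ω, min (m0 (Z ω) ^ 2) (n:ℝ) ∂μ + ∫ ω, Y0 ω ^ 2 ∂μ) / 2 := by
      calc ∫ ω, min (m0 (Z ω) ^ 2) (n:ℝ) ∂μ
          = ∫ ω, g (Z ω) * m0 (Z ω) ∂μ :=
            (integral_congr_ae (ae_of_all _ hpt1)).symm
        _ = ∫ ω, g (Z ω) * Y0 ω ∂μ := heq.symm
        _ ≤ ∫ ω, (min (m0 (Z ω) ^ 2) (n:ℝ) + Y0 ω ^ 2) / 2 ∂μ :=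
            integral_mono int_gY0 ((int_min.add hY0sqint).div_const 2) hpt2
        _ = (∫ ω, min (m0 (Z ω) ^ 2) (n:ℝ) ∂μ + ∫ ω, Y0 ω ^ 2 ∂μ) / 2 := by
            rw [integral_div, integral_add int_min hY0sqint]
    show ∫ ω, min (m0 (Z ω) ^ 2) (n:ℝ) ∂μ ≤ ∫ ω, Y0 ω ^ 2 ∂μ
    linarith [hle]
  -- products of L² functions are integrable
  have hmulL2 : ∀ f g : Ω → ℝ, MemLp f 2 μ → MemLp g 2 μ →
      Integrable (fun ω => f ω * g ω) μ := by
    intro f g hf hg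
    refine Integrable.mono' (((hf.integrable_sq.add hg.integrable_sq)).div_const 2)
      (hf.aestronglyMeasurable.mul hg.aestronglyMeasurable) (ae_of_all _ fun ω => ?_)
    simp only [Pi.add_apply, Pi.div_apply]
    rw [Real.norm_eq_abs, abs_mul]
    nlinarith [sq_nonneg (|f ω| - |g ω|), abs_nonneg (f ω), abs_nonneg (g ω),
      sq_abs (f ω), sq_abs (g ω)]
  have hbdd2 : ∀ b f : Ω → ℝ, Measurable b → (∃ C, ∀ ω, |b ω| ≤ C) → MemLp f 2 μ →
      MemLp (fun ω => b ω * f ω) 2 μ := by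
    intro b f hb hbC hf
    obtain ⟨C, hC⟩ := hbC
    refine MemLp.of_le_mul (c := C) hf (hb.aestronglyMeasurable.mul hf.aestronglyMeasurable)
      (ae_of_all _ fun ω => ?_)
    rw [Real.norm_eq_abs, Real.norm_eq_abs, abs_mul]
    exact mul_le_mul_of_nonneg_right (hC ω) (abs_nonneg _)
  -- extended outcome-model identities
  have hm1ext : ∀ g : α → ℝ, Measurable g → Integrable (fun ω => g (Z ω) * Y1 ω) μ →
      Integrable (fun ω => g (Z ω) * m1 (Z ω)) μ →
      ∫ ω, g (Z ω) * Y1 ω ∂μ = ∫ ω, g (Z ω) * m1 (Z ω) ∂μ := by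
    intro g hg hint1 hint2
    have hgn : ∀ n : ℕ, ∫ ω, max (min (g (Z ω)) (n:ℝ)) (-(n:ℝ)) * Y1 ω ∂μ
        = ∫ ω, max (min (g (Z ω)) (n:ℝ)) (-(n:ℝ)) * m1 (Z ω) ∂μ := by
      intro n
      refine hm1correct (fun z => max (min (g z) (n:ℝ)) (-(n:ℝ)))
        ((hg.min measurable_const).max measurable_const) ⟨n, fun z => ?_⟩
      rw [abs_le]
      exact ⟨le_max_right _ _,
        max_le (min_le_right _ _) (by simpa using (n.cast_nonneg : (0:ℝ) ≤ (n:ℝ)))⟩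
    have hmeas1 : ∀ n : ℕ, AEStronglyMeasurable
        (fun ω => max (min (g (Z ω)) (n:ℝ)) (-(n:ℝ)) * Y1 ω) μ :=
      fun n => ((((hg.comp hZ).min measurable_const).max measurable_const).mul
        hY1).aestronglyMeasurable
    have hmeas2 : ∀ n : ℕ, AEStronglyMeasurable
        (fun ω => max (min (g (Z ω)) (n:ℝ)) (-(n:ℝ)) * m1 (Z ω)) μ :=
      fun n => ((((hg.comp hZ).min measurable_const).max measurable_const).mul
        (hm1.comp hZ)).aestronglyMeasurable
    have htend1 : Tendsto (fun n : ℕ => ∫ ω, max (min (g (Z ω)) (n:ℝ)) (-(n:ℝ)) * Y1 ω ∂μ)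
        atTop (nhds (∫ ω, g (Z ω) * Y1 ω ∂μ)) := by
      refine tendsto_integral_of_dominated_convergence (fun ω => |g (Z ω) * Y1 ω|)
        hmeas1 hint1.abs (fun n => ae_of_all _ fun ω => ?_) (ae_of_all _ fun ω => ?_)
      · simp only [Real.norm_eq_abs, abs_mul]
        exact mul_le_mul_of_nonneg_right (aux_clamp_abs_le _ _ n.cast_nonneg) (abs_nonneg _)
      · refine tendsto_atTop_of_eventually_const (i₀ := Nat.ceil |g (Z ω)|) fun n hn => ?_
        rw [aux_clamp_eq _ _ (le_trans (Nat.le_ceil _) (Nat.cast_le.2 hn))]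
    have htend2 : Tendsto (fun n : ℕ => ∫ ω, max (min (g (Z ω)) (n:ℝ)) (-(n:ℝ)) * m1 (Z ω) ∂μ)
        atTop (nhds (∫ ω, g (Z ω) * m1 (Z ω) ∂μ)) := by
      refine tendsto_integral_of_dominated_convergence (fun ω => |g (Z ω) * m1 (Z ω)|)
        hmeas2 hint2.abs (fun n => ae_of_all _ fun ω => ?_) (ae_of_all _ fun ω => ?_)
      · simp only [Real.norm_eq_abs, abs_mul]
        exact mul_le_mul_of_nonneg_right (aux_clamp_abs_le _ _ n.cast_nonneg) (abs_nonneg _)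
      · refine tendsto_atTop_of_eventually_const (i₀ := Nat.ceil |g (Z ω)|) fun n hn => ?_
        rw [aux_clamp_eq _ _ (le_trans (Nat.le_ceil _) (Nat.cast_le.2 hn))]
    rw [funext hgn] at htend1
    exact tendsto_nhds_unique htend1 htend2
  have hm0ext : ∀ g : α → ℝ, Measurable g → Integrable (fun ω => g (Z ω) * Y0 ω) μ →
      Integrable (fun ω => g (Z ω) * m0 (Z ω)) μ →
      ∫ ω, g (Z ω) * Y0 ω ∂μ = ∫ ω, g (Z ω) * m0 (Z ω) ∂μ := by
    intro g hg hint1 hint2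
    have hgn : ∀ n : ℕ, ∫ ω, max (min (g (Z ω)) (n:ℝ)) (-(n:ℝ)) * Y0 ω ∂μ
        = ∫ ω, max (min (g (Z ω)) (n:ℝ)) (-(n:ℝ)) * m0 (Z ω) ∂μ := by
      intro n
      refine hm0correct (fun z => max (min (g z) (n:ℝ)) (-(n:ℝ)))
        ((hg.min measurable_const).max measurable_const) ⟨n, fun z => ?_⟩
      rw [abs_le]
      exact ⟨le_max_right _ _,
        max_le (min_le_right _ _) (by simpa using (n.cast_nonneg : (0:ℝ) ≤ (n:ℝ)))⟩
    have hmeas1 : ∀ n : ℕ, AEStronglyMeasurable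
        (fun ω => max (min (g (Z ω)) (n:ℝ)) (-(n:ℝ)) * Y0 ω) μ :=
      fun n => ((((hg.comp hZ).min measurable_const).max measurable_const).mul
        hY0).aestronglyMeasurable
    have hmeas2 : ∀ n : ℕ, AEStronglyMeasurable
        (fun ω => max (min (g (Z ω)) (n:ℝ)) (-(n:ℝ)) * m0 (Z ω)) μ :=
      fun n => ((((hg.comp hZ).min measurable_const).max measurable_const).mul
        (hm0.comp hZ)).aestronglyMeasurable
    have htend1 : Tendsto (fun n : ℕ => ∫ ω, max (min (g (Z ω)) (n:ℝ)) (-(n:ℝ)) * Y0 ω ∂μ)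
        atTop (nhds (∫ ω, g (Z ω) * Y0 ω ∂μ)) := by
      refine tendsto_integral_of_dominated_convergence (fun ω => |g (Z ω) * Y0 ω|)
        hmeas1 hint1.abs (fun n => ae_of_all _ fun ω => ?_) (ae_of_all _ fun ω => ?_)
      · simp only [Real.norm_eq_abs, abs_mul]
        exact mul_le_mul_of_nonneg_right (aux_clamp_abs_le _ _ n.cast_nonneg) (abs_nonneg _)
      · refine tendsto_atTop_of_eventually_const (i₀ := Nat.ceil |g (Z ω)|) fun n hn => ?_
        rw [aux_clamp_eq _ _ (le_trans (Nat.le_ceil _) (Nat.cast_le.2 hn))]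
    have htend2 : Tendsto (fun n : ℕ => ∫ ω, max (min (g (Z ω)) (n:ℝ)) (-(n:ℝ)) * m0 (Z ω) ∂μ)
        atTop (nhds (∫ ω, g (Z ω) * m0 (Z ω) ∂μ)) := by
      refine tendsto_integral_of_dominated_convergence (fun ω => |g (Z ω) * m0 (Z ω)|)
        hmeas2 hint2.abs (fun n => ae_of_all _ fun ω => ?_) (ae_of_all _ fun ω => ?_)
      · simp only [Real.norm_eq_abs, abs_mul]
        exact mul_le_mul_of_nonneg_right (aux_clamp_abs_le _ _ n.cast_nonneg) (abs_nonneg _)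
      · refine tendsto_atTop_of_eventually_const (i₀ := Nat.ceil |g (Z ω)|) fun n hn => ?_
        rw [aux_clamp_eq _ _ (le_trans (Nat.le_ceil _) (Nat.cast_le.2 hn))]
    rw [funext hgn] at htend1
    exact tendsto_nhds_unique htend1 htend2
  -- name the influence functions
  set φI : Ω → ℝ := fun ω => S ω * X ω * Y ω / (w (Z ω) * e)
      - S ω * (1 - X ω) * Y ω / (w (Z ω) * (1 - e)) - Δ with hφI
  set φD : Ω → ℝ := fun ω => S ω * X ω * (Y ω - m1 (Z ω)) / (w (Z ω) * e)
      - S ω * (1 - X ω) * (Y ω - m0 (Z ω)) / (w (Z ω) * (1 - e))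
      + (m1 (Z ω) - m0 (Z ω)) - Δ with hφD
  -- auxiliary functions of z
  set G1 : α → ℝ := fun z => (1 / (w z * e) - 1) * m1 z + m0 z with hG1
  set G0 : α → ℝ := fun z => m1 z + (1 / (w z * (1 - e)) - 1) * m0 z with hG0
  set K : α → ℝ := fun z => m1 z - m0 z - Δ with hK
  have hc1meas : Measurable fun z => 1 / (w z * e) - 1 :=
    (measurable_const.div (hwmeas.mul_const e)).sub measurable_const
  have hc0meas : Measurable fun z => 1 / (w z * (1 - e)) - 1 :=
    (measurable_const.div (hwmeas.mul_const (1 - e))).sub measurable_const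
  have hG1meas : Measurable G1 := (hc1meas.mul hm1).add hm0
  have hG0meas : Measurable G0 := hm1.add (hc0meas.mul hm0)
  have hKmeas : Measurable K := (hm1.sub hm0).sub measurable_const
  have hc1bd : ∀ z, |1 / (w z * e) - 1| ≤ 1 / (δ * e) + 1 := by
    intro z
    have h1 : 0 < w z * e := mul_pos (hwpos z) he0
    have h2 : δ * e ≤ w z * e := mul_le_mul_of_nonneg_right (hwrange z).1.le he0.le
    have h3 : 1 / (w z * e) ≤ 1 / (δ * e) := one_div_le_one_div_of_le (mul_pos hδ he0) h2
    have h4 := abs_sub (1 / (w z * e)) 1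
    rw [abs_of_pos (one_div_pos.2 h1), abs_one] at h4
    linarith
  have hc0bd : ∀ z, |1 / (w z * (1 - e)) - 1| ≤ 1 / (δ * (1 - e)) + 1 := by
    intro z
    have h1e : (0:ℝ) < 1 - e := by linarith
    have h1 : 0 < w z * (1 - e) := mul_pos (hwpos z) h1e
    have h2 : δ * (1 - e) ≤ w z * (1 - e) := mul_le_mul_of_nonneg_right (hwrange z).1.le h1e.le
    have h3 : 1 / (w z * (1 - e)) ≤ 1 / (δ * (1 - e)) :=
      one_div_le_one_div_of_le (mul_pos hδ h1e) h2
    have h4 := abs_sub (1 / (w z * (1 - e))) 1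
    rw [abs_of_pos (one_div_pos.2 h1), abs_one] at h4
    linarith
  have hG1L2 : MemLp (fun ω => G1 (Z ω)) 2 μ := by
    have h1 : MemLp (fun ω => (1 / (w (Z ω) * e) - 1) * m1 (Z ω)) 2 μ :=
      hbdd2 _ _ (hc1meas.comp hZ) ⟨1 / (δ * e) + 1, fun ω => hc1bd (Z ω)⟩ hm1L2
    exact h1.add hm0L2
  have hG0L2 : MemLp (fun ω => G0 (Z ω)) 2 μ := by
    have h1 : MemLp (fun ω => (1 / (w (Z ω) * (1 - e)) - 1) * m0 (Z ω)) 2 μ :=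
      hbdd2 _ _ (hc0meas.comp hZ) ⟨1 / (δ * (1 - e)) + 1, fun ω => hc0bd (Z ω)⟩ hm0L2
    exact hm1L2.add h1
  have hKL2 : MemLp (fun ω => K (Z ω)) 2 μ := (hm1L2.sub hm0L2).sub (memLp_const Δ)
  -- the three pieces of the cross product
  set F1 : α × ℝ × ℝ → ℝ :=
    fun p => ((p.2.2 - m1 p.1) / (w p.1 * e) + K p.1) * G1 p.1 with hF1
  set F0 : α × ℝ × ℝ → ℝ :=
    fun p => (-((p.2.1 - m0 p.1) / (w p.1 * (1 - e))) + K p.1) * (-(G0 p.1)) with hF0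
  set FC : α × ℝ × ℝ → ℝ := fun p => K p.1 * (m0 p.1 - m1 p.1) with hFC
  have hF1meas : Measurable F1 :=
    ((((measurable_snd.comp measurable_snd).sub (hm1.comp measurable_fst)).div
      ((hwmeas.comp measurable_fst).mul_const e)).add (hKmeas.comp measurable_fst)).mul
      (hG1meas.comp measurable_fst)
  have hF0meas : Measurable F0 :=
    (((((measurable_fst.comp measurable_snd).sub (hm0.comp measurable_fst)).div
      ((hwmeas.comp measurable_fst).mul_const (1 - e))).neg.add
      (hKmeas.comp measurable_fst)).mul (hG0meas.comp measurable_fst).neg)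
  have hFCmeas : Measurable FC :=
    (hKmeas.comp measurable_fst).mul ((hm0.comp measurable_fst).sub (hm1.comp measurable_fst))
  have hintF1 : Integrable (fun ω => F1 (Φ ω)) μ := by
    have h1 : Integrable (fun ω => (1 / (w (Z ω) * e)) * ((Y1 ω - m1 (Z ω)) * G1 (Z ω))) μ := by
      refine Integrable.bdd_mul (hmulL2 _ _ (hY1L2.sub hm1L2) hG1L2)
        ((measurable_const.div ((hwmeas.comp hZ).mul_const e))).aestronglyMeasurable
        (c := 1 / (δ * e)) (ae_of_all _ fun ω => ?_)
      rw [Real.norm_eq_abs, abs_of_pos (one_div_pos.2 (mul_pos (hwpos _) he0))]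
      exact one_div_le_one_div_of_le (mul_pos hδ he0)
        (mul_le_mul_of_nonneg_right (hwrange _).1.le he0.le)
    have h2 : Integrable (fun ω => K (Z ω) * G1 (Z ω)) μ := hmulL2 _ _ hKL2 hG1L2
    refine Integrable.congr (h1.add h2) (ae_of_all _ fun ω => ?_)
    simp only [Pi.add_apply, hF1, hΦdef]
    ring
  have hintF0 : Integrable (fun ω => F0 (Φ ω)) μ := by
    have h1 : Integrable
        (fun ω => (1 / (w (Z ω) * (1 - e))) * ((Y0 ω - m0 (Z ω)) * G0 (Z ω))) μ := by
      refine Integrable.bdd_mul (hmulL2 _ _ (hY0L2.sub hm0L2) hG0L2)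
        ((measurable_const.div ((hwmeas.comp hZ).mul_const (1 - e)))).aestronglyMeasurable
        (c := 1 / (δ * (1 - e))) (ae_of_all _ fun ω => ?_)
      have h1e : (0:ℝ) < 1 - e := by linarith
      rw [Real.norm_eq_abs, abs_of_pos (one_div_pos.2 (mul_pos (hwpos _) h1e))]
      exact one_div_le_one_div_of_le (mul_pos hδ h1e)
        (mul_le_mul_of_nonneg_right (hwrange _).1.le h1e.le)
    have h2 : Integrable (fun ω => K (Z ω) * (-(G0 (Z ω)))) μ :=
      hmulL2 _ _ hKL2 hG0L2.neg
    refine Integrable.congr (h1.add h2) (ae_of_all _ fun ω => ?_)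
    simp only [Pi.add_apply, hF0, hΦdef]
    ring
  have hintFC : Integrable (fun ω => FC (Φ ω)) μ := by
    have h2 : Integrable (fun ω => K (Z ω) * (m0 (Z ω) - m1 (Z ω))) μ :=
      hmulL2 _ _ hKL2 (hm0L2.sub hm1L2)
    refine Integrable.congr h2 (ae_of_all _ fun ω => ?_)
    simp only [hFC, hΦdef]
  -- pointwise decomposition of the cross term
  have claimA : ∀ ω, φD ω * (φI ω - φD ω)
      = S ω * X ω * F1 (Φ ω) + S ω * (1 - X ω) * F0 (Φ ω) + (1 - S ω) * FC (Φ ω) := by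
    intro ω
    have hw0 : w (Z ω) ≠ 0 := hwne _
    simp only [hφI, hφD, hF1, hF0, hFC, hG1, hG0, hK, hΦdef]
    rcases hSbin ω with hs | hs <;> rcases hXbin ω with hx | hx <;>
      rw [hY ω, hs, hx] <;> field_simp <;>
      (first | ring1 | (left; ring1) | exact Or.inl trivial)
  have claimC : ∀ ω, e * (w (Z ω) * F1 (Φ ω)) + (1 - e) * (w (Z ω) * F0 (Φ ω))
      + (1 - w (Z ω)) * FC (Φ ω)
      = (Y1 ω - m1 (Z ω)) * G1 (Z ω) + (Y0 ω - m0 (Z ω)) * G0 (Z ω) := by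
    intro ω
    have hw0 : w (Z ω) ≠ 0 := hwne _
    simp only [hF1, hF0, hFC, hG1, hG0, hK, hΦdef]
    field_simp
    ring
  -- integrability of the localized pieces
  have hSXmul : ∀ f : α × ℝ × ℝ → ℝ, Measurable f → Integrable (fun ω => f (Φ ω)) μ →
      Integrable (fun ω => S ω * X ω * f (Φ ω)) μ := by
    intro f hf hintf
    refine Integrable.mono' hintf.abs ((hS.mul hX).mul (hf.comp hΦ)).aestronglyMeasurable
      (ae_of_all _ fun ω => ?_)
    rw [Real.norm_eq_abs, abs_mul, abs_mul, abs_of_nonneg (hS0 ω), abs_of_nonneg (hX0 ω)]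
    exact mul_le_of_le_one_left (abs_nonneg _) (mul_le_one₀ (hS1 ω) (hX0 ω) (hX1 ω))
  have hS1Xmul : ∀ f : α × ℝ × ℝ → ℝ, Measurable f → Integrable (fun ω => f (Φ ω)) μ →
      Integrable (fun ω => S ω * (1 - X ω) * f (Φ ω)) μ := by
    intro f hf hintf
    refine Integrable.mono' hintf.abs
      ((hS.mul (measurable_const.sub hX)).mul (hf.comp hΦ)).aestronglyMeasurable
      (ae_of_all _ fun ω => ?_)
    rw [Real.norm_eq_abs, abs_mul, abs_mul, abs_of_nonneg (hS0 ω),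
      abs_of_nonneg (by linarith [hX1 ω] : (0:ℝ) ≤ 1 - X ω)]
    exact mul_le_of_le_one_left (abs_nonneg _)
      (mul_le_one₀ (hS1 ω) (by linarith [hX1 ω]) (by linarith [hX0 ω]))
  have h1Smul : ∀ f : α × ℝ × ℝ → ℝ, Measurable f → Integrable (fun ω => f (Φ ω)) μ →
      Integrable (fun ω => (1 - S ω) * f (Φ ω)) μ := by
    intro f hf hintf
    refine Integrable.mono' hintf.abs
      ((measurable_const.sub hS).mul (hf.comp hΦ)).aestronglyMeasurable
      (ae_of_all _ fun ω => ?_)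
    rw [Real.norm_eq_abs, abs_mul, abs_of_nonneg (by linarith [hS1 ω] : (0:ℝ) ≤ 1 - S ω)]
    exact mul_le_of_le_one_left (abs_nonneg _) (by linarith [hS0 ω])
  have hwmul : ∀ f : α × ℝ × ℝ → ℝ, Measurable f → Integrable (fun ω => f (Φ ω)) μ →
      Integrable (fun ω => w (Z ω) * f (Φ ω)) μ := by
    intro f hf hintf
    refine Integrable.mono' hintf.abs
      ((hwmeas.comp hZ).mul (hf.comp hΦ)).aestronglyMeasurable (ae_of_all _ fun ω => ?_)
    rw [Real.norm_eq_abs, abs_mul, abs_of_nonneg (hwpos _).le]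
    exact mul_le_of_le_one_left (abs_nonneg _) (hwrange _).2.le
  have h1wmul : ∀ f : α × ℝ × ℝ → ℝ, Measurable f → Integrable (fun ω => f (Φ ω)) μ →
      Integrable (fun ω => (1 - w (Z ω)) * f (Φ ω)) μ := by
    intro f hf hintf
    refine Integrable.mono' hintf.abs
      ((measurable_const.sub (hwmeas.comp hZ)).mul (hf.comp hΦ)).aestronglyMeasurable
      (ae_of_all _ fun ω => ?_)
    rw [Real.norm_eq_abs, abs_mul,
      abs_of_nonneg (by linarith [(hwrange (Z ω)).2] : (0:ℝ) ≤ 1 - w (Z ω))]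
    exact mul_le_of_le_one_left (abs_nonneg _) (by linarith [(hwpos (Z ω))])
  -- the cross term vanishes
  have hintG1Y1 : Integrable (fun ω => G1 (Z ω) * Y1 ω) μ := hmulL2 _ _ hG1L2 hY1L2
  have hintG1m1 : Integrable (fun ω => G1 (Z ω) * m1 (Z ω)) μ := hmulL2 _ _ hG1L2 hm1L2
  have hintG0Y0 : Integrable (fun ω => G0 (Z ω) * Y0 ω) μ := hmulL2 _ _ hG0L2 hY0L2
  have hintG0m0 : Integrable (fun ω => G0 (Z ω) * m0 (Z ω)) μ := hmulL2 _ _ hG0L2 hm0L2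
  have hintT1 : Integrable (fun ω => (Y1 ω - m1 (Z ω)) * G1 (Z ω)) μ :=
    hmulL2 _ _ (hY1L2.sub hm1L2) hG1L2
  have hintT0 : Integrable (fun ω => (Y0 ω - m0 (Z ω)) * G0 (Z ω)) μ :=
    hmulL2 _ _ (hY0L2.sub hm0L2) hG0L2
  have e3 : ∫ ω, (Y1 ω - m1 (Z ω)) * G1 (Z ω) ∂μ = 0 := by
    have h := hm1ext G1 hG1meas hintG1Y1 hintG1m1
    have h2 : ∫ ω, (Y1 ω - m1 (Z ω)) * G1 (Z ω) ∂μ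
        = ∫ ω, G1 (Z ω) * Y1 ω ∂μ - ∫ ω, G1 (Z ω) * m1 (Z ω) ∂μ := by
      rw [← integral_sub hintG1Y1 hintG1m1]
      exact integral_congr_ae (ae_of_all _ fun ω => by ring)
    rw [h2, h, sub_self]
  have e4 : ∫ ω, (Y0 ω - m0 (Z ω)) * G0 (Z ω) ∂μ = 0 := by
    have h := hm0ext G0 hG0meas hintG0Y0 hintG0m0
    have h2 : ∫ ω, (Y0 ω - m0 (Z ω)) * G0 (Z ω) ∂μ
        = ∫ ω, G0 (Z ω) * Y0 ω ∂μ - ∫ ω, G0 (Z ω) * m0 (Z ω) ∂μ := by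
      rw [← integral_sub hintG0Y0 hintG0m0]
      exact integral_congr_ae (ae_of_all _ fun ω => by ring)
    rw [h2, h, sub_self]
  have hcross : ∫ ω, φD ω * (φI ω - φD ω) ∂μ = 0 := by
    have hA : Integrable (fun ω => S ω * X ω * F1 (Φ ω)) μ := hSXmul F1 hF1meas hintF1
    have hB : Integrable (fun ω => S ω * (1 - X ω) * F0 (Φ ω)) μ := hS1Xmul F0 hF0meas hintF0
    have hC : Integrable (fun ω => (1 - S ω) * FC (Φ ω)) μ := h1Smul FC hFCmeas hintFC
    have hAB : Integrable
        (fun ω => S ω * X ω * F1 (Φ ω) + S ω * (1 - X ω) * F0 (Φ ω)) μ := hA.add hB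
    have e1 : ∫ ω, φD ω * (φI ω - φD ω) ∂μ
        = ∫ ω, S ω * X ω * F1 (Φ ω) ∂μ + ∫ ω, S ω * (1 - X ω) * F0 (Φ ω) ∂μ
          + ∫ ω, (1 - S ω) * FC (Φ ω) ∂μ := by
      rw [integral_congr_ae (ae_of_all _ claimA), integral_add hAB hC, integral_add hA hB]
    rw [e1, (key F1 hF1meas hintF1).1, (key F0 hF0meas hintF0).2.1,
      (key FC hFCmeas hintFC).2.2]
    have hwA : Integrable (fun ω => e * (w (Z ω) * F1 (Φ ω))) μ :=
      (hwmul F1 hF1meas hintF1).const_mul e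
    have hwB : Integrable (fun ω => (1 - e) * (w (Z ω) * F0 (Φ ω))) μ :=
      (hwmul F0 hF0meas hintF0).const_mul (1 - e)
    have hwC : Integrable (fun ω => (1 - w (Z ω)) * FC (Φ ω)) μ := h1wmul FC hFCmeas hintFC
    have hwAB : Integrable (fun ω => e * (w (Z ω) * F1 (Φ ω))
        + (1 - e) * (w (Z ω) * F0 (Φ ω))) μ := hwA.add hwB
    have e2 : e * ∫ ω, w (Z ω) * F1 (Φ ω) ∂μ + (1 - e) * ∫ ω, w (Z ω) * F0 (Φ ω) ∂μ
        + ∫ ω, (1 - w (Z ω)) * FC (Φ ω) ∂μ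
        = ∫ ω, ((Y1 ω - m1 (Z ω)) * G1 (Z ω) + (Y0 ω - m0 (Z ω)) * G0 (Z ω)) ∂μ := by
      rw [← integral_congr_ae (ae_of_all _ claimC), integral_add hwAB hwC,
        integral_add hwA hwB, integral_const_mul, integral_const_mul]
    rw [e2, integral_add hintT1 hintT0, e3, e4, add_zero]
  -- the difference has mean zero
  set GG1 : α × ℝ × ℝ → ℝ := fun p => G1 p.1 with hGG1
  set GG0 : α × ℝ × ℝ → ℝ := fun p => -(G0 p.1) with hGG0
  set GGC : α × ℝ × ℝ → ℝ := fun p => m0 p.1 - m1 p.1 with hGGC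
  have hGG1meas : Measurable GG1 := hG1meas.comp measurable_fst
  have hGG0meas : Measurable GG0 := (hG0meas.comp measurable_fst).neg
  have hGGCmeas : Measurable GGC :=
    (hm0.comp measurable_fst).sub (hm1.comp measurable_fst)
  have hintGG1 : Integrable (fun ω => GG1 (Φ ω)) μ := hG1L2.integrable one_le_two
  have hintGG0 : Integrable (fun ω => GG0 (Φ ω)) μ := (hG0L2.integrable one_le_two).neg
  have hintGGC : Integrable (fun ω => GGC (Φ ω)) μ :=
    ((hm0L2.integrable one_le_two).sub (hm1L2.integrable one_le_two))
  have claimD : ∀ ω, φI ω - φD ω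
      = S ω * X ω * GG1 (Φ ω) + S ω * (1 - X ω) * GG0 (Φ ω) + (1 - S ω) * GGC (Φ ω) := by
    intro ω
    have hw0 : w (Z ω) ≠ 0 := hwne _
    simp only [hφI, hφD, hGG1, hGG0, hGGC, hG1, hG0, hΦdef]
    rcases hSbin ω with hs | hs <;> rcases hXbin ω with hx | hx <;>
      rw [hY ω, hs, hx] <;> field_simp <;>
      (first | ring1 | (left; ring1) | exact Or.inl trivial)
  have claimE : ∀ ω, e * (w (Z ω) * GG1 (Φ ω)) + (1 - e) * (w (Z ω) * GG0 (Φ ω))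
      + (1 - w (Z ω)) * GGC (Φ ω) = 0 := by
    intro ω
    have hw0 : w (Z ω) ≠ 0 := hwne _
    simp only [hGG1, hGG0, hGGC, hG1, hG0, hΦdef]
    field_simp
    ring
  have hED : ∫ ω, (φI ω - φD ω) ∂μ = 0 := by
    have hA : Integrable (fun ω => S ω * X ω * GG1 (Φ ω)) μ := hSXmul GG1 hGG1meas hintGG1
    have hB : Integrable (fun ω => S ω * (1 - X ω) * GG0 (Φ ω)) μ :=
      hS1Xmul GG0 hGG0meas hintGG0
    have hC : Integrable (fun ω => (1 - S ω) * GGC (Φ ω)) μ := h1Smul GGC hGGCmeas hintGGC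
    have hAB : Integrable
        (fun ω => S ω * X ω * GG1 (Φ ω) + S ω * (1 - X ω) * GG0 (Φ ω)) μ := hA.add hB
    have e1 : ∫ ω, (φI ω - φD ω) ∂μ
        = ∫ ω, S ω * X ω * GG1 (Φ ω) ∂μ + ∫ ω, S ω * (1 - X ω) * GG0 (Φ ω) ∂μ
          + ∫ ω, (1 - S ω) * GGC (Φ ω) ∂μ := by
      rw [integral_congr_ae (ae_of_all _ claimD), integral_add hAB hC, integral_add hA hB]
    rw [e1, (key GG1 hGG1meas hintGG1).1, (key GG0 hGG0meas hintGG0).2.1,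
      (key GGC hGGCmeas hintGGC).2.2]
    have hwA : Integrable (fun ω => e * (w (Z ω) * GG1 (Φ ω))) μ :=
      (hwmul GG1 hGG1meas hintGG1).const_mul e
    have hwB : Integrable (fun ω => (1 - e) * (w (Z ω) * GG0 (Φ ω))) μ :=
      (hwmul GG0 hGG0meas hintGG0).const_mul (1 - e)
    have hwC : Integrable (fun ω => (1 - w (Z ω)) * GGC (Φ ω)) μ := h1wmul GGC hGGCmeas hintGGC
    have hwAB : Integrable (fun ω => e * (w (Z ω) * GG1 (Φ ω))
        + (1 - e) * (w (Z ω) * GG0 (Φ ω))) μ := hwA.add hwB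
    have e2 : e * ∫ ω, w (Z ω) * GG1 (Φ ω) ∂μ + (1 - e) * ∫ ω, w (Z ω) * GG0 (Φ ω) ∂μ
        + ∫ ω, (1 - w (Z ω)) * GGC (Φ ω) ∂μ = ∫ ω, (0:ℝ) ∂μ := by
      rw [← integral_congr_ae (ae_of_all _ claimE), integral_add hwAB hwC,
        integral_add hwA hwB, integral_const_mul, integral_const_mul]
    rw [e2, integral_zero]
  -- final variance comparison
  have hDL2 : MemLp (fun ω => φI ω - φD ω) 2 μ := hL2ipsw.sub hL2dr
  have hφDint : Integrable φD μ := hL2dr.integrable one_le_two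
  have hφIint : Integrable φI μ := hL2ipsw.integrable one_le_two
  have hφDsq : Integrable (fun ω => φD ω ^ 2) μ := hL2dr.integrable_sq
  have hDsq : Integrable (fun ω => (φI ω - φD ω) ^ 2) μ := hDL2.integrable_sq
  have hmix : Integrable (fun ω => φD ω * (φI ω - φD ω)) μ := hmulL2 _ _ hL2dr hDL2
  have hmean : ∫ ω, φI ω ∂μ = ∫ ω, φD ω ∂μ := by
    have h := integral_sub hφIint hφDint
    rw [hED] at h
    linarith [h.symm]
  have hsq : ∫ ω, φI ω ^ 2 ∂μ = ∫ ω, φD ω ^ 2 ∂μ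
      + (2 * ∫ ω, φD ω * (φI ω - φD ω) ∂μ + ∫ ω, (φI ω - φD ω) ^ 2 ∂μ) := by
    have e5 : ∀ ω, φI ω ^ 2
        = φD ω ^ 2 + (2 * (φD ω * (φI ω - φD ω)) + (φI ω - φD ω) ^ 2) := fun ω => by ring
    have hA2 : Integrable (fun ω => 2 * (φD ω * (φI ω - φD ω))) μ := hmix.const_mul 2
    have hBC : Integrable
        (fun ω => 2 * (φD ω * (φI ω - φD ω)) + (φI ω - φD ω) ^ 2) μ := hA2.add hDsq
    rw [integral_congr_ae (ae_of_all _ e5), integral_add hφDsq hBC,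
      integral_add hA2 hDsq, integral_const_mul]
  have hDsqnn : 0 ≤ ∫ ω, (φI ω - φD ω) ^ 2 ∂μ := integral_nonneg fun ω => sq_nonneg _
  rw [variance_eq_sub hL2dr, variance_eq_sub hL2ipsw]
  simp only [Pi.pow_apply]
  have hmean2 : (∫ ω, φI ω ∂μ) ^ 2 = (∫ ω, φD ω ∂μ) ^ 2 := by rw [hmean]
  rw [hcross] at hsq
  linarith [hsq, hDsqnn, hmean2]
end

section
/- Block-matrix variance identity underlying Proposition 1: let the joint estimating equation have Jacobian limit C = [[A, J],[0, E]] (block lower-triangular with invertible A and symmetric positive definite E) and variance limit D = [[B, G^T],[G, E]], and suppose the cross terms satisfy the information identity that the bottom-right variance block equals E and the asymptotic variance of the augmented estimator with contrast η = (λ; 0) is η^T C^{-1} D C^{-T} η. Then η^T C^{-1} D C^{-T} η = λ^T A^{-1} B A^{-T} λ - λ^T A^{-1}(J E^{-1} G + G^T E^{-1} J^T - J E^{-1} J^T) A^{-T} λ; in particular, if J = G^T this simplifies to λ^T A^{-1} B A^{-T} λ - (λ^T A^{-1} G^T) E^{-1} (λ^T A^{-1} G^T)^T. -/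
open Matrix

/-- **Block-matrix variance identity underlying Proposition 1.** With Jacobian
limit `C = [[A, J],[0, E]]` and variance limit `D = [[B, Gᵀ],[G, E]]`, and
contrast `η = (λ; 0)`, one has
`ηᵀ C⁻¹ D C⁻ᵀ η = λᵀ A⁻¹ B A⁻ᵀ λ - λᵀ A⁻¹ (J E⁻¹ G + Gᵀ E⁻¹ Jᵀ - J E⁻¹ Jᵀ) A⁻ᵀ λ`,
and when `J = Gᵀ` this simplifies to
`λᵀ A⁻¹ B A⁻ᵀ λ - (λᵀ A⁻¹ Gᵀ) E⁻¹ (λᵀ A⁻¹ Gᵀ)ᵀ`. -/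
theorem block_variance_identity
    {p q : ℕ} (A B : Matrix (Fin p) (Fin p) ℝ)
    (E : Matrix (Fin q) (Fin q) ℝ) (J : Matrix (Fin p) (Fin q) ℝ)
    (G : Matrix (Fin q) (Fin p) ℝ) (l : Fin p → ℝ)
    (hA : IsUnit A.det) (hB : B.IsSymm) (hE : E.PosDef) (hEsymm : E.IsSymm)
    (C : Matrix (Fin p ⊕ Fin q) (Fin p ⊕ Fin q) ℝ)
    (hC : C = fromBlocks A J 0 E)
    (D : Matrix (Fin p ⊕ Fin q) (Fin p ⊕ Fin q) ℝ)
    (hD : D = fromBlocks B Gᵀ G E)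
    (η : Fin p ⊕ Fin q → ℝ) (hη : η = Sum.elim l 0) :
    η ⬝ᵥ (C⁻¹ * D * C⁻¹ᵀ) *ᵥ η
      = l ⬝ᵥ (A⁻¹ * B * A⁻¹ᵀ) *ᵥ l
        - l ⬝ᵥ (A⁻¹ * (J * E⁻¹ * G + Gᵀ * E⁻¹ * Jᵀ - J * E⁻¹ * Jᵀ) * A⁻¹ᵀ) *ᵥ l
    ∧ (J = Gᵀ →
      η ⬝ᵥ (C⁻¹ * D * C⁻¹ᵀ) *ᵥ η
        = l ⬝ᵥ (A⁻¹ * B * A⁻¹ᵀ) *ᵥ l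
          - (l ᵥ* (A⁻¹ * Gᵀ)) ⬝ᵥ E⁻¹ *ᵥ (l ᵥ* (A⁻¹ * Gᵀ))) := by
  have hAu : IsUnit A := (Matrix.isUnit_iff_isUnit_det _).mpr hA
  have hEdet : IsUnit E.det := hE.det_pos.ne'.isUnit
  have hEu : IsUnit E := (Matrix.isUnit_iff_isUnit_det _).mpr hEdet
  have hET : E⁻¹ᵀ = E⁻¹ := by rw [transpose_nonsing_inv, hEsymm.eq]
  have hCi : C⁻¹ = fromBlocks A⁻¹ (-(A⁻¹ * J * E⁻¹)) 0 E⁻¹ := by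
    rw [hC, inv_fromBlocks_zero₂₁_of_isUnit_iff _ _ _ (iff_of_true hAu hEu)]
  have main : η ⬝ᵥ (C⁻¹ * D * C⁻¹ᵀ) *ᵥ η
      = l ⬝ᵥ (A⁻¹ * B * A⁻¹ᵀ) *ᵥ l
        - l ⬝ᵥ (A⁻¹ * (J * E⁻¹ * G + Gᵀ * E⁻¹ * Jᵀ - J * E⁻¹ * Jᵀ) * A⁻¹ᵀ) *ᵥ l := by
    subst hη hD
    rw [hCi, fromBlocks_transpose, fromBlocks_multiply, fromBlocks_multiply,
      fromBlocks_mulVec, sumElim_dotProduct_sumElim]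
    simp only [Sum.elim_comp_inl, Sum.elim_comp_inr, mulVec_zero, add_zero, zero_dotProduct,
      transpose_zero, Matrix.mul_zero, Matrix.zero_mul, zero_add, dotProduct_zero]
    rw [← dotProduct_sub, ← Matrix.sub_mulVec]
    congr 2
    simp only [transpose_neg, transpose_mul, hET, Matrix.neg_mul, Matrix.mul_neg, neg_neg,
      Matrix.mul_add, Matrix.add_mul, Matrix.mul_sub, Matrix.sub_mul, Matrix.mul_assoc,
      Matrix.nonsing_inv_mul_cancel_left _ _ hEdet, Matrix.mul_nonsing_inv_cancel_left _ _ hEdet]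
    abel
  refine ⟨main, fun hJG => ?_⟩
  rw [main, hJG, transpose_transpose, add_sub_cancel_right]
  congr 1
  rw [dotProduct_mulVec, dotProduct_mulVec,
    show A⁻¹ * (Gᵀ * E⁻¹ * G) * A⁻¹ᵀ = A⁻¹ * Gᵀ * E⁻¹ * (A⁻¹ * Gᵀ)ᵀ by
      rw [transpose_mul, transpose_transpose]; simp [Matrix.mul_assoc],
    ← Matrix.vecMul_vecMul, ← Matrix.vecMul_vecMul, ← dotProduct_mulVec,
    Matrix.mulVec_transpose]
end

section
/- Conditional exchangeability transfers conditional means: under ignorable trial participation (S ⫫ (Y^0,Y^1) | Z) and randomization in the trial, E[Y | Z, X = x, S = 1] = E[Y^x | Z] almost surely on {P(S=1|Z) > 0, P(X=x|S=1) > 0}, for x ∈ {0,1}. -/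
open MeasureTheory


open MeasureTheory

lemma ind_comp_indicator {Ω α : Type*} (t : Set α) (Z : Ω → α) (g : Ω → ℝ) :
    (Z ⁻¹' t).indicator g = fun ω => t.indicator (fun _ => (1:ℝ)) (Z ω) * g ω := by
  funext ω
  by_cases h : Z ω ∈ t <;> simp [Set.indicator, h]

lemma aux_transfer {Ω : Type*} [mΩ : MeasurableSpace Ω] {α : Type*} [mα : MeasurableSpace α]
    (μ : Measure Ω) [IsProbabilityMeasure μ]
    (Z : Ω → α) (S X' Yx : Ω → ℝ) (e' : ℝ) (w : α → ℝ)
    (hZ : Measurable Z) (hS : Measurable S) (hX' : Measurable X') (hYx : Measurable Yx)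
    (hw : Measurable w)
    (hSb : ∀ ω, S ω = 0 ∨ S ω = 1) (hXb : ∀ ω, X' ω = 0 ∨ X' ω = 1)
    (he' : 0 ≤ e')
    (hwb : ∀ᵐ ω ∂μ, 0 ≤ w (Z ω) ∧ w (Z ω) ≤ 1)
    (hint : Integrable Yx μ)
    (hA : ∀ t : Set α, MeasurableSet t →
      ∫ ω, S ω * X' ω * (t.indicator (fun _ => (1:ℝ)) (Z ω) * Yx ω) ∂μ
        = e' * ∫ ω, w (Z ω) * (t.indicator (fun _ => (1:ℝ)) (Z ω) * Yx ω) ∂μ)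
    (hB : ∀ t : Set α, MeasurableSet t →
      ∫ ω, S ω * X' ω * t.indicator (fun _ => (1:ℝ)) (Z ω) ∂μ
        = e' * ∫ ω, w (Z ω) * t.indicator (fun _ => (1:ℝ)) (Z ω) ∂μ) :
    μ[fun ω => S ω * X' ω * Yx ω | MeasurableSpace.comap Z mα]
      =ᵐ[μ] fun ω => (μ[fun ω' => S ω' * X' ω' | MeasurableSpace.comap Z mα]) ω
        * (μ[Yx | MeasurableSpace.comap Z mα]) ω := by
  have hm : MeasurableSpace.comap Z mα ≤ mΩ := hZ.comap_le
  have hZm : Measurable[MeasurableSpace.comap Z mα] Z := fun s hs => ⟨s, hs, rfl⟩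
  have hwZ : Measurable[MeasurableSpace.comap Z mα] (fun ω => w (Z ω)) := hw.comp hZm
  -- bounds on S * X'
  have hSXbd : ∀ ω, ‖S ω * X' ω‖ ≤ 1 := by
    intro ω; rcases hSb ω with h | h <;> rcases hXb ω with h' | h' <;> simp [h, h']
  have hSX_int : Integrable (fun ω => S ω * X' ω) μ :=
    Integrable.mono' (integrable_const 1) ((hS.mul hX').aestronglyMeasurable)
      (Filter.Eventually.of_forall hSXbd)
  -- Step B : e' * w (Z ω) is a version of E[S X' | Z]
  have hcondB : (fun ω => e' * w (Z ω))
      =ᵐ[μ] μ[fun ω' => S ω' * X' ω' | MeasurableSpace.comap Z mα] := by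
    refine ae_eq_condExp_of_forall_setIntegral_eq hm hSX_int ?_ ?_ ?_
    · intro s _ _
      refine (Integrable.mono' (integrable_const e')
        ((hw.comp hZ).const_mul e').aestronglyMeasurable ?_).integrableOn
      filter_upwards [hwb] with ω hω
      have h1 : |e' * w (Z ω)| ≤ e' := by
        rw [abs_of_nonneg (mul_nonneg he' hω.1)]; nlinarith [hω.1, hω.2]
      simpa [abs_mul] using h1
    · rintro s ⟨t, ht, rfl⟩ -
      rw [← integral_indicator (hZ ht), ← integral_indicator (hZ ht),
        ind_comp_indicator, ind_comp_indicator]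
      have l1 : (fun ω => t.indicator (fun _ => (1:ℝ)) (Z ω) * (e' * w (Z ω)))
          = fun ω => e' * (w (Z ω) * t.indicator (fun _ => (1:ℝ)) (Z ω)) :=
        funext fun ω => by ring
      have l2 : (fun ω => t.indicator (fun _ => (1:ℝ)) (Z ω) * (S ω * X' ω))
          = fun ω => S ω * X' ω * t.indicator (fun _ => (1:ℝ)) (Z ω) :=
        funext fun ω => by ring
      rw [l1, l2, integral_const_mul, hB t ht]
    · exact (hwZ.const_mul e').stronglyMeasurable.aestronglyMeasurable
  -- Step A : e' * w(Z) * E[Yx|Z] is a version of E[S X' Yx | Z]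
  have hintc : Integrable (μ[Yx | MeasurableSpace.comap Z mα]) μ := integrable_condExp
  have hcondA : (fun ω => e' * w (Z ω) * (μ[Yx | MeasurableSpace.comap Z mα]) ω)
      =ᵐ[μ] μ[fun ω => S ω * X' ω * Yx ω | MeasurableSpace.comap Z mα] := by
    refine ae_eq_condExp_of_forall_setIntegral_eq hm ?_ ?_ ?_ ?_
    · refine Integrable.mono' hint.norm ((hS.mul hX').mul hYx).aestronglyMeasurable
        (Filter.Eventually.of_forall fun ω => ?_)
      rw [norm_mul]
      calc ‖S ω * X' ω‖ * ‖Yx ω‖ ≤ 1 * ‖Yx ω‖ :=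
            mul_le_mul_of_nonneg_right (hSXbd ω) (norm_nonneg _)
        _ = ‖Yx ω‖ := one_mul _
    · intro s _ _
      refine (Integrable.mono' (hintc.norm.const_mul e')
        ((((hw.comp hZ).const_mul e').aestronglyMeasurable).mul hintc.1) ?_).integrableOn
      filter_upwards [hwb] with ω hω
      simp only [Pi.mul_apply, Function.comp_apply, Real.norm_eq_abs, abs_mul]
      have h1 : |e' * w (Z ω)| ≤ e' := by
        rw [abs_of_nonneg (mul_nonneg he' hω.1)]; nlinarith [hω.1, hω.2]
      calc |e'| * |w (Z ω)| * |(μ[Yx | MeasurableSpace.comap Z mα]) ω|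
          = |e' * w (Z ω)| * |(μ[Yx | MeasurableSpace.comap Z mα]) ω| := by rw [abs_mul]
        _ ≤ e' * |(μ[Yx | MeasurableSpace.comap Z mα]) ω| :=
            mul_le_mul_of_nonneg_right h1 (abs_nonneg _)
    · rintro s ⟨t, ht, rfl⟩ -
      rw [← integral_indicator (hZ ht), ← integral_indicator (hZ ht),
        ind_comp_indicator, ind_comp_indicator]
      set h : Ω → ℝ := fun ω => w (Z ω) * t.indicator (fun _ => (1:ℝ)) (Z ω) with hh_def
      have hhm : Measurable[MeasurableSpace.comap Z mα] h :=
        hwZ.mul ((measurable_const.indicator ht).comp hZm)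
      have hhbd : ∀ᵐ ω ∂μ, ‖h ω * Yx ω‖ ≤ ‖Yx ω‖ := by
        filter_upwards [hwb] with ω hω
        rw [norm_mul]
        have hb : ‖h ω‖ ≤ 1 := by
          rw [Real.norm_eq_abs]
          by_cases hmem : Z ω ∈ t
          · simp only [hh_def, Set.indicator_of_mem hmem, mul_one]
            rw [abs_of_nonneg hω.1]; exact hω.2
          · simp [hh_def, Set.indicator_of_notMem hmem]
        calc ‖h ω‖ * ‖Yx ω‖ ≤ 1 * ‖Yx ω‖ := mul_le_mul_of_nonneg_right hb (norm_nonneg _)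
          _ = ‖Yx ω‖ := one_mul _
      have hint_hY : Integrable (fun ω => h ω * Yx ω) μ :=
        Integrable.mono' hint.norm
          (((hhm.mono hm le_rfl).mul hYx).aestronglyMeasurable) hhbd
      have hpull := condExp_mul_of_stronglyMeasurable_left (μ := μ) hhm.stronglyMeasurable hint_hY hint
      have key : ∫ ω, h ω * (μ[Yx | MeasurableSpace.comap Z mα]) ω ∂μ
          = ∫ ω, h ω * Yx ω ∂μ := by
        have e1 : ∫ ω, (μ[h * Yx | MeasurableSpace.comap Z mα]) ω ∂μ
            = ∫ ω, (h * Yx) ω ∂μ := integral_condExp hm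
        have e2 : ∫ ω, (μ[h * Yx | MeasurableSpace.comap Z mα]) ω ∂μ
            = ∫ ω, (h * (μ[Yx | MeasurableSpace.comap Z mα])) ω ∂μ := integral_congr_ae hpull
        simp only [Pi.mul_apply] at e1 e2
        rw [← e2, e1]
      have l1 : (fun ω => t.indicator (fun _ => (1:ℝ)) (Z ω)
              * (e' * w (Z ω) * (μ[Yx | MeasurableSpace.comap Z mα]) ω))
          = fun ω => e' * (h ω * (μ[Yx | MeasurableSpace.comap Z mα]) ω) :=
        funext fun ω => by simp only [hh_def]; ring
      have l2 : (fun ω => t.indicator (fun _ => (1:ℝ)) (Z ω) * (S ω * X' ω * Yx ω))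
          = fun ω => S ω * X' ω * (t.indicator (fun _ => (1:ℝ)) (Z ω) * Yx ω) :=
        funext fun ω => by ring
      have l3 : (fun ω => w (Z ω) * (t.indicator (fun _ => (1:ℝ)) (Z ω) * Yx ω))
          = fun ω => h ω * Yx ω := funext fun ω => by simp only [hh_def]; ring
      rw [l1, l2, integral_const_mul, hA t ht, l3, key]
    · exact ((hwZ.const_mul e').stronglyMeasurable.mul
        stronglyMeasurable_condExp).aestronglyMeasurable
  refine hcondA.symm.trans ?_
  filter_upwards [hcondB] with ω hω
  rw [← hω]

/-- **Conditional exchangeability transfers conditional means.** Under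
ignorable trial participation and randomization in the trial, the trial-sample
regression function identifies the population conditional mean potential
outcome: for `x ∈ {0,1}`, `E[Y | Z, X=x, S=1] = E[Yˣ | Z]` a.s., expressed
equivalently (on the positive-probability event, which has full measure here)
as `E[S·1{X=x}·Y | Z] = E[S·1{X=x} | Z] · E[Yˣ | Z]` a.s. -/
theorem conditional_exchangeability_transfers_means
    {Ω : Type*} [mΩ : MeasurableSpace Ω] (μ : Measure Ω) [IsProbabilityMeasure μ]
    {α : Type*} [mα : MeasurableSpace α]
    (Z : Ω → α) (S X Y0 Y1 Y : Ω → ℝ) (e : ℝ)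
    (hZ : Measurable Z) (hS : Measurable S) (hX : Measurable X)
    (hY0 : Measurable Y0) (hY1 : Measurable Y1)
    (hSbin : ∀ ω, S ω = 0 ∨ S ω = 1) (hXbin : ∀ ω, X ω = 0 ∨ X ω = 1)
    (he0 : 0 < e) (he1 : e < 1)
    -- randomization: X ⫫ (Z, Y⁰, Y¹) | S = 1 with P(X=1|S=1) = e
    (hrand : ∀ f : α × ℝ × ℝ → ℝ, Measurable f →
      Integrable (fun ω => S ω * f (Z ω, Y0 ω, Y1 ω)) μ →
      ∫ ω, S ω * X ω * f (Z ω, Y0 ω, Y1 ω) ∂μ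
        = e * ∫ ω, S ω * f (Z ω, Y0 ω, Y1 ω) ∂μ)
    -- ignorable participation: P(S=1 | Z, Y⁰, Y¹) = w(Z) > 0 a.s.
    (w : α → ℝ) (hw : Measurable w) (hwpos : ∀ᵐ ω ∂μ, 0 < w (Z ω))
    (hign : ∀ f : α × ℝ × ℝ → ℝ, Measurable f →
      Integrable (fun ω => f (Z ω, Y0 ω, Y1 ω)) μ →
      ∫ ω, S ω * f (Z ω, Y0 ω, Y1 ω) ∂μ
        = ∫ ω, w (Z ω) * f (Z ω, Y0 ω, Y1 ω) ∂μ)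
    (hY : ∀ ω, Y ω = X ω * Y1 ω + (1 - X ω) * Y0 ω)
    (hintY1 : Integrable Y1 μ) (hintY0 : Integrable Y0 μ)
    (mZ : MeasurableSpace Ω) (hmZ : mZ = MeasurableSpace.comap Z mα) :
    (μ[fun ω => S ω * X ω * Y ω | mZ]
        =ᵐ[μ] fun ω => (μ[fun ω' => S ω' * X ω' | mZ]) ω * (μ[Y1 | mZ]) ω)
    ∧ (μ[fun ω => S ω * (1 - X ω) * Y ω | mZ]
        =ᵐ[μ] fun ω => (μ[fun ω' => S ω' * (1 - X ω') | mZ]) ω * (μ[Y0 | mZ]) ω) := by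
  subst hmZ
  have hS1 : ∀ ω, |S ω| ≤ 1 := fun ω => by rcases hSbin ω with h | h <;> simp [h]
  have hX1 : ∀ ω, |X ω| ≤ 1 := fun ω => by rcases hXbin ω with h | h <;> simp [h]
  have hind1 : ∀ (t : Set α) (ω : Ω), |t.indicator (fun _ => (1:ℝ)) (Z ω)| ≤ 1 := by
    intro t ω; by_cases h : Z ω ∈ t <;> simp [Set.indicator, h]
  have hbd1 : ∀ g : Ω → ℝ, Measurable g → (∀ ω, |g ω| ≤ 1) → Integrable g μ :=
    fun g hgm hgb => Integrable.mono' (integrable_const 1) hgm.aestronglyMeasurable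
      (Filter.Eventually.of_forall fun ω => by rw [Real.norm_eq_abs]; exact hgb ω)
  -- w (Z ω) ≤ 1 almost everywhere
  have hwle : ∀ᵐ ω ∂μ, w (Z ω) ≤ 1 := by
    have key : ∀ n : ℕ, ∀ᵐ ω ∂μ, ¬(1 < w (Z ω) ∧ w (Z ω) ≤ (n:ℝ)) := by
      intro n
      have ht : MeasurableSet {z | 1 < w z ∧ w z ≤ (n:ℝ)} :=
        (measurableSet_lt measurable_const hw).inter (measurableSet_le hw measurable_const)
      set t := {z | 1 < w z ∧ w z ≤ (n:ℝ)} with ht_def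
      set g : Ω → ℝ := fun ω => t.indicator (fun _ => (1:ℝ)) (Z ω) with hg_def
      have hgm : Measurable g := (measurable_const.indicator ht).comp hZ
      have hgbd : ∀ ω, 0 ≤ g ω ∧ g ω ≤ 1 := fun ω => by
        by_cases hmem : Z ω ∈ t <;> simp [hg_def, Set.indicator, hmem]
      have hgint : Integrable g μ := hbd1 g hgm fun ω => by
        rw [abs_of_nonneg (hgbd ω).1]; exact (hgbd ω).2
      have hSgint : Integrable (fun ω => S ω * g ω) μ :=
        hbd1 _ (hS.mul hgm) fun ω => by
          rw [abs_mul]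
          exact mul_le_one₀ (hS1 ω) (abs_nonneg _)
            (by rw [abs_of_nonneg (hgbd ω).1]; exact (hgbd ω).2)
      have hwgint : Integrable (fun ω => w (Z ω) * g ω) μ :=
        Integrable.mono' (integrable_const (n:ℝ)) ((hw.comp hZ).mul hgm).aestronglyMeasurable
          (Filter.Eventually.of_forall fun ω => by
            rw [Real.norm_eq_abs]
            by_cases hmem : Z ω ∈ t
            · simp only [hg_def, Set.indicator_of_mem hmem, mul_one]
              rw [abs_of_nonneg (le_of_lt (lt_trans zero_lt_one hmem.1))]
              exact hmem.2
            · simp [hg_def, Set.indicator_of_notMem hmem])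
      have heq : ∫ ω, S ω * g ω ∂μ = ∫ ω, w (Z ω) * g ω ∂μ :=
        hign (fun p => t.indicator (fun _ => (1:ℝ)) p.1)
          ((measurable_const.indicator ht).comp measurable_fst) hgint
      have hmono : ∫ ω, S ω * g ω ∂μ ≤ ∫ ω, g ω ∂μ := by
        refine integral_mono hSgint hgint fun ω => ?_
        rcases hSbin ω with h | h <;> simp [h, (hgbd ω).1]
      have hsub : ∫ ω, (w (Z ω) - 1) * g ω ∂μ
          = ∫ ω, w (Z ω) * g ω ∂μ - ∫ ω, g ω ∂μ := by
        rw [← integral_sub hwgint hgint]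
        exact integral_congr_ae (Filter.Eventually.of_forall fun ω => by ring)
      have hle : ∫ ω, (w (Z ω) - 1) * g ω ∂μ ≤ 0 := by
        rw [hsub, ← heq]; linarith
      have hnn : ∀ ω, 0 ≤ (w (Z ω) - 1) * g ω := fun ω => by
        by_cases hmem : Z ω ∈ t
        · have h1 : (1:ℝ) < w (Z ω) := hmem.1
          simp only [hg_def, Set.indicator_of_mem hmem, mul_one]; linarith
        · simp [hg_def, Set.indicator_of_notMem hmem]
      have hintsub : Integrable (fun ω => (w (Z ω) - 1) * g ω) μ := by
        have hfe : (fun ω => (w (Z ω) - 1) * g ω) = fun ω => w (Z ω) * g ω - g ω :=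
          funext fun ω => by ring
        rw [hfe]; exact hwgint.sub hgint
      have hz : ∫ ω, (w (Z ω) - 1) * g ω ∂μ = 0 :=
        le_antisymm hle (integral_nonneg hnn)
      have haez := (integral_eq_zero_iff_of_nonneg hnn hintsub).mp hz
      filter_upwards [haez] with ω hω hmem
      have hZt : Z ω ∈ t := hmem
      simp only [hg_def, Set.indicator_of_mem hZt, mul_one, Pi.zero_apply] at hω
      have h1 : (1:ℝ) < w (Z ω) := hmem.1
      linarith
    filter_upwards [ae_all_iff.mpr key] with ω hω
    by_contra hlt
    push_neg at hlt
    exact hω ⌈w (Z ω)⌉₊ ⟨hlt, Nat.le_ceil _⟩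
  have hwb : ∀ᵐ ω ∂μ, 0 ≤ w (Z ω) ∧ w (Z ω) ≤ 1 := by
    filter_upwards [hwpos, hwle] with ω h1 h2; exact ⟨le_of_lt h1, h2⟩
  -- the integral identities for x = 1
  have hB1 : ∀ t : Set α, MeasurableSet t →
      ∫ ω, S ω * X ω * t.indicator (fun _ => (1:ℝ)) (Z ω) ∂μ
        = e * ∫ ω, w (Z ω) * t.indicator (fun _ => (1:ℝ)) (Z ω) ∂μ := by
    intro t ht
    have hfm : Measurable (fun p : α × ℝ × ℝ => t.indicator (fun _ => (1:ℝ)) p.1) :=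
      (measurable_const.indicator ht).comp measurable_fst
    have hOm : Measurable (fun ω => t.indicator (fun _ => (1:ℝ)) (Z ω)) :=
      (measurable_const.indicator ht).comp hZ
    have hint2 : Integrable (fun ω => t.indicator (fun _ => (1:ℝ)) (Z ω)) μ :=
      hbd1 _ hOm (hind1 t)
    have hint1 : Integrable (fun ω => S ω * t.indicator (fun _ => (1:ℝ)) (Z ω)) μ :=
      hbd1 _ (hS.mul hOm) fun ω => by
        rw [abs_mul]; exact mul_le_one₀ (hS1 ω) (abs_nonneg _) (hind1 t ω)
    have h1 : ∫ ω, S ω * X ω * t.indicator (fun _ => (1:ℝ)) (Z ω) ∂μ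
        = e * ∫ ω, S ω * t.indicator (fun _ => (1:ℝ)) (Z ω) ∂μ := hrand _ hfm hint1
    have h2 : ∫ ω, S ω * t.indicator (fun _ => (1:ℝ)) (Z ω) ∂μ
        = ∫ ω, w (Z ω) * t.indicator (fun _ => (1:ℝ)) (Z ω) ∂μ := hign _ hfm hint2
    rw [h1, h2]
  have hA1 : ∀ t : Set α, MeasurableSet t →
      ∫ ω, S ω * X ω * (t.indicator (fun _ => (1:ℝ)) (Z ω) * Y1 ω) ∂μ
        = e * ∫ ω, w (Z ω) * (t.indicator (fun _ => (1:ℝ)) (Z ω) * Y1 ω) ∂μ := by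
    intro t ht
    have hfm : Measurable (fun p : α × ℝ × ℝ => t.indicator (fun _ => (1:ℝ)) p.1 * p.2.2) :=
      ((measurable_const.indicator ht).comp measurable_fst).mul
        (measurable_snd.comp measurable_snd)
    have hOm : Measurable (fun ω => t.indicator (fun _ => (1:ℝ)) (Z ω)) :=
      (measurable_const.indicator ht).comp hZ
    have hint2 : Integrable (fun ω => t.indicator (fun _ => (1:ℝ)) (Z ω) * Y1 ω) μ := by
      refine Integrable.mono' hintY1.norm (hOm.mul hY1).aestronglyMeasurable
        (Filter.Eventually.of_forall fun ω => ?_)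
      rw [Real.norm_eq_abs, Real.norm_eq_abs, abs_mul]
      calc |t.indicator (fun _ => (1:ℝ)) (Z ω)| * |Y1 ω| ≤ 1 * |Y1 ω| :=
            mul_le_mul_of_nonneg_right (hind1 t ω) (abs_nonneg _)
        _ = |Y1 ω| := one_mul _
    have hint1 : Integrable (fun ω => S ω * (t.indicator (fun _ => (1:ℝ)) (Z ω) * Y1 ω)) μ := by
      refine Integrable.mono' hintY1.norm (hS.mul (hOm.mul hY1)).aestronglyMeasurable
        (Filter.Eventually.of_forall fun ω => ?_)
      rw [Real.norm_eq_abs, Real.norm_eq_abs, abs_mul, abs_mul]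
      calc |S ω| * (|t.indicator (fun _ => (1:ℝ)) (Z ω)| * |Y1 ω|)
          ≤ 1 * (|t.indicator (fun _ => (1:ℝ)) (Z ω)| * |Y1 ω|) :=
            mul_le_mul_of_nonneg_right (hS1 ω) (mul_nonneg (abs_nonneg _) (abs_nonneg _))
        _ = |t.indicator (fun _ => (1:ℝ)) (Z ω)| * |Y1 ω| := one_mul _
        _ ≤ 1 * |Y1 ω| := mul_le_mul_of_nonneg_right (hind1 t ω) (abs_nonneg _)
        _ = |Y1 ω| := one_mul _
    have h1 : ∫ ω, S ω * X ω * (t.indicator (fun _ => (1:ℝ)) (Z ω) * Y1 ω) ∂μ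
        = e * ∫ ω, S ω * (t.indicator (fun _ => (1:ℝ)) (Z ω) * Y1 ω) ∂μ :=
      hrand _ hfm hint1
    have h2 : ∫ ω, S ω * (t.indicator (fun _ => (1:ℝ)) (Z ω) * Y1 ω) ∂μ
        = ∫ ω, w (Z ω) * (t.indicator (fun _ => (1:ℝ)) (Z ω) * Y1 ω) ∂μ := hign _ hfm hint2
    rw [h1, h2]
  -- the integral identities for x = 0
  have hB0 : ∀ t : Set α, MeasurableSet t →
      ∫ ω, S ω * (1 - X ω) * t.indicator (fun _ => (1:ℝ)) (Z ω) ∂μ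
        = (1 - e) * ∫ ω, w (Z ω) * t.indicator (fun _ => (1:ℝ)) (Z ω) ∂μ := by
    intro t ht
    have hfm : Measurable (fun p : α × ℝ × ℝ => t.indicator (fun _ => (1:ℝ)) p.1) :=
      (measurable_const.indicator ht).comp measurable_fst
    have hOm : Measurable (fun ω => t.indicator (fun _ => (1:ℝ)) (Z ω)) :=
      (measurable_const.indicator ht).comp hZ
    have hint2 : Integrable (fun ω => t.indicator (fun _ => (1:ℝ)) (Z ω)) μ :=
      hbd1 _ hOm (hind1 t)
    have hint1 : Integrable (fun ω => S ω * t.indicator (fun _ => (1:ℝ)) (Z ω)) μ :=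
      hbd1 _ (hS.mul hOm) fun ω => by
        rw [abs_mul]; exact mul_le_one₀ (hS1 ω) (abs_nonneg _) (hind1 t ω)
    have hintSX : Integrable (fun ω => S ω * X ω * t.indicator (fun _ => (1:ℝ)) (Z ω)) μ :=
      hbd1 _ ((hS.mul hX).mul hOm) fun ω => by
        rw [abs_mul, abs_mul]
        exact mul_le_one₀ (mul_le_one₀ (hS1 ω) (abs_nonneg _) (hX1 ω)) (abs_nonneg _)
          (hind1 t ω)
    have h1 : ∫ ω, S ω * X ω * t.indicator (fun _ => (1:ℝ)) (Z ω) ∂μ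
        = e * ∫ ω, S ω * t.indicator (fun _ => (1:ℝ)) (Z ω) ∂μ := hrand _ hfm hint1
    have h2 : ∫ ω, S ω * t.indicator (fun _ => (1:ℝ)) (Z ω) ∂μ
        = ∫ ω, w (Z ω) * t.indicator (fun _ => (1:ℝ)) (Z ω) ∂μ := hign _ hfm hint2
    have h3 : ∫ ω, S ω * (1 - X ω) * t.indicator (fun _ => (1:ℝ)) (Z ω) ∂μ
        = ∫ ω, S ω * t.indicator (fun _ => (1:ℝ)) (Z ω) ∂μ
          - ∫ ω, S ω * X ω * t.indicator (fun _ => (1:ℝ)) (Z ω) ∂μ := by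
      rw [← integral_sub hint1 hintSX]
      exact integral_congr_ae (Filter.Eventually.of_forall fun ω => by ring)
    rw [h3, h1, h2]; ring
  have hA0 : ∀ t : Set α, MeasurableSet t →
      ∫ ω, S ω * (1 - X ω) * (t.indicator (fun _ => (1:ℝ)) (Z ω) * Y0 ω) ∂μ
        = (1 - e) * ∫ ω, w (Z ω) * (t.indicator (fun _ => (1:ℝ)) (Z ω) * Y0 ω) ∂μ := by
    intro t ht
    have hfm : Measurable (fun p : α × ℝ × ℝ => t.indicator (fun _ => (1:ℝ)) p.1 * p.2.1) :=
      ((measurable_const.indicator ht).comp measurable_fst).mul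
        (measurable_fst.comp measurable_snd)
    have hOm : Measurable (fun ω => t.indicator (fun _ => (1:ℝ)) (Z ω)) :=
      (measurable_const.indicator ht).comp hZ
    have hint2 : Integrable (fun ω => t.indicator (fun _ => (1:ℝ)) (Z ω) * Y0 ω) μ := by
      refine Integrable.mono' hintY0.norm (hOm.mul hY0).aestronglyMeasurable
        (Filter.Eventually.of_forall fun ω => ?_)
      rw [Real.norm_eq_abs, Real.norm_eq_abs, abs_mul]
      calc |t.indicator (fun _ => (1:ℝ)) (Z ω)| * |Y0 ω| ≤ 1 * |Y0 ω| :=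
            mul_le_mul_of_nonneg_right (hind1 t ω) (abs_nonneg _)
        _ = |Y0 ω| := one_mul _
    have hint1 : Integrable (fun ω => S ω * (t.indicator (fun _ => (1:ℝ)) (Z ω) * Y0 ω)) μ := by
      refine Integrable.mono' hintY0.norm (hS.mul (hOm.mul hY0)).aestronglyMeasurable
        (Filter.Eventually.of_forall fun ω => ?_)
      rw [Real.norm_eq_abs, Real.norm_eq_abs, abs_mul, abs_mul]
      calc |S ω| * (|t.indicator (fun _ => (1:ℝ)) (Z ω)| * |Y0 ω|)
          ≤ 1 * (|t.indicator (fun _ => (1:ℝ)) (Z ω)| * |Y0 ω|) :=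
            mul_le_mul_of_nonneg_right (hS1 ω) (mul_nonneg (abs_nonneg _) (abs_nonneg _))
        _ = |t.indicator (fun _ => (1:ℝ)) (Z ω)| * |Y0 ω| := one_mul _
        _ ≤ 1 * |Y0 ω| := mul_le_mul_of_nonneg_right (hind1 t ω) (abs_nonneg _)
        _ = |Y0 ω| := one_mul _
    have hintSX : Integrable (fun ω => S ω * X ω * (t.indicator (fun _ => (1:ℝ)) (Z ω) * Y0 ω)) μ := by
      refine Integrable.mono' hintY0.norm ((hS.mul hX).mul (hOm.mul hY0)).aestronglyMeasurable
        (Filter.Eventually.of_forall fun ω => ?_)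
      rw [Real.norm_eq_abs, Real.norm_eq_abs, abs_mul, abs_mul, abs_mul]
      have hb : |S ω| * |X ω| ≤ 1 := mul_le_one₀ (hS1 ω) (abs_nonneg _) (hX1 ω)
      calc |S ω| * |X ω| * (|t.indicator (fun _ => (1:ℝ)) (Z ω)| * |Y0 ω|)
          ≤ 1 * (|t.indicator (fun _ => (1:ℝ)) (Z ω)| * |Y0 ω|) :=
            mul_le_mul_of_nonneg_right hb (mul_nonneg (abs_nonneg _) (abs_nonneg _))
        _ = |t.indicator (fun _ => (1:ℝ)) (Z ω)| * |Y0 ω| := one_mul _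
        _ ≤ 1 * |Y0 ω| := mul_le_mul_of_nonneg_right (hind1 t ω) (abs_nonneg _)
        _ = |Y0 ω| := one_mul _
    have h1 : ∫ ω, S ω * X ω * (t.indicator (fun _ => (1:ℝ)) (Z ω) * Y0 ω) ∂μ
        = e * ∫ ω, S ω * (t.indicator (fun _ => (1:ℝ)) (Z ω) * Y0 ω) ∂μ :=
      hrand _ hfm hint1
    have h2 : ∫ ω, S ω * (t.indicator (fun _ => (1:ℝ)) (Z ω) * Y0 ω) ∂μ
        = ∫ ω, w (Z ω) * (t.indicator (fun _ => (1:ℝ)) (Z ω) * Y0 ω) ∂μ := hign _ hfm hint2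
    have h3 : ∫ ω, S ω * (1 - X ω) * (t.indicator (fun _ => (1:ℝ)) (Z ω) * Y0 ω) ∂μ
        = ∫ ω, S ω * (t.indicator (fun _ => (1:ℝ)) (Z ω) * Y0 ω) ∂μ
          - ∫ ω, S ω * X ω * (t.indicator (fun _ => (1:ℝ)) (Z ω) * Y0 ω) ∂μ := by
      rw [← integral_sub hint1 hintSX]
      exact integral_congr_ae (Filter.Eventually.of_forall fun ω => by ring)
    rw [h3, h1, h2]; ring
  -- reduce Y to the potential outcomes
  have hY1eq : (fun ω => S ω * X ω * Y ω) = fun ω => S ω * X ω * Y1 ω :=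
    funext fun ω => by rcases hXbin ω with h | h <;> simp [hY ω, h]
  have hY0eq : (fun ω => S ω * (1 - X ω) * Y ω) = fun ω => S ω * (1 - X ω) * Y0 ω :=
    funext fun ω => by rcases hXbin ω with h | h <;> simp [hY ω, h]
  have hXb' : ∀ ω, (1 - X ω) = 0 ∨ (1 - X ω) = 1 := fun ω => by
    rcases hXbin ω with h | h <;> simp [h]
  constructor
  · rw [hY1eq]
    exact aux_transfer μ Z S X Y1 e w hZ hS hX hY1 hw hSbin hXbin (le_of_lt he0) hwb
      hintY1 hA1 hB1
  · rw [hY0eq]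
    exact aux_transfer μ Z S (fun ω => 1 - X ω) Y0 (1 - e) w hZ hS
      (measurable_const.sub hX) hY0 hw hSbin hXb' (by linarith) hwb hintY0 hA0 hB0
end
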